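/- arXiv:2407.11374 — 12 statements merged into one kernel-verified Lean document; each statement's English description precedes it below -/
import Mathlib

section
/- Let M be a positive integer and A, B ⊆ ℤ_M finite sets. Then A ⊕ B = ℤ_M (i.e., every element of ℤ_M has a unique representation a + b with a ∈ A, b ∈ B) if and only if |A|·|B| = M and Div(A) ∩ Div(B) = {M}, where Div(S) = {gcd(s - s', M) : s, s' ∈ S}. -/
/-- `A ⊕ B = ℤ_M`: every element of `ZMod M` has a unique representation `a + b`
with `a ∈ A`, `b ∈ B`. -/
def IsTiling (M : ℕ) (A B : Finset (ZMod M)) : Prop :=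
  ∀ z : ZMod M, ∃! ab : ZMod M × ZMod M, ab.1 ∈ A ∧ ab.2 ∈ B ∧ ab.1 + ab.2 = z

/-- The divisor set `Div(S) = {gcd(s - s', M) : s, s' ∈ S}`, gcd computed with the
canonical representative in `{0, …, M-1}` (so `gcd(0, M) = M`). -/
def DivSet (M : ℕ) (S : Finset (ZMod M)) : Set ℕ :=
  {d | ∃ s ∈ S, ∃ s' ∈ S, d = Nat.gcd (s - s').val M}

open Finset
set_option linter.unusedSectionVars false

namespace SandsAux

variable {M : ℕ}

def cnt (M : ℕ) (A B : Finset (ZMod M)) (z : ZMod M) : ℕ :=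
  ((A ×ˢ B).filter (fun ab => ab.1 + ab.2 = z)).card

lemma isTiling_iff_cnt (A B : Finset (ZMod M)) :
    IsTiling M A B ↔ ∀ z, cnt M A B z = 1 := by
  unfold IsTiling cnt
  refine forall_congr' fun z => ?_
  rw [Finset.card_eq_one]
  constructor
  · rintro ⟨ab, hab, huniq⟩
    refine ⟨ab, ?_⟩
    ext x
    simp only [Finset.mem_filter, Finset.mem_product, Finset.mem_singleton]
    constructor
    · rintro ⟨⟨h1, h2⟩, h3⟩; exact huniq x ⟨h1, h2, h3⟩
    · rintro rfl; exact ⟨⟨hab.1, hab.2.1⟩, hab.2.2⟩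
  · rintro ⟨a, ha⟩
    have h := fun x => Finset.ext_iff.mp ha x
    simp only [Finset.mem_filter, Finset.mem_product, Finset.mem_singleton] at h
    refine ⟨a, ?_, ?_⟩
    · have := (h a).mpr rfl; exact ⟨this.1.1, this.1.2, this.2⟩
    · rintro x ⟨h1, h2, h3⟩; exact (h x).mp ⟨⟨h1, h2⟩, h3⟩

lemma sum_cnt [NeZero M] (A B : Finset (ZMod M)) :
    ∑ z : ZMod M, cnt M A B z = A.card * B.card := by
  rw [← Finset.card_product]
  exact (Finset.card_eq_sum_card_fiberwise (fun x _ => Finset.mem_univ (x.1 + x.2))).symm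

section Algebra

variable (R : Type) [CommRing R] [NeZero M]

noncomputable def ind (A : Finset (ZMod M)) : AddMonoidAlgebra R (ZMod M) :=
  ∑ a ∈ A, AddMonoidAlgebra.single a 1

noncomputable def T (M : ℕ) [NeZero M] : AddMonoidAlgebra R (ZMod M) :=
  ∑ z : ZMod M, AddMonoidAlgebra.single z 1

lemma T_apply (z : ZMod M) : (T R M).coeff z = 1 := by
  classical
  unfold T
  rw [AddMonoidAlgebra.coeff_sum, Finsupp.finset_sum_apply]
  simp only [AddMonoidAlgebra.coeff_single]
  rw [Finset.sum_eq_single z]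
  · exact Finsupp.single_eq_same
  · intro b _ hb; exact Finsupp.single_eq_of_ne' hb
  · intro h; exact absurd (Finset.mem_univ z) h

lemma ind_mul_apply (A B : Finset (ZMod M)) (z : ZMod M) :
    (ind R A * ind R B).coeff z = (cnt M A B z : R) := by
  classical
  unfold ind cnt
  rw [Finset.sum_mul_sum]
  have step1 : ∀ a b : ZMod M,
      (AddMonoidAlgebra.single a (1:R)) * AddMonoidAlgebra.single b 1
        = AddMonoidAlgebra.single (a + b) 1 := by
    intro a b; rw [AddMonoidAlgebra.single_mul_single, one_mul]
  simp_rw [step1]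
  rw [← Finset.sum_product']
  rw [AddMonoidAlgebra.coeff_sum, Finsupp.finset_sum_apply]
  simp only [AddMonoidAlgebra.coeff_single, Finsupp.single_apply]
  rw [Finset.sum_boole]

lemma single_mul_T (a : ZMod M) :
    (AddMonoidAlgebra.single a (1:R)) * T R M = T R M := by
  unfold T
  rw [Finset.mul_sum]
  simp_rw [AddMonoidAlgebra.single_mul_single, one_mul]
  exact Fintype.sum_equiv (Equiv.addLeft a) _ _ (fun z => rfl)

lemma ind_mul_T (A : Finset (ZMod M)) :
    ind R A * T R M = A.card • T R M := by
  unfold ind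
  rw [Finset.sum_mul]
  simp_rw [single_mul_T]
  rw [Finset.sum_const]

lemma ind_pow_mul_T (A : Finset (ZMod M)) (k : ℕ) :
    (ind R A) ^ k * T R M = (A.card ^ k) • T R M := by
  induction k with
  | zero => simp
  | succ n ih =>
    rw [pow_succ, mul_assoc, ind_mul_T, mul_smul_comm, ih, smul_smul, pow_succ, mul_comm]

end Algebra

lemma charP_ama (p : ℕ) [Fact p.Prime] :
    CharP (AddMonoidAlgebra (ZMod p) (ZMod M)) p := by
  constructor
  intro n
  rw [← map_natCast (AddMonoidAlgebra.singleZeroRingHom (R := ZMod p) (M := ZMod M)) n]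
  rw [show (AddMonoidAlgebra.singleZeroRingHom ((n : ZMod p)))
      = AddMonoidAlgebra.single (0 : ZMod M) ((n : ZMod p)) from rfl]
  rw [AddMonoidAlgebra.single_eq_zero]
  haveI : NeZero p := ⟨(Fact.out (p := p.Prime)).ne_zero⟩
  exact ZMod.natCast_eq_zero_iff n p

lemma prime_step [NeZero M] {A B : Finset (ZMod M)} {p : ℕ} (hp : p.Prime)
    (hpM : ¬ p ∣ M) (h : ∀ z, cnt M A B z = 1) :
    ∀ z, cnt M (A.image (fun a => (p : ZMod M) * a)) B z = 1 := by
  haveI : Fact p.Prime := ⟨hp⟩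
  haveI := charP_ama (M := M) p
  have hABM : A.card * B.card = M := by
    have := sum_cnt A B
    simp_rw [h] at this
    simpa [ZMod.card] using this.symm
  have hpA : ¬ p ∣ A.card := fun hd => hpM (hd.trans (Dvd.intro B.card hABM))
  have hu : IsUnit (p : ZMod M) := by
    rw [ZMod.isUnit_iff_coprime]
    exact (Nat.Prime.coprime_iff_not_dvd hp).mpr hpM
  have hinj : Function.Injective (fun a : ZMod M => (p : ZMod M) * a) :=
    fun x y hxy => (IsUnit.mul_right_inj hu).mp hxy
  set A' := A.image (fun a => (p : ZMod M) * a) with hA'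
  have hcardA' : A'.card = A.card := Finset.card_image_of_injective _ hinj
  have htile : ind (ZMod p) A * ind (ZMod p) B = T (ZMod p) M := by
    ext z
    rw [ind_mul_apply, T_apply, h z, Nat.cast_one]
  have hfrob : ind (ZMod p) A' = (ind (ZMod p) A) ^ p := by
    unfold ind
    rw [Finset.sum_image (fun x _ y _ hxy => hinj hxy)]
    rw [sum_pow_char]
    refine Finset.sum_congr rfl fun a _ => ?_
    rw [AddMonoidAlgebra.single_pow, one_pow, nsmul_eq_mul]
  have hcA : (A.card : ZMod p) ≠ 0 := by
    haveI : NeZero p := ⟨hp.ne_zero⟩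
    rwa [Ne, ZMod.natCast_eq_zero_iff]
  have key : ind (ZMod p) A' * ind (ZMod p) B = (A.card ^ (p-1)) • T (ZMod p) M := by
    have hps : (ind (ZMod p) A) ^ p
        = (ind (ZMod p) A) ^ (p - 1) * ind (ZMod p) A := by
      rw [← pow_succ, Nat.sub_add_cancel hp.pos]
    rw [hfrob, hps, mul_assoc, htile, ind_pow_mul_T]
  have hcoef : ∀ z, (cnt M A' B z : ZMod p) = 1 := by
    intro z
    rw [← ind_mul_apply, key, AddMonoidAlgebra.coeff_smul_apply, T_apply, nsmul_eq_mul, mul_one,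
      Nat.cast_pow, ZMod.pow_card_sub_one_eq_one hcA]
  have hpos : ∀ z, 1 ≤ cnt M A' B z := by
    intro z
    rcases Nat.eq_zero_or_pos (cnt M A' B z) with h0 | h1
    · exfalso
      have := hcoef z
      rw [h0, Nat.cast_zero] at this
      exact one_ne_zero this.symm
    · exact h1
  have hsum : ∑ z : ZMod M, cnt M A' B z = M := by
    rw [sum_cnt, hcardA', hABM]
  intro z
  by_contra hne
  have h2 : 2 ≤ cnt M A' B z := by
    have := hpos z; omega
  have hlt : ∑ w : ZMod M, (1 : ℕ) < ∑ w : ZMod M, cnt M A' B w :=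
    Finset.sum_lt_sum (fun i _ => hpos i) ⟨z, Finset.mem_univ z, by omega⟩
  rw [hsum, Finset.sum_const, smul_eq_mul, mul_one, Finset.card_univ, ZMod.card] at hlt
  omega

end SandsAux

namespace SandsAux

variable {M : ℕ}

lemma units_step [NeZero M] {A B : Finset (ZMod M)} (h : ∀ z, cnt M A B z = 1)
    (k : ℕ) (hk1 : 1 ≤ k) (hkM : Nat.Coprime k M) :
    ∀ z, cnt M (A.image (fun a => (k : ZMod M) * a)) B z = 1 := by
  induction k using Nat.strong_induction_on with
  | _ k ih =>
    rcases eq_or_lt_of_le hk1 with h1 | h2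
    · rw [← h1]
      intro z
      simpa [Finset.image_id] using h z
    · set p := k.minFac with hpdef
      have hp : p.Prime := Nat.minFac_prime (by omega)
      have hpk : p ∣ k := Nat.minFac_dvd k
      obtain ⟨k', hkk'⟩ := hpk
      have hk'0 : k' ≠ 0 := by rintro rfl; omega
      have hk'lt : k' < k := by
        have := hp.two_le
        nlinarith [Nat.pos_of_ne_zero hk'0]
      have hk'M : Nat.Coprime k' M :=
        Nat.Coprime.coprime_dvd_left ⟨p, by rw [hkk', mul_comm]⟩ hkM
      have hpM : ¬ p ∣ M := by
        have hpcop : Nat.Coprime p M :=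
          Nat.Coprime.coprime_dvd_left ⟨k', hkk'⟩ hkM
        exact (Nat.Prime.coprime_iff_not_dvd hp).mp hpcop
      have ih' := ih k' hk'lt (Nat.one_le_iff_ne_zero.mpr hk'0) hk'M
      have hstep := prime_step hp hpM ih'
      rw [Finset.image_image] at hstep
      intro z
      have heq : (A.image ((fun a => (p : ZMod M) * a) ∘ fun a => (k' : ZMod M) * a))
          = A.image (fun a => (k : ZMod M) * a) := by
        apply Finset.image_congr
        intro a _
        simp only [Function.comp_apply, hkk', Nat.cast_mul]
        ring
      rw [heq] at hstep
      exact hstep z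

lemma gcd_neg_val [NeZero M] (x : ZMod M) : Nat.gcd ((-x).val) M = Nat.gcd x.val M := by
  rcases eq_or_ne x 0 with rfl | hx
  · simp
  · rw [ZMod.neg_val, if_neg hx]
    have hv : x.val ≤ M := (ZMod.val_lt x).le
    apply Nat.dvd_antisymm
    · apply Nat.dvd_gcd
      · have h1 := Nat.gcd_dvd_left (M - x.val) M
        have h2 := Nat.gcd_dvd_right (M - x.val) M
        have h3 := Nat.dvd_sub h2 h1
        rwa [show M - (M - x.val) = x.val by omega] at h3
      · exact Nat.gcd_dvd_right _ _
    · apply Nat.dvd_gcd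
      · exact Nat.dvd_sub (Nat.gcd_dvd_right _ _) (Nat.gcd_dvd_left _ _)
      · exact Nat.gcd_dvd_right _ _

lemma gcd_val_eq_self_iff [NeZero M] (x : ZMod M) : Nat.gcd x.val M = M ↔ x = 0 := by
  constructor
  · intro hg
    have hdvd : M ∣ x.val := (dvd_of_eq hg.symm).trans (Nat.gcd_dvd_left x.val M)
    have hlt := ZMod.val_lt x
    have : x.val = 0 := by
      rcases Nat.eq_zero_or_pos x.val with h0 | h1
      · exact h0
      · exact absurd (Nat.le_of_dvd h1 hdvd) (by omega)
    exact (ZMod.val_eq_zero x).mp this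
  · rintro rfl; simp

lemma exists_coprime_mul_modeq {v w N : ℕ} (hN : N ≠ 0)
    (h : Nat.gcd v N = Nat.gcd w N) :
    ∃ k : ℕ, 1 ≤ k ∧ Nat.Coprime k N ∧ k * v ≡ w [MOD N] := by
  obtain ⟨d, hd⟩ : ∃ d, Nat.gcd v N = d := ⟨_, rfl⟩
  have hdM : d ∣ N := hd ▸ Nat.gcd_dvd_right v N
  have hdx : d ∣ v := hd ▸ Nat.gcd_dvd_left v N
  have hdy : d ∣ w := (h.symm.trans hd) ▸ Nat.gcd_dvd_left w N
  have hd0 : d ≠ 0 := fun h0 => hN (Nat.eq_zero_of_gcd_eq_zero_right (hd.trans h0))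
  obtain ⟨m, hm⟩ : ∃ m, N = d * m := hdM
  have hm0 : m ≠ 0 := by rintro rfl; rw [mul_zero] at hm; exact hN hm
  haveI : NeZero m := ⟨hm0⟩
  obtain ⟨s, hs⟩ : ∃ s, v = d * s := hdx
  obtain ⟨t, ht⟩ : ∃ t, w = d * t := hdy
  have hsm : Nat.Coprime s m := by
    have hgl : Nat.gcd (d * s) (d * m) = d * Nat.gcd s m := Nat.gcd_mul_left d s m
    rw [← hs, ← hm, hd] at hgl
    have hpos := Nat.pos_of_ne_zero hd0
    have : Nat.gcd s m = 1 := by nlinarith [Nat.gcd s m]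
    exact this
  have htm : Nat.Coprime t m := by
    have hgl : Nat.gcd (d * t) (d * m) = d * Nat.gcd t m := Nat.gcd_mul_left d t m
    rw [← ht, ← hm, ← h, hd] at hgl
    have hpos := Nat.pos_of_ne_zero hd0
    have : Nat.gcd t m = 1 := by nlinarith [Nat.gcd t m]
    exact this
  have hmM : m ∣ N := ⟨d, by rw [hm, mul_comm]⟩
  haveI : NeZero N := ⟨hN⟩
  obtain ⟨U, hU⟩ := ZMod.unitsMap_surjective hmM
    (ZMod.unitOfCoprime t htm * (ZMod.unitOfCoprime s hsm)⁻¹)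
  refine ⟨(U : ZMod N).val + N, by omega, ?_, ?_⟩
  · exact (Nat.coprime_add_self_left).mpr (ZMod.val_coe_unit_coprime U)
  · -- congruence mod m first
    have hcastk : (((U : ZMod N).val + N : ℕ) : ZMod m)
        = ((ZMod.unitOfCoprime t htm * (ZMod.unitOfCoprime s hsm)⁻¹ : (ZMod m)ˣ) : ZMod m) := by
      have h1 : ((U : ZMod N).val : ZMod m) = ZMod.castHom hmM (ZMod m) (U : ZMod N) := by
        rw [ZMod.castHom_apply, ZMod.natCast_val]
      have h2 : ZMod.castHom hmM (ZMod m) (U : ZMod N)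
          = ((ZMod.unitOfCoprime t htm * (ZMod.unitOfCoprime s hsm)⁻¹ : (ZMod m)ˣ) : ZMod m) := by
        have := congrArg (Units.val) hU
        simpa [ZMod.unitsMap_def] using this
      have hNm : ((N : ℕ) : ZMod m) = 0 := (ZMod.natCast_eq_zero_iff N m).mpr hmM
      rw [Nat.cast_add, h1, h2, hNm, add_zero]
    have hzm : ((((U : ZMod N).val + N) * s : ℕ) : ZMod m) = ((t : ℕ) : ZMod m) := by
      rw [Nat.cast_mul, hcastk]
      have hsu : ((s : ℕ) : ZMod m) = (ZMod.unitOfCoprime s hsm : ZMod m) :=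
        (ZMod.coe_unitOfCoprime s hsm).symm
      have htu : ((t : ℕ) : ZMod m) = (ZMod.unitOfCoprime t htm : ZMod m) :=
        (ZMod.coe_unitOfCoprime t htm).symm
      rw [hsu, htu, ← Units.val_mul, mul_assoc, inv_mul_cancel, mul_one]
    have hmodm : ((U : ZMod N).val + N) * s ≡ t [MOD m] :=
      (ZMod.natCast_eq_natCast_iff _ _ _).mp hzm
    have hmodM : d * (((U : ZMod N).val + N) * s) ≡ d * t [MOD N] := by
      have := Nat.ModEq.mul_left' (c := d) hmodm
      rwa [← hm] at this
    calc ((U : ZMod N).val + N) * v = d * (((U : ZMod N).val + N) * s) := by rw [hs]; ring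
    _ ≡ d * t [MOD N] := hmodM
    _ = w := ht.symm

lemma exists_nat_mul [NeZero M] {x y : ZMod M} (h : Nat.gcd x.val M = Nat.gcd y.val M) :
    ∃ k : ℕ, 1 ≤ k ∧ Nat.Coprime k M ∧ (k : ZMod M) * x = y := by
  obtain ⟨k, hk1, hkc, hmod⟩ := exists_coprime_mul_modeq (NeZero.ne M) h
  refine ⟨k, hk1, hkc, ?_⟩
  have := (ZMod.natCast_eq_natCast_iff _ _ _).mpr hmod
  push_cast at this
  rwa [ZMod.natCast_val, ZMod.natCast_val, ZMod.cast_id, ZMod.cast_id] at this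

end SandsAux

open SandsAux in
theorem stmt0 (M : ℕ) [NeZero M] (A B : Finset (ZMod M)) :
    IsTiling M A B ↔ A.card * B.card = M ∧ DivSet M A ∩ DivSet M B = {M} := by
  constructor
  · intro ht
    have hcnt := (isTiling_iff_cnt A B).mp ht
    have hABM : A.card * B.card = M := by
      have := sum_cnt A B
      simp_rw [hcnt] at this
      simpa [ZMod.card] using this.symm
    refine ⟨hABM, ?_⟩
    ext d
    simp only [Set.mem_inter_iff, Set.mem_singleton_iff]
    constructor
    · rintro ⟨⟨a, ha, a', ha', hda⟩, ⟨b, hb, b', hb', hdb⟩⟩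
      by_contra hdM
      -- the differences are nonzero
      have hx0 : a - a' ≠ 0 := by
        intro h0
        rw [h0] at hda
        simp [Nat.gcd_zero_left] at hda
        exact hdM hda
      have hy0 : b - b' ≠ 0 := by
        intro h0
        rw [h0] at hdb
        simp [Nat.gcd_zero_left] at hdb
        exact hdM hdb
      -- gcd of b' - b equals d as well
      have hgy : Nat.gcd (b' - b).val M = Nat.gcd (a - a').val M := by
        have : b' - b = -(b - b') := by ring
        rw [this, gcd_neg_val, ← hdb, hda]
      obtain ⟨k, hk1, hkc, hky⟩ := exists_nat_mul hgy.symm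
      have hcnt' := units_step hcnt k hk1 hkc
      set z := (k : ZMod M) * a + b with hz
      have hmem1 : ((k : ZMod M) * a, b) ∈
          ((A.image (fun a => (k : ZMod M) * a)) ×ˢ B).filter
            (fun ab => ab.1 + ab.2 = z) := by
        simp only [Finset.mem_filter, Finset.mem_product]
        exact ⟨⟨Finset.mem_image_of_mem _ ha, hb⟩, rfl⟩
      have hmem2 : ((k : ZMod M) * a', b') ∈
          ((A.image (fun a => (k : ZMod M) * a)) ×ˢ B).filter
            (fun ab => ab.1 + ab.2 = z) := by
        simp only [Finset.mem_filter, Finset.mem_product]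
        refine ⟨⟨Finset.mem_image_of_mem _ ha', hb'⟩, ?_⟩
        show (k : ZMod M) * a' + b' = (k : ZMod M) * a + b
        have := hky
        linear_combination -hky
      have hne12 : ((k : ZMod M) * a, b) ≠ ((k : ZMod M) * a', b') := by
        intro hpair
        have hbb : b = b' := congrArg Prod.snd hpair
        exact hy0 (by rw [hbb]; ring)
      have h2le : 1 < cnt M (A.image (fun a => (k : ZMod M) * a)) B z :=
        Finset.one_lt_card.mpr ⟨_, hmem1, _, hmem2, hne12⟩
      rw [hcnt' z] at h2le
      omega
    · rintro rfl
      have hApos : 0 < A.card := by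
        by_contra h0
        have : A.card = 0 := by omega
        rw [this, zero_mul] at hABM
        exact (NeZero.ne _) hABM.symm
      have hBpos : 0 < B.card := by
        by_contra h0
        have : B.card = 0 := by omega
        rw [this, mul_zero] at hABM
        exact (NeZero.ne _) hABM.symm
      obtain ⟨a, ha⟩ := Finset.card_pos.mp hApos
      obtain ⟨b, hb⟩ := Finset.card_pos.mp hBpos
      constructor
      · exact ⟨a, ha, a, ha, by simp⟩
      · exact ⟨b, hb, b, hb, by simp⟩
  · rintro ⟨hABM, hdiv⟩
    -- injectivity of the addition map on A ×ˢ B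
    have hinj : ∀ ab ∈ A ×ˢ B, ∀ ab' ∈ A ×ˢ B,
        ab.1 + ab.2 = ab'.1 + ab'.2 → ab = ab' := by
      rintro ⟨a, b⟩ hab ⟨a', b'⟩ hab' hsum
      simp only [Finset.mem_product] at hab hab'
      rcases eq_or_ne a a' with rfl | hne
      · have : b = b' := by
          have := hsum
          simpa using add_left_cancel this
        rw [this]
      · exfalso
        have hx0 : a - a' ≠ 0 := sub_ne_zero.mpr hne
        set dd := Nat.gcd (a - a').val M with hdd
        have hdA : dd ∈ DivSet M A := ⟨a, hab.1, a', hab'.1, rfl⟩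
        have hdB : dd ∈ DivSet M B := by
          refine ⟨b, hab.2, b', hab'.2, ?_⟩
          have hbb : b - b' = -(a - a') := by
            have := hsum
            linear_combination hsum
          rw [hbb, gcd_neg_val, hdd]
        have : dd = M := by
          have := Set.ext_iff.mp hdiv dd
          exact this.mp ⟨hdA, hdB⟩
        exact hx0 ((gcd_val_eq_self_iff _).mp (hdd ▸ this))
    intro z
    -- surjectivity via cardinality
    have hcard : ((A ×ˢ B).image (fun ab => ab.1 + ab.2)).card = Fintype.card (ZMod M) := by
      rw [Finset.card_image_of_injOn (fun x hx y hy h => hinj x hx y hy h),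
        Finset.card_product, hABM, ZMod.card]
    have huniv := Finset.eq_univ_of_card _ hcard
    have : z ∈ (A ×ˢ B).image (fun ab => ab.1 + ab.2) := huniv ▸ Finset.mem_univ z
    obtain ⟨ab, habmem, habz⟩ := Finset.mem_image.mp this
    have habm := Finset.mem_product.mp habmem
    refine ⟨ab, ⟨habm.1, habm.2, habz⟩, ?_⟩
    rintro ⟨a', b'⟩ ⟨ha', hb', hz'⟩
    exact hinj _ (Finset.mem_product.mpr ⟨ha', hb'⟩) _ habmem (by rw [hz', habz])
end

section
/- Let ψ : ℤ_M → ℤ_M be a divisor isometry, i.e., gcd(ψ(x) - ψ(x'), M) = gcd(x - x', M) for all x, x' ∈ ℤ_M. If A ⊕ B = ℤ_M is a tiling, then ψ(A) ⊕ B = ℤ_M is also a tiling. -/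
open Finset

set_option linter.unusedSectionVars false

section Aux

variable {M : ℕ} [NeZero M]

lemma all_one_of_sum_le {ι : Type*} [Fintype ι] (f : ι → ℕ)
    (hsum : ∑ i, f i = Fintype.card ι) (h1 : ∀ i, f i ≤ 1) : ∀ i, f i = 1 := by
  by_contra hc
  push_neg at hc
  obtain ⟨i, hi⟩ := hc
  have : ∑ j, f j < ∑ _j : ι, 1 :=
    Finset.sum_lt_sum (fun j _ => h1 j) ⟨i, Finset.mem_univ i, by have := h1 i; omega⟩
  rw [Finset.sum_const, smul_eq_mul, mul_one, Finset.card_univ] at this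
  omega

lemma all_one_of_sum_ge {ι : Type*} [Fintype ι] (f : ι → ℕ)
    (hsum : ∑ i, f i = Fintype.card ι) (h1 : ∀ i, 1 ≤ f i) : ∀ i, f i = 1 := by
  by_contra hc
  push_neg at hc
  obtain ⟨i, hi⟩ := hc
  have : ∑ _j : ι, 1 < ∑ j, f j :=
    Finset.sum_lt_sum (fun j _ => h1 j) ⟨i, Finset.mem_univ i, by have := h1 i; omega⟩
  rw [Finset.sum_const, smul_eq_mul, mul_one, Finset.card_univ] at this
  omega

lemma tiling_cnt {A B : Finset (ZMod M)} (h : IsTiling M A B) (z : ZMod M) :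
    ((A ×ˢ B).filter (fun ab => ab.1 + ab.2 = z)).card = 1 := by
  obtain ⟨ab, ⟨ha, hb, hs⟩, huniq⟩ := h z
  apply le_antisymm
  · apply Finset.card_le_one.mpr
    intro x hx y hy
    simp only [Finset.mem_filter, Finset.mem_product] at hx hy
    exact (huniq x ⟨hx.1.1, hx.1.2, hx.2⟩).trans (huniq y ⟨hy.1.1, hy.1.2, hy.2⟩).symm
  · exact Finset.one_le_card.mpr ⟨ab, by
      simp only [Finset.mem_filter, Finset.mem_product]; exact ⟨⟨ha, hb⟩, hs⟩⟩

lemma sum_cnt (A B : Finset (ZMod M)) (f : ZMod M → ZMod M) :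
    ∑ z : ZMod M, ((A ×ˢ B).filter (fun ab => f ab.1 + ab.2 = z)).card
      = A.card * B.card := by
  rw [← Finset.card_product]
  exact (Finset.card_eq_sum_card_fiberwise
    (f := fun ab : ZMod M × ZMod M => f ab.1 + ab.2) (s := A ×ˢ B) (t := Finset.univ)
    (fun x _ => Finset.mem_univ _)).symm

lemma tiling_card {A B : Finset (ZMod M)} (h : IsTiling M A B) :
    A.card * B.card = M := by
  have hs := sum_cnt A B id
  simp only [id] at hs
  rw [← hs]
  rw [Finset.sum_congr rfl (fun z _ => tiling_cnt h z), Finset.sum_const, smul_eq_mul, mul_one,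
    Finset.card_univ, ZMod.card]

lemma tiling_of_cnt {A B : Finset (ZMod M)} {f : ZMod M → ZMod M}
    (hc : ∀ z, ((A ×ˢ B).filter (fun ab => f ab.1 + ab.2 = z)).card = 1) :
    IsTiling M (A.image f) B := by
  intro z
  obtain ⟨ab, hab⟩ := Finset.card_eq_one.mp (hc z)
  have habm : ab ∈ (A ×ˢ B).filter (fun ab => f ab.1 + ab.2 = z) := by
    rw [hab]; exact Finset.mem_singleton_self ab
  simp only [Finset.mem_filter, Finset.mem_product] at habm
  refine ⟨(f ab.1, ab.2), ⟨Finset.mem_image_of_mem f habm.1.1, habm.1.2, habm.2⟩, ?_⟩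
  rintro ⟨x, b⟩ ⟨hx, hb, hs⟩
  obtain ⟨a, ha, rfl⟩ := Finset.mem_image.mp hx
  have hmem : (a, b) ∈ (A ×ˢ B).filter (fun ab => f ab.1 + ab.2 = z) := by
    simp only [Finset.mem_filter, Finset.mem_product]; exact ⟨⟨ha, hb⟩, hs⟩
  rw [hab, Finset.mem_singleton] at hmem
  rw [← hmem]

lemma eval_sum_single {p : ℕ} {ι : Type*} (s : Finset ι) (w : ι → ZMod M) (z : ZMod M) :
    (∑ i ∈ s, AddMonoidAlgebra.single (w i) (1 : ZMod p)).coeff z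
      = ((s.filter (fun i => w i = z)).card : ZMod p) := by
  classical
  rw [AddMonoidAlgebra.coeff_sum, Finsupp.finset_sum_apply]
  simp only [AddMonoidAlgebra.coeff_single_apply]
  rw [Finset.sum_boole]

lemma prime_cnt {p : ℕ} (hp : p.Prime) (A B : Finset (ZMod M)) (hpA : ¬ p ∣ A.card)
    (htc : A.card * B.card = M)
    (hcnt : ∀ z : ZMod M, ((A ×ˢ B).filter (fun ab => ab.1 + ab.2 = z)).card = 1) :
    ∀ z : ZMod M, ((A ×ˢ B).filter (fun ab => (p : ZMod M) * ab.1 + ab.2 = z)).card = 1 := by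
  classical
  haveI : Fact p.Prime := ⟨hp⟩
  haveI : CharP (AddMonoidAlgebra (ZMod p) (ZMod M)) p :=
    charP_of_injective_ringHom
      (f := AddMonoidAlgebra.singleZeroRingHom (R := ZMod p) (M := ZMod M))
      (fun a b hab => by
        simpa using hab) p
  set Φ : AddMonoidAlgebra (ZMod p) (ZMod M) :=
    ∑ z : ZMod M, AddMonoidAlgebra.single z 1 with hΦ
  set fA : AddMonoidAlgebra (ZMod p) (ZMod M) :=
    ∑ a ∈ A, AddMonoidAlgebra.single a 1 with hfA
  set fB : AddMonoidAlgebra (ZMod p) (ZMod M) :=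
    ∑ b ∈ B, AddMonoidAlgebra.single b 1 with hfB
  have hprod : fA * fB = Φ := by
    rw [hfA, hfB, Finset.sum_mul_sum]
    simp only [AddMonoidAlgebra.single_mul_single, one_mul]
    rw [← Finset.sum_product' (s := A) (t := B)
      (f := fun a b => AddMonoidAlgebra.single (R := ZMod p) (a + b) 1), hΦ]
    apply Finset.sum_bij (i := fun (ab : ZMod M × ZMod M) _ => ab.1 + ab.2)
    · exact fun a _ => Finset.mem_univ _
    · intro a ha b hb hab
      have hma : a ∈ (A ×ˢ B).filter (fun ab => ab.1 + ab.2 = a.1 + a.2) :=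
        Finset.mem_filter.mpr ⟨ha, rfl⟩
      have hmb : b ∈ (A ×ˢ B).filter (fun ab => ab.1 + ab.2 = a.1 + a.2) :=
        Finset.mem_filter.mpr ⟨hb, hab.symm⟩
      obtain ⟨c, hc⟩ := Finset.card_eq_one.mp (hcnt (a.1 + a.2))
      rw [hc, Finset.mem_singleton] at hma hmb
      rw [hma, hmb]
    · intro z _
      obtain ⟨w, hw⟩ := Finset.card_eq_one.mp (hcnt z)
      have : w ∈ (A ×ˢ B).filter (fun ab => ab.1 + ab.2 = z) := by
        rw [hw]; exact Finset.mem_singleton_self w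
      rw [Finset.mem_filter] at this
      exact ⟨w, this.1, this.2⟩
    · exact fun a _ => rfl
  have hmulΦ : ∀ x : ZMod M, AddMonoidAlgebra.single (R := ZMod p) x 1 * Φ = Φ := by
    intro x
    rw [hΦ, Finset.mul_sum]
    simp only [AddMonoidAlgebra.single_mul_single, one_mul]
    exact Fintype.sum_equiv (Equiv.addLeft x) _ _ (fun z => rfl)
  have hfAΦ : fA * Φ = A.card • Φ := by
    rw [hfA, Finset.sum_mul, Finset.sum_congr rfl (fun a _ => hmulΦ a), Finset.sum_const]
  have hpow : ∀ e : ℕ, fA ^ e * Φ = (A.card ^ e) • Φ := by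
    intro e
    induction e with
    | zero => simp
    | succ n ih =>
      rw [pow_succ, mul_assoc, hfAΦ, mul_smul_comm, ih, smul_smul, pow_succ, Nat.mul_comm]
  set F : AddMonoidAlgebra (ZMod p) (ZMod M) :=
    ∑ a ∈ A, AddMonoidAlgebra.single ((p : ZMod M) * a) 1 with hF
  have hfrob : fA ^ p = F := by
    rw [hfA, sum_pow_char]
    exact Finset.sum_congr rfl (fun a _ => by
      rw [AddMonoidAlgebra.single_pow, one_pow, nsmul_eq_mul])
  have hkey : F * fB = Φ := by
    have h1 : p - 1 + 1 = p := Nat.succ_pred_eq_of_pos hp.pos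
    have : F * fB = fA ^ (p - 1) * Φ := by
      have h2 := pow_succ fA (p - 1)
      rw [h1] at h2
      rw [← hfrob, h2, mul_assoc, hprod]
    rw [this, hpow]
    have hA0 : (A.card : ZMod p) ≠ 0 := by
      rw [Ne, ZMod.natCast_eq_zero_iff]; exact hpA
    have hfermat : ((A.card ^ (p - 1) : ℕ) : ZMod p) = 1 := by
      rw [Nat.cast_pow]; exact ZMod.pow_card_sub_one_eq_one hA0
    rw [← Nat.cast_smul_eq_nsmul (ZMod p), hfermat, one_smul]
  have hco : ∀ w : ZMod M,
      ((((A ×ˢ B).filter (fun ab => (p : ZMod M) * ab.1 + ab.2 = w)).card : ℕ) : ZMod p) = 1 := by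
    intro w
    have hFco : (F * fB).coeff w = (((A ×ˢ B).filter
        (fun ab => (p : ZMod M) * ab.1 + ab.2 = w)).card : ZMod p) := by
      rw [hF, hfB, Finset.sum_mul_sum]
      simp only [AddMonoidAlgebra.single_mul_single, one_mul]
      rw [← Finset.sum_product' (s := A) (t := B)
        (f := fun a b => AddMonoidAlgebra.single (R := ZMod p) ((p : ZMod M) * a + b) 1)]
      exact eval_sum_single (A ×ˢ B) _ w
    have hΦco : Φ.coeff w = 1 := by
      rw [hΦ, AddMonoidAlgebra.coeff_sum, Finsupp.finset_sum_apply]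
      simp [AddMonoidAlgebra.coeff_single_apply]
    rw [hkey, hΦco] at hFco
    exact hFco.symm
  have hge : ∀ w : ZMod M, 1 ≤ ((A ×ˢ B).filter
      (fun ab => (p : ZMod M) * ab.1 + ab.2 = w)).card := by
    intro w
    rcases Nat.eq_zero_or_pos ((A ×ˢ B).filter
      (fun ab => (p : ZMod M) * ab.1 + ab.2 = w)).card with h0 | h1
    · exfalso
      have := hco w
      rw [h0] at this
      simp only [Nat.cast_zero] at this
      exact zero_ne_one this
    · exact h1
  have hsum : ∑ w : ZMod M, ((A ×ˢ B).filter
      (fun ab => (p : ZMod M) * ab.1 + ab.2 = w)).card = Fintype.card (ZMod M) := by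
    rw [sum_cnt A B (fun a => (p : ZMod M) * a), htc, ZMod.card]
  exact all_one_of_sum_ge _ hsum hge

lemma prime_step {p : ℕ} {A B : Finset (ZMod M)} (hp : p.Prime) (hpA : ¬ p ∣ A.card)
    (h : IsTiling M A B) : IsTiling M (A.image (fun a => (p : ZMod M) * a)) B :=
  tiling_of_cnt (prime_cnt hp A B hpA (tiling_card h) (tiling_cnt h))

lemma mul_step : ∀ k : ℕ, ∀ A B : Finset (ZMod M), 0 < k → Nat.Coprime k A.card →
    IsTiling M A B → IsTiling M (A.image (fun a => (k : ZMod M) * a)) B := by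
  intro k
  induction k using Nat.strong_induction_on with
  | _ k ih =>
    intro A B hk hcop h
    by_cases hk1 : k = 1
    · subst hk1
      have : (fun a : ZMod M => ((1 : ℕ) : ZMod M) * a) = id := by
        funext a; simp
      rwa [this, Finset.image_id]
    · have hk2 : 2 ≤ k := by omega
      set q := k.minFac with hqdef
      have hq : q.Prime := Nat.minFac_prime hk1
      have hqk : q ∣ k := Nat.minFac_dvd k
      have hqA : ¬ q ∣ A.card := by
        intro hd
        have : q ∣ 1 := hcop ▸ Nat.dvd_gcd hqk hd
        exact Nat.Prime.one_lt hq |>.ne' (Nat.eq_one_of_dvd_one this)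
      have h1 : IsTiling M (A.image (fun a => (q : ZMod M) * a)) B := prime_step hq hqA h
      set A' := A.image (fun a => (q : ZMod M) * a) with hA'
      have hB : 0 < B.card := by
        rcases Nat.eq_zero_or_pos B.card with h0 | h0
        · exfalso
          have := tiling_card h
          rw [h0, mul_zero] at this
          exact (NeZero.ne M) this.symm
        · exact h0
      have hcard' : A'.card = A.card := by
        have t1 := tiling_card h
        have t2 := tiling_card h1
        exact Nat.eq_of_mul_eq_mul_right hB (t2.trans t1.symm)
      have hlt : k / q < k := Nat.div_lt_self (by omega) hq.one_lt
      have hpos : 0 < k / q := Nat.div_pos (Nat.minFac_le (by omega)) hq.pos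
      have hcop' : Nat.Coprime (k / q) A'.card := by
        rw [hcard']
        exact Nat.Coprime.coprime_dvd_left (Nat.div_dvd_of_dvd hqk) hcop
      have h2 := ih (k / q) hlt A' B hpos hcop' h1
      rw [hA', Finset.image_image] at h2
      have hfun : (fun a : ZMod M => ((k / q : ℕ) : ZMod M) * a) ∘ (fun a => (q : ZMod M) * a)
          = fun a : ZMod M => (k : ZMod M) * a := by
        funext a
        simp only [Function.comp_apply]
        rw [← mul_assoc, ← Nat.cast_mul, Nat.div_mul_cancel hqk]
      rwa [hfun] at h2

lemma coprimePart (n : ℕ) : ∀ a : ℕ, 0 < a →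
    ∃ m : ℕ, m ∣ a ∧ Nat.Coprime m n ∧ ∀ q : ℕ, q.Prime → q ∣ a → ¬ q ∣ n → q ∣ m := by
  intro a
  induction a using Nat.strong_induction_on with
  | _ a ih =>
    intro ha
    by_cases hc : Nat.Coprime a n
    · exact ⟨a, dvd_rfl, hc, fun q _ hq _ => hq⟩
    · set g := Nat.gcd a n with hg
      have hg1 : 1 < g := by
        have h1 : g ≠ 1 := hc
        have h2 : 0 < g := Nat.gcd_pos_of_pos_left n ha
        omega
      have hga : g ∣ a := Nat.gcd_dvd_left a n
      have hlt : a / g < a := Nat.div_lt_self ha hg1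
      have hpos : 0 < a / g := Nat.div_pos (Nat.le_of_dvd ha hga) (by omega)
      obtain ⟨m, hm1, hm2, hm3⟩ := ih (a / g) hlt hpos
      refine ⟨m, hm1.trans (Nat.div_dvd_of_dvd hga), hm2, ?_⟩
      intro q hq hqa hqn
      apply hm3 q hq ?_ hqn
      have hqg : ¬ q ∣ g := fun hd => hqn (hd.trans (Nat.gcd_dvd_right a n))
      have heq : a = g * (a / g) := (Nat.mul_div_cancel' hga).symm
      rcases (Nat.Prime.dvd_mul hq).mp (heq ▸ hqa) with hcase | hcase
      · exact absurd hcase hqg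
      · exact hcase

lemma sands {A B : Finset (ZMod M)} (h : IsTiling M A B) {a a' b b' : ZMod M}
    (ha : a ∈ A) (ha' : a' ∈ A) (hb : b ∈ B) (hb' : b' ∈ B) (hne : a ≠ a')
    (hgcd : Nat.gcd (b' - b).val M = Nat.gcd (a - a').val M) : False := by
  have hApos : 0 < A.card := Finset.card_pos.mpr ⟨a, ha⟩
  set g : ZMod M := a - a' with hg
  set h0 : ZMod M := b' - b with hh0
  have hg0 : g ≠ 0 := sub_ne_zero.mpr hne
  set d := Nat.gcd g.val M with hd
  have hdM : d ∣ M := Nat.gcd_dvd_right _ _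
  have hdneM : d ≠ M := by
    intro hdm
    have h1 : M ∣ g.val := by
      have h4 := Nat.gcd_dvd_left g.val M
      rwa [← hd, hdm] at h4
    have h2 : g.val < M := ZMod.val_lt g
    have h3 : g.val = 0 := Nat.eq_zero_of_dvd_of_lt h1 h2
    exact hg0 ((ZMod.val_eq_zero g).mp h3)
  have hdpos : 0 < d := Nat.gcd_pos_of_pos_right _ (NeZero.pos M)
  set n := M / d with hn
  have hdn : d * n = M := Nat.mul_div_cancel' hdM
  have hn0 : n ≠ 0 := by
    intro h0
    rw [h0, Nat.mul_zero] at hdn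
    exact (NeZero.ne M) hdn.symm
  have hn1 : 1 < n := by
    rcases Nat.lt_or_ge n 2 with h2 | h2
    · exfalso
      have h3 : n = 1 :=
        Nat.le_antisymm (Nat.lt_succ_iff.mp h2) (Nat.one_le_iff_ne_zero.mpr hn0)
      rw [h3, Nat.mul_one] at hdn
      exact hdneM hdn
    · exact h2
  haveI : NeZero n := ⟨hn0⟩
  have hh0ne : h0 ≠ 0 := by
    intro h00
    rw [h00] at hgcd
    rw [ZMod.val_zero, Nat.gcd_zero_left] at hgcd
    exact hdneM hgcd.symm
  set u := g.val / d with hu_def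
  set v := h0.val / d with hv_def
  have hgd : d ∣ g.val := Nat.gcd_dvd_left _ _
  have hhd : d ∣ h0.val := hgcd ▸ Nat.gcd_dvd_left h0.val M
  have hu : Nat.Coprime u n := Nat.coprime_div_gcd_div_gcd (m := g.val) (n := M) hdpos
  have hv : Nat.Coprime v n := by
    have := Nat.coprime_div_gcd_div_gcd (m := h0.val) (n := M) (by rw [hgcd]; exact hdpos)
    rwa [hgcd] at this
  set U := ZMod.unitOfCoprime u hu with hU
  set V := ZMod.unitOfCoprime v hv with hV
  set s := ((V * U⁻¹ : (ZMod n)ˣ) : ZMod n).val with hs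
  have hscop : Nat.Coprime s n := ZMod.val_coe_unit_coprime _
  have hsu : (s * u : ℕ) ≡ v [MOD n] := by
    apply (ZMod.natCast_eq_natCast_iff _ _ _).mp
    push_cast
    rw [hs, ZMod.natCast_rightInverse _]
    have : ((V * U⁻¹ : (ZMod n)ˣ) : ZMod n) * ((U : (ZMod n)ˣ) : ZMod n)
        = ((V : (ZMod n)ˣ) : ZMod n) := by
      rw [← Units.val_mul, inv_mul_cancel_right]
    rw [hU, hV] at this
    rw [ZMod.coe_unitOfCoprime] at this
    rw [this, ZMod.coe_unitOfCoprime]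
  have hmod : (s * g.val) ≡ h0.val [MOD M] := by
    have h2 : d * (s * u) ≡ d * v [MOD d * n] := hsu.mul_left' d
    rw [hdn] at h2
    have e1 : d * (s * u) = s * g.val := by
      rw [show d * (s * u) = s * (d * u) by ring, hu_def, Nat.mul_div_cancel' hgd]
    have e2 : d * v = h0.val := by rw [hv_def, Nat.mul_div_cancel' hhd]
    rwa [e1, e2] at h2
  have hsg : (s : ZMod M) * g = h0 := by
    have h3 := (ZMod.natCast_eq_natCast_iff _ _ _).mpr hmod
    push_cast at h3
    rwa [ZMod.natCast_rightInverse g, ZMod.natCast_rightInverse h0] at h3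
  obtain ⟨m, hmdvd, hmcop, hmprime⟩ := coprimePart n A.card hApos
  obtain ⟨k, hk1, hk2⟩ := Nat.chineseRemainder hmcop.symm s 1
  have hkpos : 0 < k := by
    rcases Nat.eq_zero_or_pos k with h0 | h1
    · exfalso
      rw [h0] at hk1
      have : n ∣ s := (Nat.modEq_zero_iff_dvd).mp hk1.symm
      have h7 : n ∣ 1 := hscop ▸ Nat.dvd_gcd this dvd_rfl
      have := Nat.eq_one_of_dvd_one h7
      omega
    · exact h1
  have hkcop : Nat.Coprime k A.card := by
    by_contra hnc
    set q := (Nat.gcd k A.card).minFac with hq_def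
    have hq : q.Prime := Nat.minFac_prime hnc
    have hqk : q ∣ k := (Nat.minFac_dvd _).trans (Nat.gcd_dvd_left _ _)
    have hqA : q ∣ A.card := (Nat.minFac_dvd _).trans (Nat.gcd_dvd_right _ _)
    by_cases hqn : q ∣ n
    · have hks : k ≡ s [MOD q] := hk1.of_dvd hqn
      have h4 : q ∣ s := by
        have h5 : s ≡ 0 [MOD q] := (hks.symm.trans ((Nat.modEq_zero_iff_dvd).mpr hqk))
        exact (Nat.modEq_zero_iff_dvd).mp h5
      have : q ∣ 1 := hscop ▸ Nat.dvd_gcd h4 hqn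
      exact hq.one_lt.ne' (Nat.eq_one_of_dvd_one this)
    · have hqm : q ∣ m := hmprime q hq hqA hqn
      have hkq : k ≡ 1 [MOD q] := hk2.of_dvd hqm
      have : (0 : ℕ) ≡ 1 [MOD q] := ((Nat.modEq_zero_iff_dvd).mpr hqk).symm.trans hkq
      have : q ∣ 1 := (Nat.modEq_iff_dvd' (by omega)).mp this
      exact hq.one_lt.ne' (Nat.eq_one_of_dvd_one this)
  have h' := mul_step k A B hkpos hkcop h
  have hng : (n : ZMod M) * g = 0 := by
    rw [show g = ((g.val : ℕ) : ZMod M) from (ZMod.natCast_rightInverse g).symm, ← Nat.cast_mul,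
      ZMod.natCast_eq_zero_iff]
    have : g.val = d * u := (Nat.mul_div_cancel' hgd).symm
    rw [this, ← hdn]
    exact ⟨u, by ring⟩
  have hkg : (k : ZMod M) * g = h0 := by
    have hdvd : (n : ℤ) ∣ (s : ℤ) - k := Nat.ModEq.dvd hk1
    obtain ⟨t, ht⟩ := hdvd
    have : (k : ZMod M) = (s : ZMod M) - (n : ZMod M) * (t : ZMod M) := by
      have := congrArg (fun x : ℤ => (x : ZMod M)) ht
      push_cast at this
      rw [show ((t : ℤ) : ZMod M) = (t : ZMod M) from rfl] at this
      linear_combination -this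
    rw [this, sub_mul, mul_assoc, mul_comm (t : ZMod M) g, ← mul_assoc, hng, zero_mul,
      sub_zero, hsg]
  have hxx : (k : ZMod M) * a - (k : ZMod M) * a' = h0 := by
    rw [← mul_sub, ← hg, hkg]
  have hsumeq : (k : ZMod M) * a + b = (k : ZMod M) * a' + b' := by
    have h6 := hxx
    rw [hh0] at h6
    linear_combination h6
  have hxne : (k : ZMod M) * a ≠ (k : ZMod M) * a' := by
    intro he
    apply hh0ne
    rw [← hxx, he, sub_self]
  obtain ⟨w, hw, huniq⟩ := h' ((k : ZMod M) * a + b)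
  have e1 := huniq ((k : ZMod M) * a, b)
    ⟨Finset.mem_image_of_mem _ ha, hb, rfl⟩
  have e2 := huniq ((k : ZMod M) * a', b')
    ⟨Finset.mem_image_of_mem _ ha', hb', hsumeq.symm⟩
  exact hxne (congrArg Prod.fst (e1.trans e2.symm))

end Aux

theorem stmt1 (M : ℕ) [NeZero M] (ψ : ZMod M → ZMod M)
    (hψ : ∀ x x' : ZMod M, Nat.gcd ((ψ x - ψ x')).val M = Nat.gcd ((x - x')).val M)
    (A B : Finset (ZMod M)) (h : IsTiling M A B) :
    IsTiling M (A.image ψ) B := by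
  apply tiling_of_cnt
  have hsum : ∑ w : ZMod M, ((A ×ˢ B).filter (fun ab => ψ ab.1 + ab.2 = w)).card
      = Fintype.card (ZMod M) := by
    rw [sum_cnt A B ψ, tiling_card h, ZMod.card]
  have hle : ∀ w : ZMod M,
      ((A ×ˢ B).filter (fun ab => ψ ab.1 + ab.2 = w)).card ≤ 1 := by
    intro w
    apply Finset.card_le_one.mpr
    rintro ⟨a, b⟩ hx ⟨a', b'⟩ hy
    simp only [Finset.mem_filter, Finset.mem_product] at hx hy
    obtain ⟨⟨ha, hb⟩, hs⟩ := hx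
    obtain ⟨⟨ha', hb'⟩, hs'⟩ := hy
    by_cases haa : a = a'
    · subst haa
      have hbb : b = b' := by
        have := hs.trans hs'.symm
        exact add_left_cancel this
      rw [hbb]
    · exfalso
      refine sands h ha ha' hb hb' haa ?_
      have hdiff : b' - b = ψ a - ψ a' := by
        have := hs.trans hs'.symm
        linear_combination -this
      rw [hdiff]
      exact hψ a a'
  exact all_one_of_sum_le _ hsum hle
end

section
/- Let c, c' ∈ ℤ_M with gcd(c - c', M) = M/p, where p is a prime dividing M. Define the plane exchange map Ex(x) = x + (c' - c) if p^{v_p(M)} divides x - c (in the sense gcd considerations: x ∈ Π(c, p^{v_p(M)}) meaning p^{v_p(M)} | x - c), Ex(x) = x + (c - c') if p^{v_p(M)} | x - c', and Ex(x) = x otherwise. Then Ex is a divisor isometry of ℤ_M, i.e., gcd(Ex(x) - Ex(x'), M) = gcd(x - x', M) for all x, x' ∈ ℤ_M. -/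
/-- The plane exchange map `Ex(c, c', p^n)`. -/
def planeExchange (M p n : ℕ) (c c' : ZMod M) (x : ZMod M) : ZMod M :=
  if (p ^ n : ℕ) ∣ ((x - c : ZMod M)).val then x + (c' - c)
  else if (p ^ n : ℕ) ∣ ((x - c' : ZMod M)).val then x + (c - c')
  else x

/-- A divisor of `p^n * m` not divisible by `p^n` divides `p^(n-1) * m`. -/
lemma aux_dvd (p n m g : ℕ) (hp : p.Prime) (hn : 1 ≤ n) (hg0 : g ≠ 0)
    (hg : g ∣ p ^ n * m) (hng : ¬ p ^ n ∣ g) : g ∣ p ^ (n - 1) * m := by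
  set e := g.factorization p with he
  have helt : e < n := by
    by_contra h
    exact hng ((pow_dvd_pow p (by omega)).trans (Nat.ordProj_dvd g p))
  have h1 : p ^ e ∣ p ^ (n - 1) := pow_dvd_pow p (by omega)
  have hoc : g / p ^ e ∣ p ^ n * m := (Nat.ordCompl_dvd g p).trans hg
  have hcop : Nat.Coprime (g / p ^ e) (p ^ n) :=
    ((Nat.coprime_ordCompl hp hg0).symm).pow_right n
  have h2 : g / p ^ e ∣ m := hcop.dvd_of_dvd_mul_left hoc
  calc g = p ^ e * (g / p ^ e) := (Nat.ordProj_mul_ordCompl_eq_self g p).symm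
    _ ∣ p ^ (n - 1) * m := mul_dvd_mul h1 h2

/-- Core lemma: adding a multiple of `M/p` to `Y` does not change `gcd(Y, M)`
provided neither `Y` nor `Y + E` is divisible by `p^n`. -/
lemma key_gcd (M p n : ℕ) (hM : M ≠ 0) (hp : p.Prime) (hn : 1 ≤ n)
    (hpn : p ^ n ∣ M) (hpn' : ¬ p ^ (n + 1) ∣ M)
    (Y E : ℤ) (hE : ((M / p : ℕ) : ℤ) ∣ E)
    (hY : ¬ ((p ^ n : ℕ) : ℤ) ∣ Y) (hYE : ¬ ((p ^ n : ℕ) : ℤ) ∣ Y + E) :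
    Int.gcd (Y + E) (M : ℤ) = Int.gcd Y (M : ℤ) := by
  obtain ⟨m, hm⟩ := hpn
  have hMp : M / p = p ^ (n - 1) * m := by
    have h1 : M = p * (p ^ (n - 1) * m) := by
      rw [hm]
      rw [show p ^ n = p * p ^ (n - 1) from by
        conv_lhs => rw [show n = 1 + (n - 1) from by omega]
        rw [pow_add, pow_one]]
      ring
    rw [h1, Nat.mul_div_cancel_left _ hp.pos]
  have step : ∀ Z : ℤ, ¬ ((p ^ n : ℕ) : ℤ) ∣ Z → ((Int.gcd Z (M : ℤ) : ℕ) : ℤ) ∣ E := by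
    intro Z hZ
    set g := Int.gcd Z (M : ℤ) with hgdef
    have hgZ : (g : ℤ) ∣ Z := Int.gcd_dvd_left _ _
    have hgM : (g : ℤ) ∣ (M : ℤ) := Int.gcd_dvd_right _ _
    have hgMn : g ∣ M := Int.ofNat_dvd.mp hgM
    have hg0 : g ≠ 0 := by
      intro h
      rw [hgdef] at h
      have := Int.gcd_eq_zero_iff.mp h
      exact hM (by exact_mod_cast this.2)
    have hnot : ¬ p ^ n ∣ g := by
      intro h
      exact hZ ((Int.natCast_dvd_natCast.mpr h).trans hgZ)
    have := aux_dvd p n m g hp hn hg0 (hm ▸ hgMn) hnot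
    rw [← hMp] at this
    exact (Int.natCast_dvd_natCast.mpr this).trans hE
  have d1 : ((Int.gcd Y (M : ℤ) : ℕ) : ℤ) ∣ Y + E :=
    dvd_add (Int.gcd_dvd_left _ _) (step Y hY)
  have d2 : ((Int.gcd (Y + E) (M : ℤ) : ℕ) : ℤ) ∣ Y := by
    have : ((Int.gcd (Y + E) (M : ℤ) : ℕ) : ℤ) ∣ (Y + E) - E :=
      dvd_sub (Int.gcd_dvd_left _ _) (step (Y + E) hYE)
    simpa using this
  have e1 : ((Int.gcd Y (M : ℤ) : ℕ) : ℤ) ∣ (Int.gcd (Y + E) (M : ℤ) : ℤ) :=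
    Int.dvd_coe_gcd d1 (Int.gcd_dvd_right _ _)
  have e2 : ((Int.gcd (Y + E) (M : ℤ) : ℕ) : ℤ) ∣ (Int.gcd Y (M : ℤ) : ℤ) :=
    Int.dvd_coe_gcd d2 (Int.gcd_dvd_right _ _)
  exact Nat.dvd_antisymm (Int.natCast_dvd_natCast.mp e2) (Int.natCast_dvd_natCast.mp e1)

lemma cast_sub_val (M : ℕ) [NeZero M] (z : ZMod M) (Z : ℤ) (hZ : (Z : ZMod M) = z) :
    (M : ℤ) ∣ Z - (z.val : ℤ) := by
  rw [← ZMod.intCast_zmod_eq_zero_iff_dvd]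
  push_cast
  rw [hZ]
  simp

lemma val_dvd_iff (M t : ℕ) [NeZero M] (ht : t ∣ M) (z : ZMod M) (Z : ℤ)
    (hZ : (Z : ZMod M) = z) : t ∣ z.val ↔ (t : ℤ) ∣ Z := by
  have h2 := cast_sub_val M z Z hZ
  have ht' : (t : ℤ) ∣ Z - (z.val : ℤ) := (Int.natCast_dvd_natCast.mpr ht).trans h2
  constructor
  · intro h
    have h3 : (t : ℤ) ∣ (z.val : ℤ) := Int.natCast_dvd_natCast.mpr h
    have := h3.add ht'
    simpa using this
  · intro h
    have h3 : (t : ℤ) ∣ (z.val : ℤ) := by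
      have := h.sub ht'
      simpa using this
    exact Int.natCast_dvd_natCast.mp h3

lemma val_gcd_eq (M : ℕ) [NeZero M] (z : ZMod M) (Z : ℤ) (hZ : (Z : ZMod M) = z) :
    Nat.gcd z.val M = Int.gcd Z (M : ℤ) := by
  have h2 := cast_sub_val M z Z hZ
  have l1 : ((Int.gcd Z (M : ℤ) : ℕ) : ℤ) ∣ (z.val : ℤ) := by
    have : ((Int.gcd Z (M : ℤ) : ℕ) : ℤ) ∣ Z - (Z - (z.val : ℤ)) :=
      dvd_sub (Int.gcd_dvd_left _ _) ((Int.gcd_dvd_right _ _).trans h2)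
    simpa using this
  have l2 : ((Nat.gcd z.val M : ℕ) : ℤ) ∣ Z := by
    have : ((Nat.gcd z.val M : ℕ) : ℤ) ∣ (z.val : ℤ) + (Z - (z.val : ℤ)) :=
      dvd_add (Int.natCast_dvd_natCast.mpr (Nat.gcd_dvd_left _ _))
        ((Int.natCast_dvd_natCast.mpr (Nat.gcd_dvd_right _ _)).trans h2)
    simpa using this
  refine Nat.dvd_antisymm ?_ ?_
  · exact Int.natCast_dvd_natCast.mp
      (Int.dvd_coe_gcd l2 (Int.natCast_dvd_natCast.mpr (Nat.gcd_dvd_right _ _)))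
  · have h3 := Int.dvd_coe_gcd l1 (Int.gcd_dvd_right _ _ : ((Int.gcd Z (M:ℤ) : ℕ) : ℤ) ∣ (M : ℤ))
    rw [Int.gcd_natCast_natCast] at h3
    exact Int.natCast_dvd_natCast.mp h3

theorem stmt2 (M p n : ℕ) [NeZero M] (hp : p.Prime) (hn : 1 ≤ n)
    (hpn : p ^ n ∣ M) (hpn' : ¬ p ^ (n + 1) ∣ M)
    (c c' : ZMod M) (hcc : Nat.gcd ((c - c')).val M = M / p) :
    ∀ x x' : ZMod M,
      Nat.gcd ((planeExchange M p n c c' x - planeExchange M p n c c' x')).val M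
        = Nat.gcd ((x - x')).val M := by
  intro x x'
  have hM : M ≠ 0 := NeZero.ne M
  obtain ⟨X, hX⟩ : ∃ X : ℤ, (X : ZMod M) = x := ⟨(x.val : ℤ), by simp⟩
  obtain ⟨X', hX'⟩ : ∃ Z : ℤ, (Z : ZMod M) = x' := ⟨(x'.val : ℤ), by simp⟩
  obtain ⟨C, hC⟩ : ∃ Z : ℤ, (Z : ZMod M) = c := ⟨(c.val : ℤ), by simp⟩
  obtain ⟨C', hC'⟩ : ∃ Z : ℤ, (Z : ZMod M) = c' := ⟨(c'.val : ℤ), by simp⟩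
  have hAx : (p ^ n : ℕ) ∣ (x - c).val ↔ ((p ^ n : ℕ) : ℤ) ∣ (X - C) :=
    val_dvd_iff M _ hpn _ _ (by push_cast; rw [hX, hC])
  have hBx : (p ^ n : ℕ) ∣ (x - c').val ↔ ((p ^ n : ℕ) : ℤ) ∣ (X - C') :=
    val_dvd_iff M _ hpn _ _ (by push_cast; rw [hX, hC'])
  have hAx' : (p ^ n : ℕ) ∣ (x' - c).val ↔ ((p ^ n : ℕ) : ℤ) ∣ (X' - C) :=
    val_dvd_iff M _ hpn _ _ (by push_cast; rw [hX', hC])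
  have hBx' : (p ^ n : ℕ) ∣ (x' - c').val ↔ ((p ^ n : ℕ) : ℤ) ∣ (X' - C') :=
    val_dvd_iff M _ hpn _ _ (by push_cast; rw [hX', hC'])
  have hgd : Nat.gcd ((c - c')).val M = Int.gcd (C - C') (M : ℤ) :=
    val_gcd_eq M _ _ (by push_cast; rw [hC, hC'])
  have hd : ((M / p : ℕ) : ℤ) ∣ (C - C') := by
    have h := (Int.gcd_dvd_left _ _ : ((Int.gcd (C - C') (M : ℤ) : ℕ) : ℤ) ∣ (C - C'))
    rw [← hgd, hcc] at h
    exact h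
  have hd' : ((M / p : ℕ) : ℤ) ∣ (C' - C) := by
    have := hd.neg_right
    simpa [neg_sub] using this
  have hpdvd : p ∣ M := (dvd_pow_self p (by omega : n ≠ 0)).trans hpn
  have hdn : ¬ ((p ^ n : ℕ) : ℤ) ∣ (C - C') := by
    intro h
    have h1 : ((p ^ n : ℕ) : ℤ) ∣ ((Int.gcd (C - C') (M : ℤ) : ℕ) : ℤ) :=
      Int.dvd_coe_gcd h (Int.natCast_dvd_natCast.mpr hpn)
    rw [← hgd, hcc] at h1
    have h2 : p ^ n ∣ M / p := Int.natCast_dvd_natCast.mp h1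
    apply hpn'
    calc p ^ (n + 1) = p * p ^ n := by ring
      _ ∣ p * (M / p) := Nat.mul_dvd_mul_left p h2
      _ = M := Nat.mul_div_cancel' hpdvd
  have hdn' : ¬ ((p ^ n : ℕ) : ℤ) ∣ (C' - C) := by
    intro h
    apply hdn
    have := h.neg_right
    simpa [neg_sub] using this
  have trick : ∀ {a b : ℤ}, ((p ^ n : ℕ) : ℤ) ∣ a → ¬ ((p ^ n : ℕ) : ℤ) ∣ b →
      ¬ ((p ^ n : ℕ) : ℤ) ∣ (a - b) := by
    intro a b ha hb h
    exact hb (by simpa using ha.sub h)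
  have trick2 : ∀ {a b : ℤ}, ((p ^ n : ℕ) : ℤ) ∣ b → ¬ ((p ^ n : ℕ) : ℤ) ∣ a →
      ¬ ((p ^ n : ℕ) : ℤ) ∣ (a - b) := by
    intro a b hb ha h
    exact ha (by simpa using h.add hb)
  have key := fun (Y E : ℤ) => key_gcd M p n hM hp hn hpn hpn' Y E
  unfold planeExchange
  by_cases h1 : ((p ^ n : ℕ) : ℤ) ∣ (X - C)
  · rw [if_pos (hAx.mpr h1)]
    by_cases h3 : ((p ^ n : ℕ) : ℤ) ∣ (X' - C)
    · rw [if_pos (hAx'.mpr h3),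
        show x + (c' - c) - (x' + (c' - c)) = x - x' from by ring]
    · rw [if_neg (fun hh => h3 (hAx'.mp hh))]
      by_cases h4 : ((p ^ n : ℕ) : ℤ) ∣ (X' - C')
      · -- case (A, B) : E = 2*(C' - C)
        rw [if_pos (hBx'.mpr h4)]
        rw [val_gcd_eq M _ (X + (C' - C) - (X' + (C - C')))
            (by push_cast; rw [hX, hX', hC, hC']),
          val_gcd_eq M _ (X - X') (by push_cast; rw [hX, hX']),
          show X + (C' - C) - (X' + (C - C')) = (X - X') + 2 * (C' - C) from by ring]
        refine key _ _ (hd'.mul_left 2) ?_ ?_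
        · rw [show X - X' = ((X - C) - (X' - C')) - (C' - C) from by ring]
          exact trick (h1.sub h4) hdn'
        · rw [show X - X' + 2 * (C' - C) = ((X - C) - (X' - C')) - (C - C') from by ring]
          exact trick (h1.sub h4) hdn
      · -- case (A, N) : E = C' - C
        rw [if_neg (fun hh => h4 (hBx'.mp hh))]
        rw [val_gcd_eq M _ (X + (C' - C) - X') (by push_cast; rw [hX, hX', hC, hC']),
          val_gcd_eq M _ (X - X') (by push_cast; rw [hX, hX']),
          show X + (C' - C) - X' = (X - X') + (C' - C) from by ring]
        refine key _ _ hd' ?_ ?_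
        · rw [show X - X' = (X - C) - (X' - C) from by ring]
          exact trick h1 h3
        · rw [show X - X' + (C' - C) = (X - C) - (X' - C') from by ring]
          exact trick h1 h4
  · rw [if_neg (fun hh => h1 (hAx.mp hh))]
    by_cases h2 : ((p ^ n : ℕ) : ℤ) ∣ (X - C')
    · rw [if_pos (hBx.mpr h2)]
      by_cases h3 : ((p ^ n : ℕ) : ℤ) ∣ (X' - C)
      · -- case (B, A) : E = 2*(C - C')
        rw [if_pos (hAx'.mpr h3)]
        rw [val_gcd_eq M _ (X + (C - C') - (X' + (C' - C)))
            (by push_cast; rw [hX, hX', hC, hC']),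
          val_gcd_eq M _ (X - X') (by push_cast; rw [hX, hX']),
          show X + (C - C') - (X' + (C' - C)) = (X - X') + 2 * (C - C') from by ring]
        refine key _ _ (hd.mul_left 2) ?_ ?_
        · rw [show X - X' = ((X - C') - (X' - C)) - (C - C') from by ring]
          exact trick (h2.sub h3) hdn
        · rw [show X - X' + 2 * (C - C') = ((X - C') - (X' - C)) - (C' - C) from by ring]
          exact trick (h2.sub h3) hdn'
      · rw [if_neg (fun hh => h3 (hAx'.mp hh))]
        by_cases h4 : ((p ^ n : ℕ) : ℤ) ∣ (X' - C')
        · rw [if_pos (hBx'.mpr h4),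
            show x + (c - c') - (x' + (c - c')) = x - x' from by ring]
        · -- case (B, N) : E = C - C'
          rw [if_neg (fun hh => h4 (hBx'.mp hh))]
          rw [val_gcd_eq M _ (X + (C - C') - X') (by push_cast; rw [hX, hX', hC, hC']),
            val_gcd_eq M _ (X - X') (by push_cast; rw [hX, hX']),
            show X + (C - C') - X' = (X - X') + (C - C') from by ring]
          refine key _ _ hd ?_ ?_
          · rw [show X - X' = (X - C') - (X' - C') from by ring]
            exact trick h2 h4
          · rw [show X - X' + (C - C') = (X - C') - (X' - C) from by ring]
            exact trick h2 h3
    · rw [if_neg (fun hh => h2 (hBx.mp hh))]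
      by_cases h3 : ((p ^ n : ℕ) : ℤ) ∣ (X' - C)
      · -- case (N, A) : E = C - C'
        rw [if_pos (hAx'.mpr h3)]
        rw [val_gcd_eq M _ (X - (X' + (C' - C))) (by push_cast; rw [hX, hX', hC, hC']),
          val_gcd_eq M _ (X - X') (by push_cast; rw [hX, hX']),
          show X - (X' + (C' - C)) = (X - X') + (C - C') from by ring]
        refine key _ _ hd ?_ ?_
        · rw [show X - X' = (X - C) - (X' - C) from by ring]
          exact trick2 h3 h1
        · rw [show X - X' + (C - C') = (X - C') - (X' - C) from by ring]
          exact trick2 h3 h2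
      · rw [if_neg (fun hh => h3 (hAx'.mp hh))]
        by_cases h4 : ((p ^ n : ℕ) : ℤ) ∣ (X' - C')
        · -- case (N, B) : E = C' - C
          rw [if_pos (hBx'.mpr h4)]
          rw [val_gcd_eq M _ (X - (X' + (C - C'))) (by push_cast; rw [hX, hX', hC, hC']),
            val_gcd_eq M _ (X - X') (by push_cast; rw [hX, hX']),
            show X - (X' + (C - C')) = (X - X') + (C' - C) from by ring]
          refine key _ _ hd' ?_ ?_
          · rw [show X - X' = (X - C') - (X' - C') from by ring]
            exact trick2 h4 h2
          · rw [show X - X' + (C' - C) = (X - C) - (X' - C') from by ring]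
            exact trick2 h4 h1
        · rw [if_neg (fun hh => h4 (hBx'.mp hh))]
end

section
/- Let M ∈ ℕ, R = {r ∈ ℤ_M : gcd(r, M) = 1}, and let x, x' ∈ ℤ_M with gcd(x, M) = gcd(x', M) = m. Then the set R_{x,x'} = {r ∈ R : r·x = x'} has cardinality φ(M)/φ(M/m), where φ is Euler's totient function. -/
/-!
Write `x = u * m` and `x' = u' * m` with units `u, u'` of `ℤ_M`. Since `m * c = 0` in `ℤ_M` exactly
when `c ≡ 0 mod M/m`, a unit `r` satisfies `r * x = x'` iff its image in `(ℤ_{M/m})ˣ` is that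
of `u' * u⁻¹`. So `R_{x,x'}` is a fiber of the surjective reduction `(ℤ_M)ˣ → (ℤ_{M/m})ˣ`, and every
fiber of a surjective group homomorphism has `φ(M) / φ(M/m)` elements.
-/

open Finset

theorem MonoidHom.card_fiber_of_surjective {G H : Type*} [Group G] [Fintype G] [Group H]
    [DecidableEq H] (f : G →* H) (hf : Function.Surjective f) (y : H) :
    #{g | f g = y} = Nat.card G / Nat.card H := by
  have hker : #{g | f g = 1} = Nat.card f.ker := by
    rw [← Fintype.card_subtype, ← Nat.card_eq_fintype_card]
    rfl
  have hH : Nat.card H = f.ker.index := by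
    rw [Subgroup.index_ker, MonoidHom.range_eq_top.mpr hf, Subgroup.card_top]
  have : Finite H := Finite.of_surjective f hf
  rw [card_fiber_eq_of_mem_range f (hf y) (hf 1), hker, hH, ← f.ker.card_mul_index,
    Nat.mul_div_cancel _ (hH ▸ Nat.card_pos)]

theorem card_filter_eq_card_filter_units {R : Type*} [Monoid R] [Fintype R] [Fintype Rˣ]
    (p : R → Prop) [DecidablePred p] (hp : ∀ r, p r → IsUnit r) :
    #{r | p r} = #{u : Rˣ | p u} := by
  symm
  refine card_bij (fun u _ => (u : R)) (fun u hu => ?_) (fun _ _ _ _ => Units.ext) ?_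
  · simpa using hu
  · rintro r hr
    simp only [mem_filter, mem_univ, true_and] at hr
    exact ⟨(hp r hr).unit, by simpa using hr, rfl⟩

namespace ZMod

theorem gcd_val_eq_one_iff_isUnit {M : ℕ} [NeZero M] (r : ZMod M) :
    Nat.gcd r.val M = 1 ↔ IsUnit r :=
  (natCast_zmod_val r ▸ isUnit_iff_coprime r.val M).symm

theorem natCast_mul_eq_zero_iff {M m : ℕ} [NeZero M] (hm : m ∣ M) (hm0 : m ≠ 0) (c : ZMod M) :
    (m : ZMod M) * c = 0 ↔ castHom (Nat.div_dvd_of_dvd hm) (ZMod (M / m)) c = 0 := by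
  rw [castHom_apply, cast_eq_val, natCast_eq_zero_iff, Nat.div_dvd_iff_dvd_mul hm (by omega),
    ← natCast_eq_zero_iff, Nat.cast_mul, natCast_zmod_val]

theorem exists_unit_mul_natCast_gcd {M : ℕ} [NeZero M] (a : ZMod M) :
    ∃ u : (ZMod M)ˣ, a = u * (Nat.gcd a.val M : ZMod M) := by
  obtain ⟨d, hd, u, hu, rfl⟩ := eq_unit_mul_divisor a
  refine ⟨hu.unit, ?_⟩
  have hcop : Nat.Coprime u.val M := (gcd_val_eq_one_iff_isUnit u).mpr hu
  rw [val_mul, ← Nat.gcd_rec, Nat.gcd_comm, hcop.gcd_mul_left_cancel, val_natCast, ← Nat.gcd_rec,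
    Nat.gcd_eq_right hd, hu.unit_spec]

theorem natCast_mul_eq_natCast_mul_iff {M m : ℕ} [NeZero M] (hm : m ∣ M) (hm0 : m ≠ 0)
    (a b : ZMod M) :
    (m : ZMod M) * a = m * b ↔
      castHom (Nat.div_dvd_of_dvd hm) (ZMod (M / m)) a =
        castHom (Nat.div_dvd_of_dvd hm) (ZMod (M / m)) b := by
  rw [← sub_eq_zero, ← mul_sub, natCast_mul_eq_zero_iff hm hm0, map_sub, sub_eq_zero]

theorem units_mul_eq_iff_unitsMap_eq {M m : ℕ} [NeZero M] (hm : m ∣ M) (hm0 : m ≠ 0)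
    (g u u' : (ZMod M)ˣ) :
    (g : ZMod M) * (u * m) = u' * m ↔
      unitsMap (Nat.div_dvd_of_dvd hm) g = unitsMap (Nat.div_dvd_of_dvd hm) (u' * u⁻¹) := by
  rw [← mul_assoc, mul_comm _ (m : ZMod M), mul_comm _ (m : ZMod M), ← Units.val_mul,
    natCast_mul_eq_natCast_mul_iff hm hm0, map_mul, map_inv, eq_mul_inv_iff_mul_eq, ← map_mul,
    Units.ext_iff]
  rfl

end ZMod

theorem stmt3 (M : ℕ) [NeZero M] (m : ℕ) (x x' : ZMod M)
    (hx : Nat.gcd x.val M = m) (hx' : Nat.gcd x'.val M = m) :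
    (Finset.univ.filter fun r : ZMod M => Nat.gcd r.val M = 1 ∧ r * x = x').card
      = M.totient / (M / m).totient := by
  have hmM : m ∣ M := hx ▸ Nat.gcd_dvd_right _ _
  have hm0 : m ≠ 0 := by
    rintro rfl
    exact NeZero.ne M (Nat.eq_zero_of_zero_dvd hmM)
  have hn : M / m ∣ M := Nat.div_dvd_of_dvd hmM
  have : NeZero (M / m) := ⟨(Nat.div_ne_zero_iff_of_dvd hmM).mpr ⟨NeZero.ne M, hm0⟩⟩
  obtain ⟨u, rfl⟩ := hx ▸ ZMod.exists_unit_mul_natCast_gcd x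
  obtain ⟨u', rfl⟩ := hx' ▸ ZMod.exists_unit_mul_natCast_gcd x'
  calc #{r | Nat.gcd r.val M = 1 ∧ r * ((u : ZMod M) * m) = u' * m}
      = #{g : (ZMod M)ˣ | (g : ZMod M) * ((u : ZMod M) * m) = u' * m} := by
        rw [card_filter_eq_card_filter_units _
          fun r hr => (ZMod.gcd_val_eq_one_iff_isUnit r).mp hr.1]
        simp only [(ZMod.gcd_val_eq_one_iff_isUnit _).mpr (Units.isUnit _), true_and]
    _ = #{g | ZMod.unitsMap hn g = ZMod.unitsMap hn (u' * u⁻¹)} := by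
        simp only [ZMod.units_mul_eq_iff_unitsMap_eq hmM hm0]
    _ = M.totient / (M / m).totient := by
        rw [MonoidHom.card_fiber_of_surjective _ (ZMod.unitsMap_surjective _),
          Nat.card_eq_fintype_card, Nat.card_eq_fintype_card, ZMod.card_units_eq_totient,
          ZMod.card_units_eq_totient]
end

section
/- Let M = p_1^{n_1} ⋯ p_K^{n_K} with distinct primes p_ν. For ν = 1, …, K, let x_ν, x'_ν ∈ ℤ_M with gcd(x_ν, M) = gcd(x'_ν, M) = M/p_ν^{α_ν}, where 1 ≤ α_ν ≤ n_ν. Then there exists r ∈ ℤ_M with gcd(r, M) = 1 such that r·x_ν = x'_ν for all ν = 1, …, K. -/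
/-- Auxiliary lemma: in `ZMod (q^t)`, two elements with the same `p`-power gcd
with `q^t` (strictly dividing) are associated by a unit. -/
lemma stmt5_aux (q k t : ℕ) (hq : q.Prime) (hk : k < t) (a a' : ZMod (q ^ t))
    (ha : Nat.gcd a.val (q ^ t) = q ^ k) (ha' : Nat.gcd a'.val (q ^ t) = q ^ k) :
    ∃ u : ZMod (q ^ t), IsUnit u ∧ u * a = a' := by
  haveI : NeZero (q ^ t) := ⟨pow_ne_zero _ hq.pos.ne'⟩
  obtain ⟨b, hb⟩ : q ^ k ∣ a.val := ha ▸ Nat.gcd_dvd_left _ _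
  obtain ⟨b', hb'⟩ : q ^ k ∣ a'.val := ha' ▸ Nat.gcd_dvd_left _ _
  have hnd : ∀ c : ℕ, a.val = q ^ k * c ∨ a'.val = q ^ k * c → ¬ q ∣ c := by
    rintro c hc hdvd
    obtain ⟨d, rfl⟩ := hdvd
    have h1 : q ^ (k + 1) ∣ q ^ k := by
      rcases hc with hc | hc
      · rw [← ha]
        exact Nat.dvd_gcd ⟨d, by rw [hc]; ring⟩ (pow_dvd_pow q hk)
      · rw [← ha']
        exact Nat.dvd_gcd ⟨d, by rw [hc]; ring⟩ (pow_dvd_pow q hk)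
    have := (Nat.pow_dvd_pow_iff_le_right hq.one_lt).mp h1
    omega
  have hcb : Nat.Coprime b (q ^ t) :=
    Nat.Coprime.pow_right _ (Nat.coprime_comm.mp
      ((hq.coprime_iff_not_dvd).mpr (hnd b (Or.inl hb))))
  have hcb' : Nat.Coprime b' (q ^ t) :=
    Nat.Coprime.pow_right _ (Nat.coprime_comm.mp
      ((hq.coprime_iff_not_dvd).mpr (hnd b' (Or.inr hb'))))
  have hub : IsUnit (b : ZMod (q ^ t)) := (ZMod.isUnit_iff_coprime _ _).mpr hcb
  have hub' : IsUnit (b' : ZMod (q ^ t)) := (ZMod.isUnit_iff_coprime _ _).mpr hcb'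
  have hubinv : IsUnit ((b : ZMod (q ^ t))⁻¹) :=
    IsUnit.of_mul_eq_one _ (ZMod.inv_mul_of_unit _ hub)
  refine ⟨(b' : ZMod (q ^ t)) * (b : ZMod (q ^ t))⁻¹, hub'.mul hubinv, ?_⟩
  have hav : a = ((q ^ k : ℕ) : ZMod (q ^ t)) * (b : ZMod (q ^ t)) := by
    rw [← Nat.cast_mul, ← hb, ZMod.natCast_zmod_val]
  have hav' : a' = ((q ^ k : ℕ) : ZMod (q ^ t)) * (b' : ZMod (q ^ t)) := by
    rw [← Nat.cast_mul, ← hb', ZMod.natCast_zmod_val]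
  rw [hav, hav']
  have : (b : ZMod (q ^ t))⁻¹ * (b : ZMod (q ^ t)) = 1 := ZMod.inv_mul_of_unit _ hub
  calc (b' : ZMod (q ^ t)) * (b : ZMod (q ^ t))⁻¹ * (((q ^ k : ℕ) : ZMod (q ^ t)) * b)
      = ((q ^ k : ℕ) : ZMod (q ^ t)) * (b' : ZMod (q ^ t)) * ((b : ZMod (q ^ t))⁻¹ * b) := by
        ring
    _ = ((q ^ k : ℕ) : ZMod (q ^ t)) * (b' : ZMod (q ^ t)) := by rw [this, mul_one]

theorem stmt5 (K : ℕ) (p n α : Fin K → ℕ) (M : ℕ) [NeZero M]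
    (hp : ∀ ν, (p ν).Prime) (hinj : Function.Injective p)
    (hM : M = ∏ ν, p ν ^ n ν)
    (hα₁ : ∀ ν, 1 ≤ α ν) (hα₂ : ∀ ν, α ν ≤ n ν)
    (x x' : Fin K → ZMod M)
    (hx : ∀ ν, Nat.gcd (x ν).val M = M / p ν ^ α ν)
    (hx' : ∀ ν, Nat.gcd (x' ν).val M = M / p ν ^ α ν) :
    ∃ r : ZMod M, Nat.gcd r.val M = 1 ∧ ∀ ν, r * x ν = x' ν := by
  subst hM
  have copr : Pairwise (Function.onFun Nat.Coprime fun ν => p ν ^ n ν) := by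
    intro ν μ h
    exact Nat.Coprime.pow _ _
      ((Nat.coprime_primes (hp ν) (hp μ)).mpr (fun e => h (hinj e)))
  haveI hNe : ∀ ν, NeZero (p ν ^ n ν) := fun ν => ⟨pow_ne_zero _ (hp ν).pos.ne'⟩
  -- the CRT isomorphism
  let e : ZMod (∏ ν, p ν ^ n ν) ≃+* Π ν, ZMod (p ν ^ n ν) := ZMod.prodEquivPi (fun ν => p ν ^ n ν) copr
  let F : ∀ μ, ZMod (∏ ν, p ν ^ n ν) →+* ZMod (p μ ^ n μ) :=
    fun μ => (Pi.evalRingHom _ μ).comp (e : ZMod (∏ ν, p ν ^ n ν) →+* Π ν, ZMod (p ν ^ n ν))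
  have hF : ∀ (z : ZMod (∏ ν, p ν ^ n ν)) μ, (e z) μ = F μ z := fun _ _ => rfl
  have hFnat : ∀ (m : ℕ) μ, F μ ((m : ZMod (∏ ν, p ν ^ n ν))) = (m : ZMod (p μ ^ n μ)) :=
    fun m μ => map_natCast (F μ) m
  -- decomposition of M / p ν ^ α ν
  have hR : ∀ ν, (∏ μ, p μ ^ n μ) = p ν ^ n ν * ∏ μ ∈ Finset.univ.erase ν, p μ ^ n μ :=
    fun ν => (Finset.mul_prod_erase Finset.univ _ (Finset.mem_univ ν)).symm
  have hdiv : ∀ ν, (∏ μ, p μ ^ n μ) / p ν ^ α ν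
      = p ν ^ (n ν - α ν) * ∏ μ ∈ Finset.univ.erase ν, p μ ^ n μ := by
    intro ν
    rw [hR ν, mul_comm (p ν ^ n ν), Nat.mul_div_assoc _ (pow_dvd_pow _ (hα₂ ν)),
      Nat.pow_div (hα₂ ν) (hp ν).pos, mul_comm]
  have hcoprR : ∀ ν, Nat.Coprime (∏ μ ∈ Finset.univ.erase ν, p μ ^ n μ) (p ν ^ n ν) := by
    intro ν
    apply Nat.Coprime.prod_left
    intro μ hμ
    exact copr (Finset.ne_of_mem_erase hμ)
  -- components away from ν vanish
  have hzero : ∀ (z : ZMod (∏ μ, p μ ^ n μ)) ν μ, μ ≠ ν →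
      Nat.gcd z.val (∏ μ', p μ' ^ n μ') = (∏ μ', p μ' ^ n μ') / p ν ^ α ν → F μ z = 0 := by
    intro z ν μ hμν hgcd
    have h1 : p μ ^ n μ ∣ z.val := by
      refine dvd_trans ?_ (hgcd ▸ Nat.gcd_dvd_left _ _)
      rw [hdiv ν]
      exact Dvd.dvd.mul_left
        (Finset.dvd_prod_of_mem _ (Finset.mem_erase.mpr ⟨hμν, Finset.mem_univ μ⟩)) _
    have : z = ((z.val : ℕ) : ZMod (∏ μ', p μ' ^ n μ')) := (ZMod.natCast_zmod_val z).symm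
    rw [this, hFnat, ZMod.natCast_eq_zero_iff]
    exact h1
  -- gcd of the ν-component
  have hgcdc : ∀ (z : ZMod (∏ μ, p μ ^ n μ)) ν,
      Nat.gcd z.val (∏ μ', p μ' ^ n μ') = (∏ μ', p μ' ^ n μ') / p ν ^ α ν →
      Nat.gcd (F ν z).val (p ν ^ n ν) = p ν ^ (n ν - α ν) := by
    intro z ν hgcd
    have hz : z = ((z.val : ℕ) : ZMod (∏ μ', p μ' ^ n μ')) := (ZMod.natCast_zmod_val z).symm
    rw [hz, hFnat, ZMod.val_natCast]
    have h1 : Nat.gcd (z.val % p ν ^ n ν) (p ν ^ n ν) = Nat.gcd z.val (p ν ^ n ν) :=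
      (Nat.gcd_rec _ _).symm.trans (Nat.gcd_comm _ _)
    rw [h1]
    have h2 : Nat.gcd z.val (p ν ^ n ν) = Nat.gcd (Nat.gcd z.val (∏ μ', p μ' ^ n μ')) (p ν ^ n ν) := by
      rw [Nat.gcd_assoc, Nat.gcd_eq_right ⟨_, hR ν⟩]
    rw [h2, hgcd, hdiv ν, Nat.Coprime.gcd_mul_right_cancel _ (hcoprR ν)]
    exact Nat.gcd_eq_left (pow_dvd_pow _ (Nat.sub_le _ _))
  -- per-component units
  have haux : ∀ ν, ∃ u : ZMod (p ν ^ n ν), IsUnit u ∧ u * F ν (x ν) = F ν (x' ν) := by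
    intro ν
    have hk : n ν - α ν < n ν := by have := hα₁ ν; have := hα₂ ν; omega
    exact stmt5_aux (p ν) (n ν - α ν) (n ν) (hp ν) hk _ _
      (hgcdc (x ν) ν (hx ν)) (hgcdc (x' ν) ν (hx' ν))
  choose u hu hmul using haux
  refine ⟨e.symm u, ?_, ?_⟩
  · have hru : IsUnit (e.symm u) := by
      have : IsUnit u := IsUnit.of_mul_eq_one (a := u) (fun ν => ↑(hu ν).unit⁻¹)
        (funext fun ν => (hu ν).mul_val_inv)
      exact this.map (e.symm : (Π ν, ZMod (p ν ^ n ν)) →+* ZMod (∏ ν, p ν ^ n ν))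
    obtain ⟨v, hv⟩ := hru
    rw [← hv]
    exact ZMod.val_coe_unit_coprime v
  · intro ν
    apply e.injective
    funext μ
    rw [map_mul]
    have heu : e (e.symm u) = u := e.apply_symm_apply u
    by_cases hμν : μ = ν
    · subst hμν
      simp only [Pi.mul_apply, heu, hF]
      exact hmul μ
    · simp only [Pi.mul_apply, heu, hF,
        hzero (x ν) ν μ hμν (hx ν), hzero (x' ν) ν μ hμν (hx' ν), mul_zero]
end

section
/- Suppose A ⊕ B = ℤ_M is a tiling. For x ∈ ℤ_M and m | M define 𝔸_m[x] = #{a ∈ A : gcd(x - a, M) = m} and similarly 𝔹_m[y] for B. Then for all x, y ∈ ℤ_M, the box product ⟨𝔸[x], 𝔹[y]⟩ = Σ_{m | M} (1/φ(M/m)) · 𝔸_m[x] · 𝔹_m[y] equals 1. -/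
set_option linter.unusedSectionVars false
set_option maxHeartbeats 1000000

namespace Stmt6


variable {M : ℕ} [NeZero M]

/-- number of representations of `z` as `a + b` -/
def reps (A B : Finset (ZMod M)) (z : ZMod M) : ℕ :=
  ((A ×ˢ B).filter fun ab => ab.1 + ab.2 = z).card

lemma isTiling_iff {A B : Finset (ZMod M)} :
    IsTiling M A B ↔ ∀ z, reps A B z = 1 := by
  unfold IsTiling reps
  refine forall_congr' fun z => ?_
  rw [Finset.card_eq_one]
  constructor
  · rintro ⟨ab, ⟨hA, hB, hz⟩, huniq⟩
    refine ⟨ab, ?_⟩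
    ext cd
    simp only [Finset.mem_filter, Finset.mem_product, Finset.mem_singleton]
    constructor
    · rintro ⟨⟨h1, h2⟩, h3⟩; exact huniq cd ⟨h1, h2, h3⟩
    · rintro rfl; exact ⟨⟨hA, hB⟩, hz⟩
  · rintro ⟨ab, hab⟩
    have hm : ab ∈ (A ×ˢ B).filter fun ab => ab.1 + ab.2 = z := hab ▸ Finset.mem_singleton_self ab
    simp only [Finset.mem_filter, Finset.mem_product] at hm
    refine ⟨ab, ⟨hm.1.1, hm.1.2, hm.2⟩, ?_⟩
    rintro cd ⟨h1, h2, h3⟩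
    have : cd ∈ (A ×ˢ B).filter fun ab => ab.1 + ab.2 = z := by
      simp only [Finset.mem_filter, Finset.mem_product]; exact ⟨⟨h1, h2⟩, h3⟩
    rw [hab, Finset.mem_singleton] at this; exact this

lemma card_mul_card {A B : Finset (ZMod M)} (h : ∀ z, reps A B z = 1) :
    A.card * B.card = M := by
  have := Finset.card_eq_sum_card_fiberwise
    (f := fun ab : ZMod M × ZMod M => ab.1 + ab.2) (s := A ×ˢ B) (t := Finset.univ)
    (fun x _ => Finset.mem_univ _)
  rw [Finset.card_product] at this
  rw [this]
  simp only [show ∀ z, (Finset.filter (fun a : ZMod M × ZMod M => a.1 + a.2 = z) (A ×ˢ B)).card = reps A B z from fun _ => rfl, h]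
  simp [Finset.card_univ, ZMod.card]

lemma sum_reps {A B : Finset (ZMod M)} :
    ∑ z : ZMod M, reps A B z = A.card * B.card := by
  have := Finset.card_eq_sum_card_fiberwise
    (f := fun ab : ZMod M × ZMod M => ab.1 + ab.2) (s := A ×ˢ B) (t := Finset.univ)
    (fun x _ => Finset.mem_univ _)
  rw [Finset.card_product] at this
  exact this.symm


variable {p : ℕ} [Fact p.Prime]

abbrev R (p M : ℕ) := AddMonoidAlgebra (ZMod p) (ZMod M)

noncomputable def ind (C : Finset (ZMod M)) : R p M := ∑ c ∈ C, AddMonoidAlgebra.single c 1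

lemma ind_mul_apply (C D : Finset (ZMod M)) (z : ZMod M) :
    (ind (p := p) C * ind D : R p M).coeff z
      = (reps C D z : ZMod p) := by
  unfold ind reps
  rw [Finset.sum_mul_sum]
  simp only [AddMonoidAlgebra.single_mul_single, one_mul]
  rw [← Finset.sum_product']
  have : ∀ ab : ZMod M × ZMod M,
      (AddMonoidAlgebra.single (ab.1 + ab.2) (1 : ZMod p)).coeff z = if ab.1 + ab.2 = z then 1 else 0 :=
    fun ab => Finsupp.single_apply
  calc (∑ ab ∈ C ×ˢ D, AddMonoidAlgebra.single (ab.1 + ab.2) (1:ZMod p)).coeff z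
      = ∑ ab ∈ C ×ˢ D, (AddMonoidAlgebra.single (ab.1 + ab.2) (1:ZMod p)).coeff z := by
        rw [AddMonoidAlgebra.coeff_sum, Finset.sum_apply']
    _ = ∑ ab ∈ C ×ˢ D, if ab.1 + ab.2 = z then (1:ZMod p) else 0 := by
        exact Finset.sum_congr rfl fun ab _ => this ab
    _ = _ := by rw [Finset.sum_boole]

noncomputable def delta : R p M := ind Finset.univ

lemma delta_apply (z : ZMod M) : (delta (p := p) (M := M)).coeff z = 1 := by
  unfold delta ind
  rw [AddMonoidAlgebra.coeff_sum, Finset.sum_apply']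
  simp [Finsupp.single_apply]

lemma ind_mul_delta (C : Finset (ZMod M)) :
    (ind C * delta : R p M) = (C.card : ZMod p) • delta := by
  unfold delta ind
  rw [Finset.sum_mul_sum]
  simp only [AddMonoidAlgebra.single_mul_single, one_mul]
  have : ∀ c ∈ C, ∑ z : ZMod M, AddMonoidAlgebra.single (c + z) (1 : ZMod p)
      = ∑ z : ZMod M, AddMonoidAlgebra.single z (1 : ZMod p) := by
    intro c _
    exact Fintype.sum_equiv (Equiv.addLeft c) _ _ (fun z => rfl)
  rw [Finset.sum_congr rfl this, Finset.sum_const]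
  simp [Nat.cast_smul_eq_nsmul]

lemma ind_pow_mul_delta (C : Finset (ZMod M)) (n : ℕ) :
    ((ind C) ^ n * delta : R p M) = ((C.card : ZMod p) ^ n) • delta := by
  induction n with
  | zero => simp
  | succ n ih =>
    rw [pow_succ, mul_assoc, ind_mul_delta, mul_smul_comm, ih, smul_smul, pow_succ, mul_comm]






noncomputable instance : CharP (R p M) p :=
  charP_of_injective_algebraMap' (ZMod p) p

lemma ind_pow_char (C : Finset (ZMod M)) :
    (ind C : R p M) ^ p = ∑ c ∈ C, AddMonoidAlgebra.single ((p : ZMod M) * c) 1 := by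
  haveI : ExpChar (R p M) p := ExpChar.prime Fact.out
  unfold ind
  rw [sum_pow_char]
  refine Finset.sum_congr rfl fun c _ => ?_
  rw [AddMonoidAlgebra.single_pow, one_pow, nsmul_eq_mul]

lemma dilate_prime (hpM : ¬ p ∣ M) (A B : Finset (ZMod M)) (h : ∀ z, reps A B z = 1) :
    ∀ z, reps (A.image fun a => (p : ZMod M) * a) B z = 1 := by
  have hcop : p.Coprime M := (Nat.Prime.coprime_iff_not_dvd Fact.out).mpr hpM
  have hu : IsUnit (p : ZMod M) := (ZMod.isUnit_iff_coprime p M).mpr hcop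
  have hinj : Function.Injective fun a : ZMod M => (p : ZMod M) * a := by
    intro a b hab
    exact hu.mul_left_cancel hab
  have hABδ : (ind A * ind B : R p M) = delta :=
    AddMonoidAlgebra.ext <| Finsupp.ext fun z => by rw [ind_mul_apply, h z, delta_apply, Nat.cast_one]
  have himg : (ind (A.image fun a => (p : ZMod M) * a) : R p M) = (ind A) ^ p := by
    rw [ind_pow_char]
    unfold ind
    rw [Finset.sum_image (fun a _ b _ hab => hinj hab)]
  have hA0 : (A.card : ZMod p) ≠ 0 := by
    rw [Ne, ZMod.natCast_eq_zero_iff]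
    intro hdvd
    exact hpM (hdvd.trans ⟨B.card, (card_mul_card h).symm⟩)
  have hkey : ∀ z, ((reps (A.image fun a => (p : ZMod M) * a) B z : ZMod p)) = 1 := by
    intro z
    rw [← ind_mul_apply, himg]
    have hp1 : p - 1 + 1 = p := Nat.succ_pred_eq_of_pos (Fact.out : p.Prime).pos
    have : ((ind A) ^ p * ind B : R p M) = delta := by
      calc ((ind A) ^ p * ind B : R p M) = (ind A) ^ (p-1) * (ind A * ind B) := by
            rw [← mul_assoc, ← pow_succ, hp1]
        _ = (ind A) ^ (p-1) * delta := by rw [hABδ]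
        _ = ((A.card : ZMod p) ^ (p-1)) • delta := ind_pow_mul_delta _ _
        _ = delta := by rw [ZMod.pow_card_sub_one_eq_one hA0, one_smul]
    rw [this, delta_apply]
  have hpos : ∀ z, 1 ≤ reps (A.image fun a => (p : ZMod M) * a) B z := by
    intro z
    rcases Nat.eq_zero_or_pos (reps (A.image fun a => (p : ZMod M) * a) B z) with h0 | h1
    · exfalso; have := hkey z; rw [h0] at this; simp at this
    · exact h1
  have hsum : ∑ z : ZMod M, reps (A.image fun a => (p : ZMod M) * a) B z = M := by
    rw [sum_reps, Finset.card_image_of_injective A hinj, card_mul_card h]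
  intro z
  by_contra hne
  have h2 : 1 < reps (A.image fun a => (p : ZMod M) * a) B z :=
    lt_of_le_of_ne (hpos z) (Ne.symm hne)
  have : ∑ _z : ZMod M, 1 < ∑ z : ZMod M, reps (A.image fun a => (p : ZMod M) * a) B z :=
    Finset.sum_lt_sum (fun i _ => hpos i) ⟨z, Finset.mem_univ z, h2⟩
  rw [hsum] at this
  simp [Finset.card_univ, ZMod.card] at this





lemma dilate (A B : Finset (ZMod M)) (h : ∀ z, reps A B z = 1) :
    ∀ r : ℕ, r.Coprime M → ∀ z, reps (A.image fun a => (r : ZMod M) * a) B z = 1 := by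
  intro r
  induction r using Nat.strong_induction_on with
  | _ r ih =>
    intro hr z
    rcases eq_or_ne r 1 with rfl | hr1
    · have : (fun a : ZMod M => ((1 : ℕ) : ZMod M) * a) = id := by
        funext a; simp
      rw [this, Finset.image_id]; exact h z
    rcases eq_or_ne r 0 with rfl | hr0
    · have hM : M = 1 := by simpa [Nat.coprime_zero_left] using hr
      subst hM
      have : (fun a : ZMod 1 => ((0 : ℕ) : ZMod 1) * a) = id := by
        funext a; exact Subsingleton.elim _ _
      rw [this, Finset.image_id]; exact h z
    · set p := r.minFac with hp
      have hprime : p.Prime := Nat.minFac_prime hr1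
      haveI : Fact p.Prime := ⟨hprime⟩
      set s := r / p with hs
      have hps : p * s = r := Nat.mul_div_cancel' (Nat.minFac_dvd r)
      have hslt : s < r := Nat.div_lt_self (Nat.pos_of_ne_zero hr0) hprime.one_lt
      have hscop : s.Coprime M := Nat.Coprime.coprime_dvd_left (Nat.div_dvd_of_dvd (Nat.minFac_dvd r)) hr
      have hpM : ¬ p ∣ M :=
        (Nat.Prime.coprime_iff_not_dvd hprime).mp
          (Nat.Coprime.coprime_dvd_left (Nat.minFac_dvd r) hr)
      have hIH := ih s hslt hscop
      have := dilate_prime hpM (A.image fun a => (s : ZMod M) * a) B hIH z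
      rwa [Finset.image_image, show ((fun a : ZMod M => (p : ZMod M) * a) ∘ fun a => (s : ZMod M) * a)
          = fun a : ZMod M => (r : ZMod M) * a by
        funext a; simp only [Function.comp_apply, ← mul_assoc, ← Nat.cast_mul, hps]] at this

lemma gcd_mod_left (x : ℕ) : Nat.gcd (x % M) M = Nat.gcd x M := by
  conv_rhs => rw [Nat.gcd_comm, Nat.gcd_rec]

lemma gcd_unit_mul (r : (ZMod M)ˣ) (u : ZMod M) :
    Nat.gcd ((r : ZMod M) * u).val M = Nat.gcd u.val M := by
  rw [ZMod.val_mul, gcd_mod_left,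
    Nat.Coprime.gcd_mul_left_cancel u.val (ZMod.val_coe_unit_coprime r)]

lemma gcd_neg (u : ZMod M) : Nat.gcd (-u).val M = Nat.gcd u.val M := by
  have : -u = ((-1 : (ZMod M)ˣ) : ZMod M) * u := by simp
  rw [this, gcd_unit_mul]



lemma exists_unit_mul {u v : ZMod M} (hg : Nat.gcd u.val M = Nat.gcd v.val M) :
    ∃ r : (ZMod M)ˣ, (r : ZMod M) * u = v := by
  set m := Nat.gcd u.val M with hm
  have hM0 : M ≠ 0 := NeZero.ne M
  have hm0 : 0 < m := Nat.gcd_pos_of_pos_right _ (Nat.pos_of_ne_zero hM0)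
  have hmM : m ∣ M := Nat.gcd_dvd_right _ _
  set d := M / m with hd
  have hMdm : M = m * d := (Nat.mul_div_cancel' hmM).symm
  have hd0 : d ≠ 0 := by
    intro h0; rw [h0, mul_zero] at hMdm; exact hM0 hMdm
  haveI : NeZero d := ⟨hd0⟩
  obtain ⟨u₁, hu₁⟩ : m ∣ u.val := Nat.gcd_dvd_left _ _
  obtain ⟨v₁, hv₁⟩ : m ∣ v.val := hg ▸ Nat.gcd_dvd_left _ _
  have hu₁d : u₁.Coprime d := by
    have h1 : m * Nat.gcd u₁ d = m * 1 := by
      rw [← Nat.gcd_mul_left, ← hu₁, ← hMdm, mul_one]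
    exact Nat.eq_of_mul_eq_mul_left hm0 h1
  have hv₁d : v₁.Coprime d := by
    have h1 : m * Nat.gcd v₁ d = m * 1 := by
      rw [← Nat.gcd_mul_left, ← hv₁, ← hMdm, mul_one]; exact hg.symm
    exact Nat.eq_of_mul_eq_mul_left hm0 h1
  have hdM : d ∣ M := Nat.div_dvd_of_dvd hmM
  obtain ⟨r, hr⟩ := ZMod.unitsMap_surjective hdM
    ((ZMod.unitOfCoprime v₁ hv₁d) * (ZMod.unitOfCoprime u₁ hu₁d)⁻¹)
  refine ⟨r, ?_⟩
  set t := (r : ZMod M).val with ht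
  have hrd : ((t * u₁ : ℕ) : ZMod d) = ((v₁ : ℕ) : ZMod d) := by
    have h0 : (ZMod.castHom hdM (ZMod d)) (r : ZMod M)
        = ((ZMod.unitOfCoprime v₁ hv₁d : (ZMod d)ˣ) : ZMod d)
          * (((ZMod.unitOfCoprime u₁ hu₁d)⁻¹ : (ZMod d)ˣ) : ZMod d) := by
      have h1 := congrArg Units.val hr
      simpa [ZMod.unitsMap_def] using h1
    have h2 : (ZMod.castHom hdM (ZMod d)) (r : ZMod M) * ((u₁ : ℕ) : ZMod d) = (v₁ : ZMod d) := by
      rw [h0, show ((u₁ : ℕ) : ZMod d) = ((ZMod.unitOfCoprime u₁ hu₁d : (ZMod d)ˣ) : ZMod d) from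
        (ZMod.coe_unitOfCoprime u₁ hu₁d).symm, Units.inv_mul_cancel_right,
        ZMod.coe_unitOfCoprime]
    have h3 : (ZMod.castHom hdM (ZMod d)) (r : ZMod M) = ((t : ℕ) : ZMod d) := by
      rw [ZMod.castHom_apply, ht, ZMod.natCast_val]
    rw [h3] at h2
    push_cast
    exact h2
  have hmodd : (t * u₁) ≡ v₁ [MOD d] := (ZMod.natCast_eq_natCast_iff _ _ _).mp hrd
  have hmodM : (t * u.val) ≡ v.val [MOD M] := by
    have h4 : m * (t * u₁) ≡ m * v₁ [MOD m * d] := hmodd.mul_left' m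
    rw [← hMdm] at h4
    rw [hu₁, hv₁]
    calc t * (m * u₁) = m * (t * u₁) := by ring
      _ ≡ m * v₁ [MOD M] := h4
  have := (ZMod.natCast_eq_natCast_iff _ _ _).mpr hmodM
  push_cast at this
  simp only [ZMod.natCast_zmod_val] at this
  rwa [ht, ZMod.natCast_zmod_val] at this



/-- number of units carrying `u` to `v` -/
def ucnt (u v : ZMod M) : ℕ :=
  (Finset.univ.filter fun r : (ZMod M)ˣ => (r : ZMod M) * u = v).card

lemma ucnt_eq_zero {u v : ZMod M} (hne : Nat.gcd u.val M ≠ Nat.gcd v.val M) :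
    ucnt u v = 0 := by
  rw [ucnt, Finset.card_eq_zero, Finset.filter_eq_empty_iff]
  intro r _ hr
  exact hne (by rw [← hr, gcd_unit_mul])

lemma unit_transfer {r₀ r₁ r : (ZMod M)ˣ} {u v w : ZMod M}
    (h : (r : ZMod M) * u = v) (h0 : (r₀ : ZMod M) * u = v) (h1 : (r₁ : ZMod M) * u = w) :
    ((r₁ * r₀⁻¹ * r : (ZMod M)ˣ) : ZMod M) * u = w := by
  have hu : ((r₀⁻¹ : (ZMod M)ˣ) : ZMod M) * v = u := by
    rw [← h0, ← mul_assoc]; simp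
  calc ((r₁ * r₀⁻¹ * r : (ZMod M)ˣ) : ZMod M) * u
      = (r₁ : ZMod M) * (((r₀⁻¹ : (ZMod M)ˣ) : ZMod M) * ((r : ZMod M) * u)) := by
        rw [Units.val_mul, Units.val_mul]; ring
    _ = (r₁ : ZMod M) * u := by rw [h, hu]
    _ = w := h1

lemma ucnt_congr (u : ZMod M) {v w : ZMod M}
    (hv : Nat.gcd u.val M = Nat.gcd v.val M) (hw : Nat.gcd u.val M = Nat.gcd w.val M) :
    ucnt u v = ucnt u w := by
  obtain ⟨r₀, hr₀⟩ := exists_unit_mul hv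
  obtain ⟨r₁, hr₁⟩ := exists_unit_mul hw
  unfold ucnt
  apply Finset.card_bij' (fun r _ => r₁ * r₀⁻¹ * r) (fun r _ => r₀ * r₁⁻¹ * r)
  · intro r hr
    simp only [Finset.mem_filter, Finset.mem_univ, true_and] at hr ⊢
    exact unit_transfer hr hr₀ hr₁
  · intro r hr
    simp only [Finset.mem_filter, Finset.mem_univ, true_and] at hr ⊢
    exact unit_transfer hr hr₁ hr₀
  · intro r _; group
  · intro r _; group

lemma card_gcd_fiber (m : ℕ) (hm : m ∣ M) :
    (Finset.univ.filter fun w : ZMod M => Nat.gcd w.val M = m).card = (M / m).totient := by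
  rw [Nat.totient_div_of_dvd hm]
  apply Finset.card_bij (fun w _ => w.val)
  · intro w hw
    simp only [Finset.mem_filter, Finset.mem_univ, true_and] at hw
    simp only [Finset.mem_filter, Finset.mem_range]
    exact ⟨ZMod.val_lt w, by rw [Nat.gcd_comm]; exact hw⟩
  · intro a _ b _ hab
    exact ZMod.val_injective M hab
  · intro k hk
    simp only [Finset.mem_filter, Finset.mem_range] at hk
    refine ⟨(k : ZMod M), ?_, by rw [ZMod.val_cast_of_lt hk.1]⟩
    simp only [Finset.mem_filter, Finset.mem_univ, true_and]
    rw [ZMod.val_cast_of_lt hk.1, Nat.gcd_comm]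
    exact hk.2

lemma ucnt_mul_totient {u v : ZMod M} (hg : Nat.gcd u.val M = Nat.gcd v.val M) :
    ucnt u v * (M / Nat.gcd u.val M).totient = M.totient := by
  set m := Nat.gcd u.val M with hm
  have hmM : m ∣ M := Nat.gcd_dvd_right _ _
  have hpart : (Finset.univ : Finset (ZMod M)ˣ).card
      = ∑ w ∈ Finset.univ.filter (fun w : ZMod M => Nat.gcd w.val M = m),
          (Finset.univ.filter fun r : (ZMod M)ˣ => (r : ZMod M) * u = w).card :=
    Finset.card_eq_sum_card_fiberwise fun r _ => by
      simp only [Finset.mem_coe, Finset.mem_filter, Finset.mem_univ, true_and]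
      rw [gcd_unit_mul]
  have hconst : ∀ w ∈ Finset.univ.filter (fun w : ZMod M => Nat.gcd w.val M = m),
      (Finset.univ.filter fun r : (ZMod M)ˣ => (r : ZMod M) * u = w).card = ucnt u v := by
    intro w hw
    simp only [Finset.mem_filter, Finset.mem_univ, true_and] at hw
    exact ucnt_congr u hw.symm hg
  rw [Finset.sum_congr rfl hconst, Finset.sum_const, smul_eq_mul, card_gcd_fiber m hmM] at hpart
  rw [Finset.card_univ, ZMod.card_units_eq_totient] at hpart
  rw [mul_comm]
  exact hpart.symm




lemma reps_image (f : ZMod M → ZMod M) (hf : Function.Injective f)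
    (A B : Finset (ZMod M)) (z : ZMod M) :
    reps (A.image f) B z = ((A ×ˢ B).filter fun ab => f ab.1 + ab.2 = z).card := by
  unfold reps
  symm
  apply Finset.card_bij (fun ab _ => (f ab.1, ab.2))
  · intro ab hab
    simp only [Finset.mem_filter, Finset.mem_product, Finset.mem_image] at hab ⊢
    exact ⟨⟨⟨ab.1, hab.1.1, rfl⟩, hab.1.2⟩, hab.2⟩
  · intro ab _ cd _ hac
    rw [Prod.ext_iff] at hac ⊢
    exact ⟨hf hac.1, hac.2⟩
  · intro cd hcd
    simp only [Finset.mem_filter, Finset.mem_product, Finset.mem_image] at hcd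
    obtain ⟨⟨⟨a, ha, hfa⟩, hb⟩, hz⟩ := hcd
    refine ⟨(a, cd.2), ?_, ?_⟩
    · simp only [Finset.mem_filter, Finset.mem_product]
      exact ⟨⟨ha, hb⟩, by rw [hfa]; exact hz⟩
    · exact Prod.ext hfa rfl

lemma totient_ne_zero' (m : ℕ) (hm : m ∣ M) : ((M / m).totient : ℚ) ≠ 0 := by
  have h1 : 0 < M / m := Nat.div_pos (Nat.le_of_dvd (Nat.pos_of_ne_zero (NeZero.ne M)) hm)
    (Nat.pos_of_ne_zero (by rintro rfl; exact NeZero.ne M (Nat.eq_zero_of_zero_dvd hm)))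
  exact_mod_cast (Nat.totient_pos.mpr h1).ne'

lemma ucnt_cast (u v : ZMod M) :
    (ucnt u (-v) : ℚ) = if Nat.gcd v.val M = Nat.gcd u.val M
      then (M.totient : ℚ) / ((M / Nat.gcd u.val M).totient : ℚ) else 0 := by
  split_ifs with hgv
  · have hg : Nat.gcd u.val M = Nat.gcd (-v).val M := by rw [gcd_neg]; exact hgv.symm
    have := ucnt_mul_totient hg
    have hne := totient_ne_zero' (Nat.gcd u.val M) (Nat.gcd_dvd_right _ _)
    rw [eq_div_iff hne]
    exact_mod_cast this
  · have h0 : ucnt u (-v) = 0 :=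
      ucnt_eq_zero (by intro hc; rw [gcd_neg] at hc; exact hgv hc.symm)
    rw [h0, Nat.cast_zero]

theorem stmt6' (A B : Finset (ZMod M)) (h : IsTiling M A B) (x y : ZMod M) :
    ∑ m ∈ M.divisors,
      ((A.filter fun a => Nat.gcd ((x - a : ZMod M)).val M = m).card : ℚ)
        * ((B.filter fun b => Nat.gcd ((y - b : ZMod M)).val M = m).card : ℚ)
        / ((M / m).totient : ℚ) = 1 := by
  classical
  have hreps : ∀ z, reps A B z = 1 := isTiling_iff.mp h
  -- for each unit r, exactly one pair (a,b) with r*a+b = r*x+y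
  have hunit : ∀ r : (ZMod M)ˣ,
      ((A ×ˢ B).filter fun ab =>
        (r : ZMod M) * ab.1 + ab.2 = (r : ZMod M) * x + y).card = 1 := by
    intro r
    have hcop := ZMod.val_coe_unit_coprime r
    have hinj : Function.Injective fun a : ZMod M => (r : ZMod M) * a := fun a b hab => by
      simpa using congrArg (fun t => ((r⁻¹ : (ZMod M)ˣ) : ZMod M) * t) hab
    have hd := dilate A B hreps ((r : ZMod M)).val hcop ((r : ZMod M) * x + y)
    simp only [ZMod.natCast_zmod_val] at hd
    rwa [reps_image _ hinj] at hd
  -- total count over all units, reorganized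
  have hcount : (M.totient : ℚ) = ∑ ab ∈ A ×ˢ B, (ucnt (x - ab.1) (ab.2 - y) : ℚ) := by
    have h1 : M.totient = ∑ r : (ZMod M)ˣ,
        ((A ×ˢ B).filter fun ab =>
          (r : ZMod M) * ab.1 + ab.2 = (r : ZMod M) * x + y).card := by
      simp only [hunit]
      simp [ZMod.card_units_eq_totient]
    have h2 : ∀ (r : (ZMod M)ˣ) (ab : ZMod M × ZMod M),
        ((r : ZMod M) * ab.1 + ab.2 = (r : ZMod M) * x + y)
          ↔ ((r : ZMod M) * (x - ab.1) = ab.2 - y) := by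
      intro r ab
      constructor <;> intro hh <;> linear_combination -hh
    have h3 : M.totient = ∑ ab ∈ A ×ˢ B, ucnt (x - ab.1) (ab.2 - y) := by
      rw [h1]
      simp only [Finset.card_filter]
      rw [Finset.sum_comm]
      unfold ucnt
      simp only [Finset.card_filter]
      refine Finset.sum_congr rfl fun ab _ => Finset.sum_congr rfl fun r _ => ?_
      simp only [h2 r ab]
    exact_mod_cast h3
  -- evaluate each term, and sum in stages
  have hterm : ∀ a b : ZMod M,
      (ucnt (x - a) (b - y) : ℚ)
        = if Nat.gcd (y - b).val M = Nat.gcd (x - a).val M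
          then (M.totient : ℚ) / ((M / Nat.gcd (x - a).val M).totient : ℚ) else 0 := by
    intro a b
    rw [show b - y = -(y - b) by ring, ucnt_cast]
  have hstage1 : (M.totient : ℚ) = ∑ a ∈ A,
      ((B.filter fun b => Nat.gcd (y - b).val M = Nat.gcd (x - a).val M).card : ℚ)
        * ((M.totient : ℚ) / ((M / Nat.gcd (x - a).val M).totient : ℚ)) := by
    refine hcount.trans ?_
    rw [Finset.sum_product]
    refine Finset.sum_congr rfl fun a _ => ?_
    dsimp only
    rw [Finset.sum_congr rfl fun b _ => hterm a b]
    rw [← Finset.sum_filter, Finset.sum_const, nsmul_eq_mul]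
  -- fiberwise over divisors
  have hmaps : ∀ a ∈ A, Nat.gcd (x - a).val M ∈ M.divisors := by
    intro a _
    rw [Nat.mem_divisors]
    exact ⟨Nat.gcd_dvd_right _ _, NeZero.ne M⟩
  have hstage2 : (M.totient : ℚ) = ∑ m ∈ M.divisors,
      ((A.filter fun a => Nat.gcd ((x - a : ZMod M)).val M = m).card : ℚ)
        * (((B.filter fun b => Nat.gcd ((y - b : ZMod M)).val M = m).card : ℚ)
          * ((M.totient : ℚ) / ((M / m).totient : ℚ))) := by
    refine hstage1.trans ?_
    rw [← Finset.sum_fiberwise_of_maps_to hmaps]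
    refine Finset.sum_congr rfl fun m hm => ?_
    rw [Finset.sum_congr rfl (g := fun _ =>
        ((B.filter fun b => Nat.gcd (y - b).val M = m).card : ℚ)
          * ((M.totient : ℚ) / ((M / m).totient : ℚ)))
      (fun a ha => by
        simp only [Finset.mem_filter] at ha
        rw [ha.2]), Finset.sum_const, nsmul_eq_mul]
  -- conclude
  have hφ : (M.totient : ℚ) ≠ 0 := by
    exact_mod_cast (Nat.totient_pos.mpr (Nat.pos_of_ne_zero (NeZero.ne M))).ne'
  have hfinal : (∑ m ∈ M.divisors,
      ((A.filter fun a => Nat.gcd ((x - a : ZMod M)).val M = m).card : ℚ)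
        * ((B.filter fun b => Nat.gcd ((y - b : ZMod M)).val M = m).card : ℚ)
        / ((M / m).totient : ℚ)) * (M.totient : ℚ)
      = ∑ m ∈ M.divisors,
      ((A.filter fun a => Nat.gcd ((x - a : ZMod M)).val M = m).card : ℚ)
        * (((B.filter fun b => Nat.gcd ((y - b : ZMod M)).val M = m).card : ℚ)
          * ((M.totient : ℚ) / ((M / m).totient : ℚ))) := by
    rw [Finset.sum_mul]
    refine Finset.sum_congr rfl fun m hm => ?_
    have hne := totient_ne_zero' m (Nat.dvd_of_mem_divisors hm)
    ring
  exact mul_right_cancel₀ hφ (by rw [hfinal, ← hstage2, one_mul])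

end Stmt6

theorem stmt6 (M : ℕ) [NeZero M] (A B : Finset (ZMod M)) (h : IsTiling M A B)
    (x y : ZMod M) :
    ∑ m ∈ M.divisors,
      ((A.filter fun a => Nat.gcd ((x - a : ZMod M)).val M = m).card : ℚ)
        * ((B.filter fun b => Nat.gcd ((y - b : ZMod M)).val M = m).card : ℚ)
        / ((M / m).totient : ℚ) = 1 :=
  Stmt6.stmt6' A B h x y
end

section
/- Let A ⊕ B = ℤ_M be a tiling, p a prime divisor of M with p^n ‖ M, and let Z = x * F_p = {x + νM/p : ν = 0, …, p−1} be a fiber in the p direction. Define Σ_A(Z) = {a ∈ A : a + b ∈ Z for some b ∈ B} and Σ_B(Z) similarly. Then either (i) p^n | a − a' for all a, a' ∈ Σ_A(Z) and p^{n−1} ‖ b − b' for all distinct b, b' ∈ Σ_B(Z), or (ii) the same holds with the roles of A and B interchanged. -/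
/-- The fiber `x * F_p = {x + ν·(M/p) : 0 ≤ ν < p}` in the `p` direction. -/
def fiberSet (M p : ℕ) (x : ZMod M) : Set (ZMod M) :=
  {z | ∃ ν < p, z = x + ((ν * (M / p) : ℕ) : ZMod M)}

/-- `Σ_A(Z)`: the elements of `A` used in representations of elements of `Z`
in the tiling `A ⊕ B`. -/
def SigmaSet (M : ℕ) (A B : Finset (ZMod M)) (Z : Set (ZMod M)) : Set (ZMod M) :=
  {a | a ∈ A ∧ ∃ b ∈ B, a + b ∈ Z}

/-- `Z` splits with parity `(A, B)`: `p^n` divides all differences of elements of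
`Σ_A(Z)`, and `p^{n-1}` exactly divides differences of distinct elements of `Σ_B(Z)`
(divisibility of differences measured on canonical representatives in `ZMod M`). -/
def SplitsParity (M p n : ℕ) (A B : Finset (ZMod M)) (Z : Set (ZMod M)) : Prop :=
  (∀ a ∈ SigmaSet M A B Z, ∀ a' ∈ SigmaSet M A B Z, (p ^ n : ℕ) ∣ ((a - a' : ZMod M)).val) ∧
  (∀ b ∈ SigmaSet M B A Z, ∀ b' ∈ SigmaSet M B A Z, b ≠ b' →
    (p ^ (n - 1) : ℕ) ∣ ((b - b' : ZMod M)).val ∧ ¬ (p ^ n : ℕ) ∣ ((b - b' : ZMod M)).val)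

namespace Stmt8Aux

/-- Counting characterization of tilings. -/
lemma isTiling_iff_card {M : ℕ} (A B : Finset (ZMod M)) :
    IsTiling M A B ↔ ∀ w : ZMod M,
      ((A ×ˢ B).filter (fun ab => ab.1 + ab.2 = w)).card = 1 := by
  constructor
  · intro h w
    obtain ⟨ab, ⟨ha, hb, hs⟩, huniq⟩ := h w
    rw [Finset.card_eq_one]
    refine ⟨ab, ?_⟩
    ext cd
    simp only [Finset.mem_filter, Finset.mem_product, Finset.mem_singleton]
    constructor
    · rintro ⟨⟨h1, h2⟩, h3⟩; exact huniq cd ⟨h1, h2, h3⟩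
    · rintro rfl; exact ⟨⟨ha, hb⟩, hs⟩
  · intro h w
    obtain ⟨ab, hab⟩ := Finset.card_eq_one.mp (h w)
    have hmem : ab ∈ (A ×ˢ B).filter (fun ab => ab.1 + ab.2 = w) := by
      rw [hab]; exact Finset.mem_singleton_self ab
    rw [Finset.mem_filter, Finset.mem_product] at hmem
    refine ⟨ab, ⟨hmem.1.1, hmem.1.2, hmem.2⟩, ?_⟩
    intro cd hcd
    have hcd' : cd ∈ (A ×ˢ B).filter (fun ab => ab.1 + ab.2 = w) := by
      rw [Finset.mem_filter, Finset.mem_product]; exact ⟨⟨hcd.1, hcd.2.1⟩, hcd.2.2⟩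
    rw [hab, Finset.mem_singleton] at hcd'; exact hcd'

lemma card_mul_card {M : ℕ} [NeZero M] (A B : Finset (ZMod M)) (h : IsTiling M A B) :
    A.card * B.card = M := by
  have h1 := (isTiling_iff_card A B).mp h
  have h2 : (A ×ˢ B).card =
      ∑ w ∈ (Finset.univ : Finset (ZMod M)),
        ((A ×ˢ B).filter (fun ab => ab.1 + ab.2 = w)).card :=
    Finset.card_eq_sum_card_fiberwise (fun x _ => Finset.mem_univ _)
  simp only [h1, Finset.sum_const, Finset.card_univ, smul_eq_mul, mul_one] at h2
  rw [Finset.card_product] at h2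
  rw [h2, ZMod.card]

/-- Tijdeman's dilation step for a prime `q` coprime to `M`. -/
lemma dilate_prime {M : ℕ} [NeZero M] (q : ℕ) (hq : q.Prime) (hqM : Nat.Coprime q M)
    (A B : Finset (ZMod M)) (h : IsTiling M A B) :
    IsTiling M (A.image fun a => (q : ZMod M) * a) B := by
  haveI : Fact q.Prime := ⟨hq⟩
  set R := AddMonoidAlgebra (ZMod q) (ZMod M) with hR
  haveI : CharP R q := by
    constructor
    intro k
    rw [AddMonoidAlgebra.natCast_def, AddMonoidAlgebra.single_eq_zero]
    exact ZMod.natCast_eq_zero_iff k q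
  haveI : ExpChar R q := ExpChar.prime hq
  set el : Finset (ZMod M) → R := fun S => ∑ a ∈ S, AddMonoidAlgebra.single a 1 with hel
  have el_mul : ∀ S T : Finset (ZMod M), el S * el T
      = ∑ ab ∈ S ×ˢ T, AddMonoidAlgebra.single (ab.1 + ab.2) (1 : ZMod q) := by
    intro S T
    rw [hel]
    rw [Finset.sum_mul_sum, Finset.sum_product]
    refine Finset.sum_congr rfl fun a _ => Finset.sum_congr rfl fun b _ => ?_
    rw [AddMonoidAlgebra.single_mul_single, one_mul]
  have key : ∀ S T : Finset (ZMod M),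
      (∀ w, ((S ×ˢ T).filter (fun ab => ab.1 + ab.2 = w)).card = 1) →
      el S * el T = el Finset.univ := by
    intro S T hc
    rw [el_mul]
    rw [← Finset.sum_fiberwise_of_maps_to (t := Finset.univ)
      (g := fun ab : ZMod M × ZMod M => ab.1 + ab.2) (fun x _ => Finset.mem_univ _)]
    refine Finset.sum_congr rfl fun w _ => ?_
    rw [Finset.sum_congr rfl
      (fun ab hab => by rw [(Finset.mem_filter.mp hab).2] :
        ∀ ab ∈ (S ×ˢ T).filter (fun ab => ab.1 + ab.2 = w),
          AddMonoidAlgebra.single (ab.1 + ab.2) (1 : ZMod q)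
            = AddMonoidAlgebra.single w 1),
      Finset.sum_const, hc w, one_smul]
  have hAB : el A * el B = el Finset.univ := key A B ((isTiling_iff_card A B).mp h)
  have hinj : Function.Injective (fun a : ZMod M => (q : ZMod M) * a) := by
    have hu : IsUnit (q : ZMod M) := by
      rw [← ZMod.coe_unitOfCoprime q hqM]; exact Units.isUnit _
    exact hu.mul_right_injective
  have himg : el (A.image fun a => (q : ZMod M) * a)
      = ∑ a ∈ A, AddMonoidAlgebra.single ((q : ZMod M) * a) 1 := by
    rw [hel]
    exact Finset.sum_image (fun a _ b _ hab => hinj hab)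
  have hfrob : el (A.image fun a => (q : ZMod M) * a) = el A ^ q := by
    rw [himg, hel, sum_pow_char]
    refine Finset.sum_congr rfl fun a _ => ?_
    rw [AddMonoidAlgebra.single_pow, one_pow, nsmul_eq_mul]
  have hJ : ∀ c : ZMod M,
      AddMonoidAlgebra.single c (1 : ZMod q) * el Finset.univ = el Finset.univ := by
    intro c
    rw [hel, Finset.mul_sum]
    simp_rw [AddMonoidAlgebra.single_mul_single, one_mul]
    exact Fintype.sum_bijective (fun w => c + w) (Equiv.addLeft c).bijective _ _
      (fun w => rfl)
  have helJ : el A * el Finset.univ = (A.card : ZMod q) • el Finset.univ := by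
    rw [hel, Finset.sum_mul]
    have : ∀ a ∈ A, AddMonoidAlgebra.single a (1 : ZMod q) * el Finset.univ
        = el Finset.univ := fun a _ => hJ a
    rw [Finset.sum_congr rfl this, Finset.sum_const, Nat.cast_smul_eq_nsmul]
  have hpow : ∀ k : ℕ, el A ^ k * el Finset.univ
      = ((A.card : ZMod q) ^ k) • el Finset.univ := by
    intro k
    induction k with
    | zero => simp
    | succ k ih =>
      rw [pow_succ, mul_assoc, helJ, mul_smul_comm, ih, smul_smul, pow_succ, mul_comm]
  have hAcard : (A.card : ZMod q) ≠ 0 := by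
    intro h0
    have hqA : q ∣ A.card := (ZMod.natCast_eq_zero_iff _ q).mp h0
    have hAM : A.card ∣ M := Dvd.intro _ (card_mul_card A B h).symm.symm
    have : q ∣ M := hqA.trans hAM
    have : Nat.gcd q M = q := Nat.gcd_eq_left this
    rw [hqM] at this
    exact hq.one_lt.ne this
  have main : el (A.image fun a => (q : ZMod M) * a) * el B = el Finset.univ := by
    have hq1 : q - 1 + 1 = q := Nat.succ_pred_eq_of_pos hq.pos
    have e1 : el A ^ q = el A ^ (q - 1) * el A := by rw [← pow_succ, hq1]
    rw [hfrob, e1, mul_assoc, hAB, hpow]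
    rw [ZMod.pow_card_sub_one_eq_one hAcard, one_smul]
  -- extract coefficients
  rw [isTiling_iff_card]
  set A' := A.image fun a => (q : ZMod M) * a with hA'
  have hcoeff : ∀ w : ZMod M,
      (((A' ×ˢ B).filter (fun ab => ab.1 + ab.2 = w)).card : ZMod q) = 1 := by
    intro w
    have h1 := congrArg (fun f : R => f.coeff w) main
    rw [el_mul] at h1
    simp only [hel] at h1
    rw [AddMonoidAlgebra.coeff_sum, AddMonoidAlgebra.coeff_sum,
      Finsupp.finset_sum_apply, Finsupp.finset_sum_apply] at h1
    have h2 : ∀ ab ∈ A' ×ˢ B, (AddMonoidAlgebra.single (ab.1 + ab.2) (1 : ZMod q)).coeff w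
        = if ab.1 + ab.2 = w then 1 else 0 := fun ab _ => Finsupp.single_apply
    have h3 : ∀ w' ∈ (Finset.univ : Finset (ZMod M)),
        (AddMonoidAlgebra.single w' (1 : ZMod q)).coeff w
        = if w' = w then 1 else 0 := fun w' _ => Finsupp.single_apply
    rw [Finset.sum_congr rfl h2, Finset.sum_congr rfl h3, Finset.sum_boole,
      Finset.sum_ite_eq' Finset.univ w (fun _ => (1 : ZMod q))] at h1
    simpa using h1
  have hpos : ∀ w : ZMod M,
      1 ≤ ((A' ×ˢ B).filter (fun ab => ab.1 + ab.2 = w)).card := by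
    intro w
    rcases Nat.eq_zero_or_pos ((A' ×ˢ B).filter (fun ab => ab.1 + ab.2 = w)).card with h0 | h1
    · exfalso
      have hc := hcoeff w
      rw [h0, Nat.cast_zero] at hc
      exact zero_ne_one hc
    · exact h1
  have hsum : ∑ w ∈ (Finset.univ : Finset (ZMod M)),
      ((A' ×ˢ B).filter (fun ab => ab.1 + ab.2 = w)).card = M := by
    rw [← Finset.card_eq_sum_card_fiberwise (fun x _ => Finset.mem_univ _)]
    rw [Finset.card_product, hA', Finset.card_image_of_injective _ hinj]
    exact card_mul_card A B h
  intro w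
  by_contra hne
  have h2 : 1 < ((A' ×ˢ B).filter (fun ab => ab.1 + ab.2 = w)).card :=
    lt_of_le_of_ne (hpos w) (Ne.symm hne)
  have hlt : ∑ w ∈ (Finset.univ : Finset (ZMod M)), 1
      < ∑ w ∈ (Finset.univ : Finset (ZMod M)),
        ((A' ×ˢ B).filter (fun ab => ab.1 + ab.2 = w)).card :=
    Finset.sum_lt_sum (fun i _ => hpos i) ⟨w, Finset.mem_univ w, h2⟩
  rw [hsum, Finset.sum_const, Finset.card_univ, smul_eq_mul, mul_one, ZMod.card] at hlt
  exact lt_irrefl M hlt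

/-- Dilation by an arbitrary natural number coprime to `M`. -/
lemma dilate {M : ℕ} [NeZero M] (r : ℕ) (hr : Nat.Coprime r M)
    (A B : Finset (ZMod M)) (h : IsTiling M A B) :
    IsTiling M (A.image fun a => (r : ZMod M) * a) B := by
  induction r using Nat.strong_induction_on generalizing A with
  | _ r ih =>
    rcases Nat.lt_or_ge r 2 with hr2 | hr2
    · interval_cases r
      · -- r = 0 : coprime forces M = 1
        have hM1 : M = 1 := by simpa [Nat.coprime_zero_left] using hr
        subst hM1
        intro z
        obtain ⟨ab, ⟨ha, hb, hs⟩, _⟩ := h z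
        refine ⟨((0 : ZMod 1) * ab.1, ab.2), ⟨Finset.mem_image_of_mem _ ha, hb, ?_⟩, ?_⟩
        · exact Subsingleton.elim _ _
        · intro y _; exact Subsingleton.elim _ _
      · -- r = 1
        have : (A.image fun a => ((1 : ℕ) : ZMod M) * a) = A := by
          rw [show (fun a : ZMod M => ((1 : ℕ) : ZMod M) * a) = id by
            funext a; simp]
          exact Finset.image_id
        rw [this]; exact h
    · have hr0 : r ≠ 1 := by omega
      have hq : (r.minFac).Prime := Nat.minFac_prime hr0
      have hqr : r.minFac ∣ r := Nat.minFac_dvd r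
      have hstep : r = r.minFac * (r / r.minFac) := (Nat.mul_div_cancel' hqr).symm
      have hlt : r / r.minFac < r := Nat.div_lt_self (by omega) hq.one_lt
      have hcop1 : Nat.Coprime (r / r.minFac) M :=
        Nat.Coprime.coprime_dvd_left (Nat.div_dvd_of_dvd hqr) hr
      have hcop2 : Nat.Coprime r.minFac M := Nat.Coprime.coprime_dvd_left hqr hr
      have h1 := ih (r / r.minFac) hlt hcop1 A h
      have h2 := dilate_prime r.minFac hq hcop2 _ B h1
      rw [Finset.image_image] at h2
      have : ((fun a => (r.minFac : ZMod M) * a) ∘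
          fun a => ((r / r.minFac : ℕ) : ZMod M) * a) = fun a : ZMod M => (r : ZMod M) * a := by
        funext a
        simp only [Function.comp_apply, ← mul_assoc]
        rw [← Nat.cast_mul, ← hstep]
      rwa [this] at h2

/-- Distinct divisors: in a tiling, a nonzero difference of two `A`-elements and a
nonzero difference of two `B`-elements can never have the same gcd with `M`. -/
lemma gcd_ne {M : ℕ} [NeZero M] (A B : Finset (ZMod M)) (h : IsTiling M A B)
    {a a' b b' : ZMod M} (ha : a ∈ A) (ha' : a' ∈ A) (hb : b ∈ B) (hb' : b' ∈ B)
    (hbb : b ≠ b')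
    (hgcd : Nat.gcd ((a - a').val) M = Nat.gcd ((b - b').val) M) : False := by
  have hM0 : M ≠ 0 := NeZero.ne M
  have hδ0 : (b - b' : ZMod M) ≠ 0 := sub_ne_zero.mpr hbb
  have hδval : (b - b' : ZMod M).val ≠ 0 :=
    fun h0 => hδ0 (ZMod.val_eq_zero _ |>.mp h0)
  -- the case a = a' : then gcd = M, forcing δ.val = 0
  rcases eq_or_ne a a' with rfl | haa
  · simp only [sub_self, ZMod.val_zero, Nat.gcd_zero_left] at hgcd
    have hMd : M ∣ (b - b' : ZMod M).val := by
      have hgl := Nat.gcd_dvd_left (b - b' : ZMod M).val M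
      rwa [← hgcd] at hgl
    have hlt : (b - b' : ZMod M).val < M := ZMod.val_lt _
    have := Nat.le_of_dvd (Nat.pos_of_ne_zero hδval) hMd
    omega
  set ε : ZMod M := a - a' with hε
  set δ : ZMod M := b - b' with hδ
  have hε0 : ε ≠ 0 := sub_ne_zero.mpr haa
  have hεval : ε.val ≠ 0 := fun h0 => hε0 (ZMod.val_eq_zero ε |>.mp h0)
  set d := Nat.gcd ε.val M with hd
  have hdpos : 0 < d := Nat.gcd_pos_of_pos_right _ (Nat.pos_of_ne_zero hM0)
  have hdM : d ∣ M := Nat.gcd_dvd_right _ _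
  have hdvdM : M / d ∣ M := Nat.div_dvd_of_dvd hdM
  haveI : NeZero (M / d) := ⟨by
    intro h0
    have := Nat.div_mul_cancel hdM
    rw [h0, zero_mul] at this
    exact hM0 this.symm⟩
  -- x and y
  set x := ε.val / d with hx
  set y := δ.val / d with hy
  have hdx : d * x = ε.val := Nat.mul_div_cancel' (Nat.gcd_dvd_left _ _)
  have hdy : d * y = δ.val := by
    have hdd : d ∣ δ.val := by
      rw [hgcd]; exact Nat.gcd_dvd_left _ _
    exact Nat.mul_div_cancel' hdd
  have hxcop : Nat.Coprime x (M / d) := by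
    rw [hx, hd]
    exact Nat.coprime_div_gcd_div_gcd (Nat.gcd_pos_of_pos_right _ (Nat.pos_of_ne_zero hM0))
  have hycop : Nat.Coprime y (M / d) := by
    have := Nat.coprime_div_gcd_div_gcd
      (Nat.gcd_pos_of_pos_right δ.val (Nat.pos_of_ne_zero hM0))
    rw [hy, hgcd]
    exact this
  -- find the unit
  obtain ⟨U, hU⟩ := ZMod.unitsMap_surjective hdvdM
    (ZMod.unitOfCoprime y hycop * (ZMod.unitOfCoprime x hxcop)⁻¹)
  set u := (U : ZMod M).val with huu
  have hucop : Nat.Coprime u M := ZMod.val_coe_unit_coprime U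
  -- (u : ZMod (M/d)) * x = y  in ZMod (M/d)
  have hux : ((u * x : ℕ) : ZMod (M / d)) = ((y : ℕ) : ZMod (M / d)) := by
    push_cast
    have h1 : ((u : ℕ) : ZMod (M / d)) = ((ZMod.unitOfCoprime y hycop *
        (ZMod.unitOfCoprime x hxcop)⁻¹ : (ZMod (M / d))ˣ) : ZMod (M / d)) := by
      rw [huu, ZMod.natCast_val, ← hU]
      rfl
    rw [h1]
    have h2 : ((x : ℕ) : ZMod (M / d))
        = ((ZMod.unitOfCoprime x hxcop : (ZMod (M/d))ˣ) : ZMod (M / d)) :=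
      (ZMod.coe_unitOfCoprime x hxcop).symm
    rw [h2, Units.val_mul, mul_assoc, ← Units.val_mul, inv_mul_cancel, Units.val_one,
      mul_one, ZMod.coe_unitOfCoprime]
  have hmod : (u * ε.val) ≡ δ.val [MOD M] := by
    have h1 : (u * x) ≡ y [MOD (M / d)] := (ZMod.natCast_eq_natCast_iff _ _ _).mp hux
    have h2 : d * (u * x) ≡ d * y [MOD d * (M / d)] := Nat.ModEq.mul_left' d h1
    rw [Nat.mul_div_cancel' hdM] at h2
    calc u * ε.val = d * (u * x) := by rw [← hdx]; ring
    _ ≡ d * y [MOD M] := h2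
    _ = δ.val := hdy
  have humul : (u : ZMod M) * ε = δ := by
    have h1 : ((u * ε.val : ℕ) : ZMod M) = ((δ.val : ℕ) : ZMod M) :=
      (ZMod.natCast_eq_natCast_iff _ _ _).mpr hmod
    push_cast [ZMod.natCast_val, ZMod.cast_id] at h1
    exact h1
  -- dilated tiling
  have hT' := dilate u hucop A B h
  -- two representations of the same element
  have hrel : (u : ZMod M) * a + b' = (u : ZMod M) * a' + b := by
    have h3 : (u : ZMod M) * a - (u : ZMod M) * a' = b - b' := by
      rw [← mul_sub, ← hε, humul, hδ]
    linear_combination h3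
  obtain ⟨ab, _, huniq⟩ := hT' ((u : ZMod M) * a + b')
  have h1 : ((u : ZMod M) * a, b') = ab := huniq _
    ⟨Finset.mem_image_of_mem _ ha, hb', rfl⟩
  have h2 : ((u : ZMod M) * a', b) = ab := huniq _
    ⟨Finset.mem_image_of_mem _ ha', hb, hrel.symm⟩
  rw [← h2] at h1
  have h4 : b' = b := congrArg Prod.snd h1
  exact hbb h4.symm

/-- If `d ∣ M`, `M = p^n * m₀` with `p ∤ m₀`, and `p^n ∤ d`, then `d ∣ p^(n-1) * m₀`. -/
lemma dvd_ord_sub {p n m₀ M : ℕ} (hp : p.Prime) (hM : M = p ^ n * m₀) (hM0 : M ≠ 0)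
    {d : ℕ} (hdM : d ∣ M) (hd : ¬ p ^ n ∣ d) : d ∣ p ^ (n - 1) * m₀ := by
  have hd0 : d ≠ 0 := by
    rintro rfl
    exact hM0 (Nat.eq_zero_of_zero_dvd hdM)
  set j := d.factorization p with hj
  have hjd : p ^ j ∣ d := Nat.ordProj_dvd d p
  have hjn : j ≤ n - 1 := by
    by_contra hlt
    push_neg at hlt
    have hn_le : n ≤ j := by
      rcases Nat.eq_zero_or_pos n with rfl | hn
      · exact Nat.zero_le j
      · omega
    exact hd ((pow_dvd_pow p hn_le).trans hjd)
  have ht : ¬ p ∣ d / p ^ j := Nat.not_dvd_ordCompl hp hd0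
  have htm : d / p ^ j ∣ m₀ := by
    have h1 : d / p ^ j ∣ p ^ n * m₀ := (Nat.ordCompl_dvd d p).trans (hM ▸ hdM)
    have hcop : Nat.Coprime (d / p ^ j) (p ^ n) :=
      Nat.Coprime.pow_right n (Nat.coprime_comm.mp (hp.coprime_iff_not_dvd.mpr ht))
    exact hcop.dvd_of_dvd_mul_left h1
  calc d = p ^ j * (d / p ^ j) := (Nat.ordProj_mul_ordCompl_eq_self d p).symm
  _ ∣ p ^ (n - 1) * m₀ := mul_dvd_mul (pow_dvd_pow p hjn) htm

lemma dvd_val_add {M : ℕ} [NeZero M] {t : ℕ} (ht : t ∣ M) {u v : ZMod M}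
    (hu : t ∣ u.val) (hv : t ∣ v.val) : t ∣ (u + v).val := by
  rw [ZMod.val_add]
  exact (Nat.dvd_mod_iff ht).mpr (Nat.dvd_add hu hv)

lemma dvd_val_neg {M : ℕ} [NeZero M] {t : ℕ} (ht : t ∣ M) {u : ZMod M}
    (hu : t ∣ u.val) : t ∣ (-u).val := by
  have h := ZMod.val_add (-u) u
  rw [neg_add_cancel, ZMod.val_zero] at h
  have hM : M ∣ (-u).val + u.val := Nat.dvd_of_mod_eq_zero h.symm
  have ht2 : t ∣ (-u).val + u.val := ht.trans hM
  have := Nat.dvd_sub ht2 hu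
  rwa [Nat.add_sub_cancel] at this

lemma dvd_val_sub {M : ℕ} [NeZero M] {t : ℕ} (ht : t ∣ M) {u v : ZMod M}
    (hu : t ∣ u.val) (hv : t ∣ v.val) : t ∣ (u - v).val := by
  rw [sub_eq_add_neg]
  exact dvd_val_add ht hu (dvd_val_neg ht hv)

end Stmt8Aux

theorem stmt8 (M p n : ℕ) [NeZero M] (hp : p.Prime) (hn : 1 ≤ n)
    (hpn : p ^ n ∣ M) (hpn' : ¬ p ^ (n + 1) ∣ M)
    (A B : Finset (ZMod M)) (h : IsTiling M A B) (x : ZMod M) :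
    SplitsParity M p n A B (fiberSet M p x) ∨ SplitsParity M p n B A (fiberSet M p x) := by
  classical
  open Stmt8Aux in
  have hM0 : M ≠ 0 := NeZero.ne M
  have hpM : p ∣ M := (dvd_pow_self p (by omega : n ≠ 0)).trans hpn
  set m₀ := M / p ^ n with hm₀
  have hMeq : M = p ^ n * m₀ := (Nat.mul_div_cancel' hpn).symm
  have hpm₀ : ¬ p ∣ m₀ := by
    intro hdvd
    apply hpn'
    calc p ^ (n + 1) = p ^ n * p := by rw [pow_succ]
    _ ∣ p ^ n * m₀ := mul_dvd_mul dvd_rfl hdvd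
    _ = M := hMeq.symm
  have hMp : M / p = p ^ (n - 1) * m₀ := by
    have h1 : M = p * (p ^ (n - 1) * m₀) := by
      rw [hMeq, show p ^ n = p * p ^ (n - 1) by
        rw [← pow_succ']
        congr 1
        omega]
      ring
    rw [h1, Nat.mul_div_cancel_left _ hp.pos]
  have hpnn : p ^ (n - 1) ∣ M / p := by
    rw [hMp]; exact dvd_mul_right _ _
  have hpn1M : p ^ (n - 1) ∣ M := (pow_dvd_pow p (Nat.sub_le n 1)).trans hpn
  -- representation function
  choose F hF1 hF2 hF3 using fun z : ZMod M => (h z).exists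
  have huniq : ∀ z a b, a ∈ A → b ∈ B → a + b = z → (a, b) = F z := by
    intro z a b ha hb hs
    obtain ⟨ab, _, hu⟩ := h z
    rw [hu (a, b) ⟨ha, hb, hs⟩, hu (F z) ⟨hF1 z, hF2 z, hF3 z⟩]
  -- difference of two fiber elements
  have hgam : ∀ z ∈ fiberSet M p x, ∀ z' ∈ fiberSet M p x, z ≠ z' →
      ∃ s : ℕ, 0 < s ∧ s < p ∧ (z - z' : ZMod M).val = s * (M / p) := by
    rintro z ⟨ν, hν, rfl⟩ z' ⟨ν', hν', rfl⟩ hne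
    set w := ν + p - ν' with hw
    set s := w % p with hs
    have hslt : s < p := Nat.mod_lt _ hp.pos
    have hν'le : ν' ≤ ν + p := by omega
    have e1 : w * (M / p) + ν' * (M / p) = ν * (M / p) + M := by
      rw [← Nat.add_mul, hw, Nat.sub_add_cancel hν'le, Nat.add_mul, Nat.mul_div_cancel' hpM]
    have e2 : w * (M / p) = (w / p) * M + s * (M / p) := by
      have h0 : w = p * (w / p) + s := (Nat.div_add_mod w p).symm
      calc w * (M / p) = (p * (w / p) + s) * (M / p) := by rw [← h0]
      _ = (w / p) * (p * (M / p)) + s * (M / p) := by ring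
      _ = (w / p) * M + s * (M / p) := by rw [Nat.mul_div_cancel' hpM]
    have hzz : (x + ((ν * (M / p) : ℕ) : ZMod M)) - (x + ((ν' * (M / p) : ℕ) : ZMod M))
        = ((s * (M / p) : ℕ) : ZMod M) := by
      have c1 := congrArg (fun t : ℕ => (t : ZMod M)) e1
      have c2 := congrArg (fun t : ℕ => (t : ZMod M)) e2
      push_cast at c1 c2
      rw [ZMod.natCast_self] at c1 c2
      -- c1 : ↑w * ↑(M/p) + ↑ν' * ↑(M/p) = ↑ν * ↑(M/p) + 0
      -- c2 : ↑w * ↑(M/p) = ↑(w/p) * 0 + ↑s * ↑(M/p)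
      push_cast
      linear_combination c2 - c1
    have hs0 : 0 < s := by
      rcases Nat.eq_zero_or_pos s with h0 | h1
      · exfalso
        apply hne
        have : (x + ((ν * (M / p) : ℕ) : ZMod M)) - (x + ((ν' * (M / p) : ℕ) : ZMod M)) = 0 := by
          rw [hzz, h0]
          simp
        have := sub_eq_zero.mp this
        exact this
      · exact h1
    refine ⟨s, hs0, hslt, ?_⟩
    rw [hzz]
    apply ZMod.val_cast_of_lt
    have hMpp : 0 < M / p := Nat.div_pos (Nat.le_of_dvd (Nat.pos_of_ne_zero hM0) hpM) hp.pos
    calc s * (M / p) < p * (M / p) := mul_lt_mul_of_pos_right hslt hMpp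
    _ = M := Nat.mul_div_cancel' hpM
  -- sum identity
  have hsumzz : ∀ z z' : ZMod M,
      ((F z).1 - (F z').1) + ((F z).2 - (F z').2) = z - z' := by
    intro z z'
    have h3 := hF3 z
    have h3' := hF3 z'
    linear_combination h3 - h3'
  -- pairwise dichotomy
  have pairwise : ∀ z ∈ fiberSet M p x, ∀ z' ∈ fiberSet M p x,
      p ^ n ∣ ((F z).1 - (F z').1).val ∨ p ^ n ∣ ((F z).2 - (F z').2).val := by
    intro z hz z' hz'
    rcases eq_or_ne z z' with rfl | hne
    · left; simp
    by_contra hboth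
    push_neg at hboth
    obtain ⟨hna, hnb⟩ := hboth
    obtain ⟨s, hs0, hslt, hval⟩ := hgam z hz z' hz' hne
    have hdQ : ∀ v : ZMod M, ¬ p ^ n ∣ v.val → Nat.gcd v.val M ∣ M / p := by
      intro v hv
      have hdM : Nat.gcd v.val M ∣ M := Nat.gcd_dvd_right _ _
      have hnd : ¬ p ^ n ∣ Nat.gcd v.val M := fun hc => hv (hc.trans (Nat.gcd_dvd_left _ _))
      rw [hMp]
      exact dvd_ord_sub hp hMeq hM0 hdM hnd
    have step : ∀ va vb : ZMod M, va + vb = z - z' → ¬ p ^ n ∣ va.val → ¬ p ^ n ∣ vb.val →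
        Nat.gcd va.val M ∣ Nat.gcd vb.val M := by
      intro va vb hsum' hva hvb
      have h1 : Nat.gcd va.val M ∣ M / p := hdQ va hva
      have h2 : Nat.gcd va.val M ∣ (z - z').val := by
        rw [hval]
        exact Dvd.dvd.mul_left h1 s
      have h3 : vb = (z - z') - va := by linear_combination hsum'
      have h4 : Nat.gcd va.val M ∣ vb.val := by
        rw [h3]
        exact dvd_val_sub (Nat.gcd_dvd_right _ _) h2 (Nat.gcd_dvd_left _ _)
      exact Nat.dvd_gcd h4 (Nat.gcd_dvd_right _ _)
    have hde : Nat.gcd ((F z).1 - (F z').1).val M = Nat.gcd ((F z).2 - (F z').2).val M :=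
      Nat.dvd_antisymm (step _ _ (hsumzz z z') hna hnb)
        (step _ _ (by linear_combination hsumzz z z') hnb hna)
    have hbne : (F z).2 ≠ (F z').2 := by
      intro hbe
      apply hnb
      rw [hbe, sub_self, ZMod.val_zero]
      exact dvd_zero _
    exact gcd_ne A B h (hF1 z) (hF1 z') (hF2 z) (hF2 z') hbne hde
  -- never both (for distinct fiber elements)
  have notboth : ∀ z ∈ fiberSet M p x, ∀ z' ∈ fiberSet M p x, z ≠ z' →
      p ^ n ∣ ((F z).1 - (F z').1).val → p ^ n ∣ ((F z).2 - (F z').2).val → False := by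
    intro z hz z' hz' hne h1 h2
    obtain ⟨s, hs0, hslt, hval⟩ := hgam z hz z' hz' hne
    have h3 : p ^ n ∣ (z - z').val := by
      rw [← hsumzz z z']
      exact dvd_val_add hpn h1 h2
    rw [hval, hMp] at h3
    have h4 : p ^ (n - 1) * p ∣ p ^ (n - 1) * (s * m₀) := by
      calc p ^ (n - 1) * p = p ^ n := by rw [← pow_succ]; congr 1; omega
      _ ∣ s * (p ^ (n - 1) * m₀) := h3
      _ = p ^ (n - 1) * (s * m₀) := by ring
    have h5 : p ∣ s * m₀ :=
      (mul_dvd_mul_iff_left (pow_ne_zero (n - 1) hp.ne_zero)).mp h4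
    rcases (Nat.Prime.dvd_mul hp).mp h5 with h6 | h6
    · have := Nat.le_of_dvd hs0 h6
      omega
    · exact hpm₀ h6
  -- membership characterizations
  have memA : ∀ a ∈ SigmaSet M A B (fiberSet M p x),
      ∃ z ∈ fiberSet M p x, a = (F z).1 := by
    rintro a ⟨haA, b, hbB, hab⟩
    exact ⟨a + b, hab, congrArg Prod.fst (huniq (a + b) a b haA hbB rfl)⟩
  have memB : ∀ b ∈ SigmaSet M B A (fiberSet M p x),
      ∃ z ∈ fiberSet M p x, b = (F z).2 := by
    rintro b ⟨hbB, a, haA, hba⟩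
    exact ⟨b + a, hba, congrArg Prod.snd (huniq (b + a) a b haA hbB (add_comm a b))⟩
  -- dichotomy over the whole fiber
  by_cases hA : ∀ z ∈ fiberSet M p x, ∀ z' ∈ fiberSet M p x,
      p ^ n ∣ ((F z).1 - (F z').1).val
  · -- parity (A, B)
    left
    constructor
    · intro a ha a' ha'
      obtain ⟨z, hz, rfl⟩ := memA a ha
      obtain ⟨z', hz', rfl⟩ := memA a' ha'
      exact hA z hz z' hz'
    · intro b hb b' hb' hbb
      obtain ⟨z, hz, rfl⟩ := memB b hb
      obtain ⟨z', hz', rfl⟩ := memB b' hb'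
      have hzne : z ≠ z' := by
        rintro rfl
        exact hbb rfl
      obtain ⟨s, hs0, hslt, hval⟩ := hgam z hz z' hz' hzne
      have e : (F z).2 - (F z').2 = (z - z') - ((F z).1 - (F z').1) := by
        linear_combination hsumzz z z'
      constructor
      · rw [e]
        refine dvd_val_sub hpn1M ?_ ?_
        · rw [hval]
          exact Dvd.dvd.mul_left hpnn s
        · exact (pow_dvd_pow p (Nat.sub_le n 1)).trans (hA z hz z' hz')
      · intro hc
        exact notboth z hz z' hz' hzne (hA z hz z' hz') hc
  · -- parity (B, A)
    right
    push_neg at hA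
    obtain ⟨z₁, hz₁, z₂, hz₂, hz12⟩ := hA
    have hb12 : p ^ n ∣ ((F z₁).2 - (F z₂).2).val :=
      (pairwise z₁ hz₁ z₂ hz₂).resolve_left hz12
    have hB1 : ∀ w ∈ fiberSet M p x, p ^ n ∣ ((F w).2 - (F z₁).2).val := by
      intro w hw
      rcases pairwise w hw z₁ hz₁ with h1 | h1
      · rcases pairwise w hw z₂ hz₂ with h2 | h2
        · exfalso
          apply hz12
          have e : (F z₁).1 - (F z₂).1 = ((F w).1 - (F z₂).1) - ((F w).1 - (F z₁).1) := by
            ring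
          rw [e]
          exact dvd_val_sub hpn h2 h1
        · have e : (F w).2 - (F z₁).2 = ((F w).2 - (F z₂).2) - ((F z₁).2 - (F z₂).2) := by
            ring
          rw [e]
          exact dvd_val_sub hpn h2 hb12
      · exact h1
    have hBall : ∀ z ∈ fiberSet M p x, ∀ z' ∈ fiberSet M p x,
        p ^ n ∣ ((F z).2 - (F z').2).val := by
      intro z hz z' hz'
      have e : (F z).2 - (F z').2 = ((F z).2 - (F z₁).2) - ((F z').2 - (F z₁).2) := by
        ring
      rw [e]
      exact dvd_val_sub hpn (hB1 z hz) (hB1 z' hz')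
    constructor
    · intro b hb b' hb'
      obtain ⟨z, hz, rfl⟩ := memB b hb
      obtain ⟨z', hz', rfl⟩ := memB b' hb'
      exact hBall z hz z' hz'
    · intro a ha a' ha' haa
      obtain ⟨z, hz, rfl⟩ := memA a ha
      obtain ⟨z', hz', rfl⟩ := memA a' ha'
      have hzne : z ≠ z' := by
        rintro rfl
        exact haa rfl
      obtain ⟨s, hs0, hslt, hval⟩ := hgam z hz z' hz' hzne
      have e : (F z).1 - (F z').1 = (z - z') - ((F z).2 - (F z').2) := by
        linear_combination hsumzz z z'
      constructor
      · rw [e]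
        refine dvd_val_sub hpn1M ?_ ?_
        · rw [hval]
          exact Dvd.dvd.mul_left hpnn s
        · exact (pow_dvd_pow p (Nat.sub_le n 1)).trans (hBall z hz z' hz')
      · intro hc
        exact notboth z hz z' hz' hzne hc (hBall z hz z' hz')
end

section
/- Let A ⊕ B = ℤ_M with 0 ∈ B, and let p be a prime with p^n ‖ M. Suppose a_0, a_1 ∈ A are distinct with p^n | a_0 − a_1, and both fibers a_0 * F_p and a_1 * F_p split with parity (B, A). Then Σ_A(a_0 * F_p) and Σ_A(a_1 * F_p) are disjoint. -/
/-! If `a ∈ Σ_A(a₀ F_p) ∩ Σ_A(a₁ F_p)`, write `a + b = a₀ + ν M/p` and `a + b' = a₁ + ν' M/p`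
with `b, b' ∈ B` and `ν, ν' < p`. Since `0 ∈ Σ_B` of both fibers, the splitting puts `b` and `b'`
in `p^n ℤ_M`; together with `a₀ ≡ a₁ mod p^n` this gives `ν M/p ≡ ν' M/p mod p^n`. As `M/p` has
order exactly `p` modulo `p^n`, `ν = ν'`, hence `a₁ + b = a₀ + b'`, two distinct representations
of one element in the tiling. -/

lemma ZMod.dvd_val_iff_castHom_eq_zero {M d : ℕ} [NeZero M] (hd : d ∣ M) (x : ZMod M) :
    d ∣ x.val ↔ ZMod.castHom hd (ZMod d) x = 0 := by
  rw [ZMod.castHom_apply, ZMod.cast_eq_val, ZMod.natCast_eq_zero_iff]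

lemma IsTiling.eq_of_add_eq {M : ℕ} {A B : Finset (ZMod M)} (h : IsTiling M A B)
    {a a' b b' : ZMod M} (ha : a ∈ A) (ha' : a' ∈ A) (hb : b ∈ B) (hb' : b' ∈ B)
    (heq : a + b = a' + b') : a = a' :=
  congrArg Prod.fst ((h (a + b)).unique (y₁ := (a, b)) (y₂ := (a', b'))
    ⟨ha, hb, rfl⟩ ⟨ha', hb', heq.symm⟩)

lemma SplitsParity.castHom_eq_zero {M p n : ℕ} [NeZero M] (hp : 0 < p) (hpn : p ^ n ∣ M)
    {A B : Finset (ZMod M)} {x a b : ZMod M} (hs : SplitsParity M p n B A (fiberSet M p x))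
    (h0B : (0 : ZMod M) ∈ B) (hx : x ∈ A) (ha : a ∈ A) (hb : b ∈ B)
    (hab : a + b ∈ fiberSet M p x) :
    ZMod.castHom hpn (ZMod (p ^ n)) b = 0 :=
  (ZMod.dvd_val_iff_castHom_eq_zero hpn b).mp <| by
    simpa using hs.1 b ⟨hb, a, ha, by rwa [add_comm]⟩ 0 ⟨h0B, x, hx, 0, hp, by simp⟩

lemma addOrderOf_natCast_div_prime {M p n : ℕ} (hp : p.Prime) (hn : 1 ≤ n)
    (hpn : p ^ n ∣ M) (hpn' : ¬ p ^ (n + 1) ∣ M) :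
    addOrderOf ((M / p : ℕ) : ZMod (p ^ n)) = p := by
  obtain ⟨m, rfl⟩ := hpn
  have hpm : ¬ p ∣ m := fun ⟨k, hk⟩ => hpn' ⟨k, by rw [hk, pow_succ]; ring⟩
  have hpow : p ^ n = p ^ (n - 1) * p := by rw [← pow_succ]; congr 1; omega
  have hdiv : p ^ n * m / p = p ^ (n - 1) * m := by
    rw [hpow, mul_right_comm, Nat.mul_div_cancel _ hp.pos]
  rw [hdiv, ZMod.addOrderOf_coe _ (pow_ne_zero _ hp.ne_zero), hpow, Nat.gcd_mul_left,
    ((Nat.Prime.coprime_iff_not_dvd hp).mpr hpm).gcd_eq_one, mul_one,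
    Nat.mul_div_cancel_left _ (pow_pos hp.pos _)]

lemma eq_of_natCast_mul_div_prime_eq {M p n : ℕ} (hp : p.Prime) (hn : 1 ≤ n)
    (hpn : p ^ n ∣ M) (hpn' : ¬ p ^ (n + 1) ∣ M) {ν ν' : ℕ} (hν : ν < p) (hν' : ν' < p)
    (h : ((ν * (M / p) : ℕ) : ZMod (p ^ n)) = ((ν' * (M / p) : ℕ) : ZMod (p ^ n))) :
    ν = ν' := by
  have hord := addOrderOf_natCast_div_prime hp hn hpn hpn'
  simp only [Nat.cast_mul, ← nsmul_eq_mul] at h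
  exact nsmul_injOn_Iio_addOrderOf (by rwa [hord]) (by rwa [hord]) h

theorem stmt10 (M p n : ℕ) [NeZero M] (hp : p.Prime) (hn : 1 ≤ n)
    (hpn : p ^ n ∣ M) (hpn' : ¬ p ^ (n + 1) ∣ M)
    (A B : Finset (ZMod M)) (h : IsTiling M A B) (h0B : (0 : ZMod M) ∈ B)
    (a0 a1 : ZMod M) (ha0 : a0 ∈ A) (ha1 : a1 ∈ A) (hne : a0 ≠ a1)
    (hplane : (p ^ n : ℕ) ∣ ((a0 - a1 : ZMod M)).val)
    (hs0 : SplitsParity M p n B A (fiberSet M p a0))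
    (hs1 : SplitsParity M p n B A (fiberSet M p a1)) :
    SigmaSet M A B (fiberSet M p a0) ∩ SigmaSet M A B (fiberSet M p a1) = ∅ := by
  rw [Set.eq_empty_iff_forall_notMem]
  rintro a ⟨⟨haA, b, hbB, hab⟩, -, b', hb'B, hab'⟩
  set φ := ZMod.castHom hpn (ZMod (p ^ n))
  have hb : φ b = 0 := hs0.castHom_eq_zero hp.pos hpn h0B ha0 haA hbB hab
  have hb' : φ b' = 0 := hs1.castHom_eq_zero hp.pos hpn h0B ha1 haA hb'B hab'
  have ha : φ a0 = φ a1 := by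
    rw [← sub_eq_zero, ← map_sub, ← ZMod.dvd_val_iff_castHom_eq_zero hpn]
    exact hplane
  obtain ⟨ν, hν, hab⟩ := hab
  obtain ⟨ν', hν', hab'⟩ := hab'
  have hνν' : ν = ν' := by
    refine eq_of_natCast_mul_div_prime_eq hp hn hpn hpn' hν hν' ?_
    have h0 := congrArg φ hab
    have h1 := congrArg φ hab'
    simp only [map_add, map_natCast, hb, hb'] at h0 h1
    linear_combination h1 - h0 - ha
  subst hνν'
  exact hne (h.eq_of_add_eq ha0 ha1 hb'B hbB (by linear_combination hab' - hab))
end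

section
/- Let A ⊕ B = ℤ_M with 0 ∈ B, p prime with p^n ‖ M. Suppose there exists a_0 ∈ A such that for every a ∈ A with p^{n−1} | a − a_0, the fiber a * F_p splits with parity (B, A). Then for every ν ∈ {1, …, p−1}, |A ∩ Π(a_0, p^n)| = |A ∩ Π(a_0 + νM/p, p^n)|, where Π(x, p^α) = {y ∈ ℤ_M : p^α | y − x}. -/
/-- uniqueness of representation extracted from a tiling. -/
lemma repUniq (M : ℕ) (A B : Finset (ZMod M)) (h : IsTiling M A B)
    (f g : ZMod M → ZMod M) (hfA : ∀ z, f z ∈ A) (hgB : ∀ z, g z ∈ B)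
    (hsum : ∀ z, f z + g z = z) :
    ∀ z a b, a ∈ A → b ∈ B → a + b = z → a = f z ∧ b = g z := by
  intro z a b ha hb hab
  obtain ⟨ab, _, hU⟩ := h z
  have h1 := hU (a, b) ⟨ha, hb, hab⟩
  have h2 := hU (f z, g z) ⟨hfA z, hgB z, hsum z⟩
  have h3 : (a, b) = (f z, g z) := h1.trans h2.symm
  exact ⟨congrArg Prod.fst h3, congrArg Prod.snd h3⟩

/-- key injectivity: if two elements of `A` shifted by the same `d` have the same
`A`-part, they are equal. -/
lemma keyInj (M : ℕ) (A B : Finset (ZMod M)) (h : IsTiling M A B)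
    (f g : ZMod M → ZMod M) (hfA : ∀ z, f z ∈ A) (hgB : ∀ z, g z ∈ B)
    (hsum : ∀ z, f z + g z = z) (d a a' : ZMod M) (ha : a ∈ A) (ha' : a' ∈ A)
    (heq : f (a + d) = f (a' + d)) : a = a' := by
  have e1 : f (a + d) + g (a + d) = a + d := hsum _
  have e2 : f (a' + d) + g (a' + d) = a' + d := hsum _
  rw [← heq] at e2
  have e3 : a + g (a' + d) = a' + g (a + d) := by
    linear_combination e2 - e1
  have u1 := (repUniq M A B h f g hfA hgB hsum (a + g (a' + d)) a (g (a' + d)) ha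
    (hgB _) rfl).1
  have u2 := (repUniq M A B h f g hfA hgB hsum (a + g (a' + d)) a' (g (a + d)) ha'
    (hgB _) e3.symm).1
  exact u1.trans u2.symm

theorem stmt11 (M p n : ℕ) [NeZero M] (hp : p.Prime) (hn : 1 ≤ n)
    (hpn : p ^ n ∣ M) (hpn' : ¬ p ^ (n + 1) ∣ M)
    (A B : Finset (ZMod M)) (h : IsTiling M A B) (h0B : (0 : ZMod M) ∈ B)
    (a0 : ZMod M) (ha0 : a0 ∈ A)
    (hloc : ∀ a ∈ A, (p ^ (n - 1) : ℕ) ∣ ((a - a0 : ZMod M)).val →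
      SplitsParity M p n B A (fiberSet M p a)) :
    ∀ ν : ℕ, 1 ≤ ν → ν < p →
      (A.filter fun y => (p ^ n : ℕ) ∣ ((y - a0 : ZMod M)).val).card
        = (A.filter fun y =>
            (p ^ n : ℕ) ∣ ((y - (a0 + ((ν * (M / p) : ℕ) : ZMod M)) : ZMod M)).val).card := by
  classical
  intro ν hν1 hνp
  -- numerology
  have hp0 : 0 < p := hp.pos
  have hq0 : 0 < p ^ n := pow_pos hp0 n
  have hq'0 : 0 < p ^ (n - 1) := pow_pos hp0 _
  haveI : NeZero (p ^ n) := ⟨hq0.ne'⟩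
  haveI : NeZero (p ^ (n - 1)) := ⟨hq'0.ne'⟩
  have hq'q : (p : ℕ) ^ (n - 1) ∣ p ^ n := pow_dvd_pow p (Nat.sub_le n 1)
  have hqsplit : p ^ n = p ^ (n - 1) * p := by
    conv_lhs => rw [← Nat.sub_add_cancel hn]
    rw [pow_succ]
  obtain ⟨m, hm⟩ := hpn
  have hpn : p ^ n ∣ M := ⟨m, hm⟩
  have hMp : M / p = p ^ (n - 1) * m := by
    rw [hm, hqsplit, show p ^ (n - 1) * p * m = p * (p ^ (n - 1) * m) by ring,
      Nat.mul_div_cancel_left _ hp0]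
  have hpm : ¬ p ∣ m := by
    intro ⟨m', hm'⟩
    exact hpn' ⟨m', by rw [hm, hm', pow_succ]; ring⟩
  -- ring homs
  set φ : ZMod M →+* ZMod (p ^ n) := ZMod.castHom hpn (ZMod (p ^ n)) with hφdef
  set ψ : ZMod (p ^ n) →+* ZMod (p ^ (n - 1)) := ZMod.castHom hq'q (ZMod (p ^ (n - 1)))
    with hψdef
  have hφval : ∀ x : ZMod M, φ x = ((x.val : ℕ) : ZMod (p ^ n)) := by
    intro x
    conv_lhs => rw [← ZMod.natCast_rightInverse x]
    rw [map_natCast]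
  have hφ0 : ∀ x : ZMod M, φ x = 0 ↔ (p ^ n : ℕ) ∣ x.val := by
    intro x; rw [hφval, ZMod.natCast_eq_zero_iff]
  have hψφ0 : ∀ x : ZMod M, ψ (φ x) = 0 ↔ (p ^ (n - 1) : ℕ) ∣ x.val := by
    intro x; rw [hφval, map_natCast, ZMod.natCast_eq_zero_iff]
  have hψ0 : ∀ y : ZMod (p ^ n), ψ y = 0 ↔ (p ^ (n - 1) : ℕ) ∣ y.val := by
    intro y
    conv_lhs => rw [← ZMod.natCast_rightInverse y]
    rw [map_natCast, ZMod.natCast_eq_zero_iff]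
  -- representation functions
  have hrep : ∀ z : ZMod M, ∃ a b, a ∈ A ∧ b ∈ B ∧ a + b = z := by
    intro z
    obtain ⟨⟨a, b⟩, ⟨h1, h2, h3⟩, -⟩ := h z
    exact ⟨a, b, h1, h2, h3⟩
  choose f g hfA hgB hsum using hrep
  have huniq := repUniq M A B h f g hfA hgB hsum
  -- the function U
  set U : ℕ → ZMod (p ^ n) := fun k => ((k * (M / p) : ℕ) : ZMod (p ^ n)) with hUdef
  have hψU : ∀ k, ψ (U k) = 0 := by
    intro k
    rw [hUdef]
    simp only [map_natCast]
    rw [ZMod.natCast_eq_zero_iff]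
    exact Dvd.dvd.mul_left ⟨m, hMp⟩ k
  have hU0 : ∀ k, 1 ≤ k → k < p → U k ≠ 0 := by
    intro k hk1 hkp hc
    rw [hUdef] at hc
    rw [ZMod.natCast_eq_zero_iff, hMp, hqsplit,
      show k * (p ^ (n - 1) * m) = p ^ (n - 1) * (k * m) by ring] at hc
    have hc2 : p ∣ k * m := (Nat.mul_dvd_mul_iff_left hq'0).mp hc
    rcases hp.dvd_mul.mp hc2 with hk | hmm
    · exact absurd (Nat.le_of_dvd hk1 hk) (not_le.mpr hkp)
    · exact hpm hmm
  have hUinj : ∀ k k', k < p → k' < p → U k = U k' → k = k' := by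
    have key : ∀ k k', k ≤ k' → k' < p → U k = U k' → k = k' := by
      intro k k' hle hk' he
      by_contra hne
      have h1 : 1 ≤ k' - k := by omega
      apply hU0 (k' - k) h1 (by omega)
      show (((k' - k) * (M / p) : ℕ) : ZMod (p ^ n)) = 0
      have h9 : ((k' - k) * (M / p) : ℕ) = k' * (M / p) - k * (M / p) := by
        rw [Nat.sub_mul]
      rw [h9, Nat.cast_sub (Nat.mul_le_mul_right _ hle)]
      have he' : ((k * (M / p) : ℕ) : ZMod (p ^ n)) = ((k' * (M / p) : ℕ) : ZMod (p ^ n)) := he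
      rw [← he', sub_self]
    intro k k' hk hk' he
    rcases le_total k k' with hle | hle
    · exact key k k' hle hk' he
    · exact (key k' k hle hk he.symm).symm
  have hkexists : ∀ τ : ZMod (p ^ n), ψ τ = 0 → ∃ k, k < p ∧ U k = τ := by
    intro τ hτ
    set K := Finset.univ.filter fun x : ZMod (p ^ n) => ψ x = 0 with hKdef
    have himg : (Finset.range p).image U ⊆ K := by
      intro x hx
      obtain ⟨k, -, hk⟩ := Finset.mem_image.mp hx
      exact Finset.mem_filter.mpr ⟨Finset.mem_univ _, hk ▸ hψU k⟩
    have hcard_img : ((Finset.range p).image U).card = p := by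
      rw [Finset.card_image_of_injOn, Finset.card_range]
      intro k hk k' hk' he
      exact hUinj k k' (Finset.mem_range.mp hk) (Finset.mem_range.mp hk') he
    have hKle : K.card ≤ p := by
      have : K.card ≤ (Finset.range p).card := by
        apply Finset.card_le_card_of_injOn (fun x => x.val / p ^ (n - 1))
        · intro x hx
          rw [Finset.mem_coe, Finset.mem_range, Nat.div_lt_iff_lt_mul hq'0]
          calc x.val < p ^ n := ZMod.val_lt x
          _ = p * p ^ (n - 1) := by rw [hqsplit]; ring
        · intro x hx y hy he
          have hdx : (p ^ (n - 1) : ℕ) ∣ x.val := (hψ0 x).mp (Finset.mem_filter.mp hx).2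
          have hdy : (p ^ (n - 1) : ℕ) ∣ y.val := (hψ0 y).mp (Finset.mem_filter.mp hy).2
          simp only at he
          apply ZMod.val_injective
          rw [← Nat.div_mul_cancel hdx, ← Nat.div_mul_cancel hdy, he]
      rwa [Finset.card_range] at this
    have hKeq : (Finset.range p).image U = K :=
      Finset.eq_of_subset_of_card_le himg (by rw [hcard_img]; exact hKle)
    have hτK : τ ∈ K := Finset.mem_filter.mpr ⟨Finset.mem_univ _, hτ⟩
    rw [← hKeq] at hτK
    obtain ⟨k, hk, hUk⟩ := Finset.mem_image.mp hτK
    exact ⟨k, Finset.mem_range.mp hk, hUk⟩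
  -- the plane S
  set S : Finset (ZMod M) := A.filter fun a => ψ (φ a) = ψ (φ a0) with hSdef
  -- fiber fact
  have hfiber : ∀ a ∈ S, ∀ k, k < p →
      f (a + ((k * (M / p) : ℕ) : ZMod M)) ∈ S ∧
      φ (f (a + ((k * (M / p) : ℕ) : ZMod M))) = φ a + U k := by
    intro a haS k hk
    obtain ⟨haA, haψ⟩ := Finset.mem_filter.mp haS
    have hdvd : (p ^ (n - 1) : ℕ) ∣ ((a - a0 : ZMod M)).val := by
      rw [← hψφ0, map_sub, map_sub, haψ, sub_self]
    have hsp := hloc a haA hdvd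
    set z := a + ((k * (M / p) : ℕ) : ZMod M) with hz
    have hzfib : z ∈ fiberSet M p a := ⟨k, hk, rfl⟩
    have h7 : g z + f z ∈ fiberSet M p a := by
      rw [add_comm, hsum z]; exact hzfib
    have hgSig : g z ∈ SigmaSet M B A (fiberSet M p a) := ⟨hgB z, f z, hfA z, h7⟩
    have h8 : (0 : ZMod M) + a ∈ fiberSet M p a := by
      rw [zero_add]; exact ⟨0, hp0, by simp⟩
    have h0Sig : (0 : ZMod M) ∈ SigmaSet M B A (fiberSet M p a) := ⟨h0B, a, haA, h8⟩
    have hgq : (p ^ n : ℕ) ∣ ((g z - 0 : ZMod M)).val := hsp.1 (g z) hgSig 0 h0Sig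
    rw [sub_zero] at hgq
    have hφg : φ (g z) = 0 := (hφ0 _).mpr hgq
    have hφf : φ (f z) = φ a + U k := by
      have h5 : φ (f z) + φ (g z) = φ z := by rw [← map_add, hsum z]
      rw [hφg, add_zero] at h5
      rw [h5, hz, map_add, map_natCast]
    refine ⟨Finset.mem_filter.mpr ⟨hfA z, ?_⟩, hφf⟩
    rw [hφf, map_add, hψU, add_zero, haψ]
  -- the product set and fiber counting
  set T : Finset (ZMod M × ℕ) := S ×ˢ Finset.range p with hTdef
  set G : ZMod M × ℕ → ZMod M := fun x => f (x.1 + ((x.2 * (M / p) : ℕ) : ZMod M)) with hGdef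
  have hGmem : ∀ x ∈ T, G x ∈ S := by
    intro x hx
    obtain ⟨hx1, hx2⟩ := Finset.mem_product.mp hx
    exact (hfiber x.1 hx1 x.2 (Finset.mem_range.mp hx2)).1
  have hGval : ∀ x ∈ T, φ (G x) = φ x.1 + U x.2 := by
    intro x hx
    obtain ⟨hx1, hx2⟩ := Finset.mem_product.mp hx
    exact (hfiber x.1 hx1 x.2 (Finset.mem_range.mp hx2)).2
  have hAmem : ∀ x ∈ T, x.1 ∈ A := fun x hx =>
    (Finset.mem_filter.mp (Finset.mem_product.mp hx).1).1
  have hfib_le : ∀ α, (T.filter fun x => G x = α).card ≤ p := by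
    intro α
    have : (T.filter fun x => G x = α).card ≤ (Finset.range p).card := by
      apply Finset.card_le_card_of_injOn (fun x => x.2)
      · intro x hx
        exact (Finset.mem_product.mp (Finset.mem_filter.mp hx).1).2
      · intro x hx y hy he
        obtain ⟨hxT, hxG⟩ := Finset.mem_filter.mp hx
        obtain ⟨hyT, hyG⟩ := Finset.mem_filter.mp hy
        have he' : x.2 = y.2 := he
        have hxG' : f (x.1 + ((x.2 * (M / p) : ℕ) : ZMod M)) = α := hxG
        have hyG' : f (y.1 + ((x.2 * (M / p) : ℕ) : ZMod M)) = α := by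
          rw [he']; exact hyG
        exact Prod.ext (keyInj M A B h f g hfA hgB hsum _ x.1 y.1 (hAmem x hxT)
          (hAmem y hyT) (hxG'.trans hyG'.symm)) he'
    rwa [Finset.card_range] at this
  have hsum_fib : ∑ α ∈ S, (T.filter fun x => G x = α).card = S.card * p := by
    rw [← Finset.card_eq_sum_card_fiberwise hGmem, hTdef, Finset.card_product,
      Finset.card_range]
  have hfib_eq : ∀ α ∈ S, (T.filter fun x => G x = α).card = p := by
    intro α hα
    by_contra hne
    have hlt : (T.filter fun x => G x = α).card < p := lt_of_le_of_ne (hfib_le α) hne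
    have : ∑ β ∈ S, (T.filter fun x => G x = β).card < ∑ _β ∈ S, p :=
      Finset.sum_lt_sum (fun i _ => hfib_le i) ⟨α, hα, hlt⟩
    rw [hsum_fib, Finset.sum_const, smul_eq_mul] at this
    exact lt_irrefl _ this
  -- class count
  have hclass : ∀ δ : ZMod (p ^ n), ψ δ = ψ (φ a0) →
      (S.filter fun α => φ α = δ).card * p = S.card := by
    intro δ hδ
    set Tδ : Finset (ZMod M × ℕ) := T.filter fun x => φ (G x) = δ with hTδdef
    have h1 : Tδ.card = S.card := by
      apply Finset.card_bij (fun x _ => x.1)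
      · intro x hx
        exact (Finset.mem_product.mp (Finset.mem_filter.mp hx).1).1
      · intro x hx y hy hxy
        obtain ⟨hxT, hxδ⟩ := Finset.mem_filter.mp hx
        obtain ⟨hyT, hyδ⟩ := Finset.mem_filter.mp hy
        have hUeq : U x.2 = U y.2 := by
          have ex := hGval x hxT
          have ey := hGval y hyT
          rw [hxδ] at ex; rw [hyδ] at ey
          have h10 : φ x.1 + U x.2 = φ x.1 + U y.2 := by rw [← ex, hxy, ← ey]
          exact add_left_cancel h10
        have hx2 := Finset.mem_range.mp (Finset.mem_product.mp hxT).2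
        have hy2 := Finset.mem_range.mp (Finset.mem_product.mp hyT).2
        exact Prod.ext hxy (hUinj _ _ hx2 hy2 hUeq)
      · intro a haS
        have hτ : ψ (δ - φ a) = 0 := by
          rw [map_sub, hδ, (Finset.mem_filter.mp haS).2, sub_self]
        obtain ⟨k, hk, hUk⟩ := hkexists _ hτ
        have hmemT : (a, k) ∈ T :=
          Finset.mem_product.mpr ⟨haS, Finset.mem_range.mpr hk⟩
        refine ⟨(a, k), Finset.mem_filter.mpr ⟨hmemT, ?_⟩, rfl⟩
        rw [hGval (a, k) hmemT]
        simp only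
        rw [hUk, add_sub_cancel]
    have h2 : Tδ.card = (S.filter fun α => φ α = δ).card * p := by
      have hmem2 : ∀ x ∈ Tδ, G x ∈ S.filter fun α => φ α = δ := by
        intro x hx
        obtain ⟨hxT, hxδ⟩ := Finset.mem_filter.mp hx
        exact Finset.mem_filter.mpr ⟨hGmem x hxT, hxδ⟩
      rw [Finset.card_eq_sum_card_fiberwise hmem2]
      have heach : ∀ α ∈ S.filter (fun α => φ α = δ),
          (Tδ.filter fun x => G x = α).card = p := by
        intro α hα
        obtain ⟨hαS, hαδ⟩ := Finset.mem_filter.mp hα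
        have hfilt : Tδ.filter (fun x => G x = α) = T.filter fun x => G x = α := by
          ext x
          simp only [hTδdef, Finset.mem_filter]
          constructor
          · rintro ⟨⟨hxT, -⟩, hxG⟩
            exact ⟨hxT, hxG⟩
          · rintro ⟨hxT, hxG⟩
            exact ⟨⟨hxT, by rw [hxG, hαδ]⟩, hxG⟩
        rw [hfilt, hfib_eq α hαS]
      rw [Finset.sum_congr rfl heach, Finset.sum_const, smul_eq_mul, mul_comm]
    rw [← h2, h1]
  -- conclude
  have key0 := hclass (φ a0) rfl
  have keyν := hclass (φ a0 + U ν) (by rw [map_add, hψU, add_zero])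
  have e0 : (A.filter fun y => (p ^ n : ℕ) ∣ ((y - a0 : ZMod M)).val)
      = S.filter fun α => φ α = φ a0 := by
    ext y
    constructor
    · intro hy
      obtain ⟨hyA, hyd⟩ := Finset.mem_filter.mp hy
      have h11 : φ y = φ a0 := by
        have h12 := (hφ0 _).mpr hyd
        rwa [map_sub, sub_eq_zero] at h12
      exact Finset.mem_filter.mpr ⟨Finset.mem_filter.mpr ⟨hyA, by rw [h11]⟩, h11⟩
    · intro hy
      obtain ⟨hyS, hyφ⟩ := Finset.mem_filter.mp hy
      obtain ⟨hyA, -⟩ := Finset.mem_filter.mp hyS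
      refine Finset.mem_filter.mpr ⟨hyA, (hφ0 _).mp ?_⟩
      rw [map_sub, hyφ, sub_self]
  have eν : (A.filter fun y =>
        (p ^ n : ℕ) ∣ ((y - (a0 + ((ν * (M / p) : ℕ) : ZMod M)) : ZMod M)).val)
      = S.filter fun α => φ α = φ a0 + U ν := by
    have hφD : φ ((ν * (M / p) : ℕ) : ZMod M) = U ν := by
      rw [map_natCast, hUdef]
    ext y
    constructor
    · intro hy
      obtain ⟨hyA, hyd⟩ := Finset.mem_filter.mp hy
      have h6 : φ (y - (a0 + ((ν * (M / p) : ℕ) : ZMod M))) = 0 := (hφ0 _).mpr hyd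
      rw [map_sub, sub_eq_zero, map_add, hφD] at h6
      refine Finset.mem_filter.mpr ⟨Finset.mem_filter.mpr ⟨hyA, ?_⟩, h6⟩
      rw [h6, map_add, hψU, add_zero]
    · intro hy
      obtain ⟨hyS, hyφ⟩ := Finset.mem_filter.mp hy
      obtain ⟨hyA, -⟩ := Finset.mem_filter.mp hyS
      refine Finset.mem_filter.mpr ⟨hyA, (hφ0 _).mp ?_⟩
      rw [map_sub, map_add, hφD, hyφ, sub_self]
  rw [e0, eν]
  have := key0.trans keyν.symm
  exact Nat.eq_of_mul_eq_mul_right hp0 this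
end

section
/- Let Y ⊆ ℤ_M be a finite set and p^α | M with α ≥ 1. Then the cyclotomic polynomial Φ_{p^α}(X) divides the mask polynomial Y(X) = Σ_{y ∈ Y} X^y modulo X^M − 1 if and only if for every y ∈ ℤ_M, |Y ∩ Π(y, p^α)| = (1/p)·|Y ∩ Π(y, p^{α−1})|, where Π(y, p^β) = {z ∈ ℤ_M : p^β | z − y}. -/
/-!
Since `Φ_q ∣ X ^ q - 1` for `q = p ^ α`, reducing exponents modulo `q` does not affect
divisibility by `Φ_q`, so the mask polynomial may be replaced by `∑_{j < q} c_j X ^ j`, where `c_j`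
counts the `z ∈ Y` with `z ≡ j (mod q)`. As `Φ_q = ∑_{k < p} X ^ (k p ^ (α - 1))` is monic of degree
`q - p ^ (α - 1)`, a polynomial of degree `< q` is divisible by it exactly when its coefficients
are `p ^ (α - 1)`-periodic. Finally, `c` is periodic if and only if each of the `p` classes
modulo `q` inside a class modulo `p ^ (α - 1)` carries a `1 / p` share of that class.
-/

open Polynomial Finset

theorem natDegree_sum_lt_of_forall_lt {R ι : Type*} [Semiring R] (s : Finset ι) (f : ι → R[X])
    {n : ℕ} (hn : 0 < n) (hf : ∀ i ∈ s, (f i).natDegree < n) :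
    (∑ i ∈ s, f i).natDegree < n :=
  (natDegree_sum_le_of_forall_le s f fun i hi => Nat.le_pred_of_lt (hf i hi)).trans_lt
    (Nat.pred_lt hn.ne')

theorem coeff_geom_sum_X_pow_mul {R : Type*} [Semiring R] {d : ℕ} {Q : R[X]}
    (hQ : Q.natDegree < d) (p n : ℕ) :
    ((∑ k ∈ range p, (X ^ d : R[X]) ^ k) * Q).coeff n =
      if n < d * p then Q.coeff (n % d) else 0 := by
  induction p generalizing n with
  | zero => simp
  | succ p ih =>
    rw [geom_sum_succ, add_mul, one_mul, mul_assoc, coeff_add, coeff_X_pow_mul', ih]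
    by_cases hn : n < d
    · simp [not_le.mpr hn, Nat.mod_eq_of_lt hn, show n < d * (p + 1) by rw [mul_add_one]; omega]
    · rw [coeff_eq_zero_of_natDegree_lt (n := n) (by omega), ← Nat.mod_eq_sub_mod (by omega)]
      simp [not_lt.mp hn, mul_add_one, Nat.sub_lt_iff_lt_add (not_lt.mp hn), add_comm]

theorem cyclotomic_prime_pow_dvd_iff {R : Type*} [CommRing R] [Nontrivial R] {p n : ℕ}
    (hp : p.Prime) {P : R[X]} (hP : P.natDegree < p ^ (n + 1)) :
    cyclotomic (p ^ (n + 1)) R ∣ P ↔ ∀ m < p ^ (n + 1), P.coeff m = P.coeff (m % p ^ n) := by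
  have hd : 0 < p ^ n := pow_pos hp.pos n
  have hq : p ^ (n + 1) = p ^ n * p := pow_succ p n
  have hΦ := cyclotomic.monic (p ^ (n + 1)) R
  constructor
  · rintro ⟨Q, rfl⟩ m hm
    have hQ : Q.natDegree < p ^ n := by
      have hdeg : p ^ n * p = p ^ n * (p - 1) + p ^ n := by
        rw [← mul_add_one, Nat.sub_add_cancel hp.one_lt.le]
      rw [← mul_divByMonic_cancel_left Q hΦ, natDegree_divByMonic _ hΦ, natDegree_cyclotomic,
        Nat.totient_prime_pow_succ hp]
      omega
    rw [cyclotomic_prime_pow_eq_geom_sum hp, coeff_geom_sum_X_pow_mul hQ,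
      coeff_geom_sum_X_pow_mul hQ, Nat.mod_mod, ← hq, if_pos hm,
      if_pos ((Nat.mod_lt m hd).trans (pow_lt_pow_right₀ hp.one_lt n.lt_succ_self))]
  · intro h
    set Q := ∑ i ∈ range (p ^ n), C (P.coeff i) * X ^ i
    have hQc : ∀ i < p ^ n, Q.coeff i = P.coeff i := fun i hi => by simp [Q, hi]
    have hQ : Q.natDegree < p ^ n := natDegree_sum_lt_of_forall_lt _ _ hd fun i hi =>
      (natDegree_C_mul_X_pow_le _ _).trans_lt (mem_range.mp hi)
    refine ⟨Q, ext fun m => ?_⟩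
    rw [cyclotomic_prime_pow_eq_geom_sum hp, coeff_geom_sum_X_pow_mul hQ, ← hq]
    split_ifs with hm
    · rw [hQc _ (Nat.mod_lt m hd), h m hm]
    · exact coeff_eq_zero_of_natDegree_lt (by omega)

theorem dvd_sum_X_pow_iff_dvd_sum_X_pow_mod {R ι : Type*} [CommRing R] {D : R[X]} {q : ℕ}
    (hD : D ∣ X ^ q - 1) (s : Finset ι) (f : ι → ℕ) :
    D ∣ ∑ i ∈ s, X ^ f i ↔ D ∣ ∑ i ∈ s, X ^ (f i % q) := by
  refine dvd_iff_dvd_of_dvd_sub ?_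
  rw [← sum_sub_distrib]
  refine dvd_sum fun i _ => ?_
  have h : (X : R[X]) ^ f i - X ^ (f i % q) = ((X ^ q) ^ (f i / q) - 1) * X ^ (f i % q) := by
    rw [sub_one_mul, ← pow_mul, ← pow_add, Nat.div_add_mod]
  rw [h]
  exact (hD.trans (sub_one_dvd_pow_sub_one _ _)).mul_right _

theorem coeff_sum_X_pow {R ι : Type*} [Semiring R] (s : Finset ι) (f : ι → ℕ) (n : ℕ) :
    (∑ i ∈ s, (X : R[X]) ^ f i).coeff n = #{i ∈ s | f i = n} := by
  simp [finsetSum_coeff, coeff_X_pow, eq_comm]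

theorem card_filter_mod_eq_sum {ι : Type*} (s : Finset ι) (f : ι → ℕ) {d p r : ℕ}
    (hp : 0 < p) (hr : r < d) :
    #{i ∈ s | f i % d = r} = ∑ k ∈ range p, #{i ∈ s | f i % (d * p) = r + d * k} := by
  have hd : 0 < d := by omega
  rw [card_eq_sum_card_fiberwise (f := fun i => f i % (d * p) / d) (t := range p)]
  · refine sum_congr rfl fun k _ => ?_
    rw [filter_filter]
    congr 1
    refine filter_congr fun i _ => ?_
    rw [← Nat.mod_mul_right_mod (f i) d p, and_comm, Nat.div_mod_unique hd]
    simp [hr, eq_comm]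
  · intro i _
    simp only [coe_range, Set.mem_Iio]
    exact Nat.div_lt_of_lt_mul (Nat.mod_lt _ (Nat.mul_pos hd hp))

theorem forall_eq_mod_iff_forall_mul_eq_sum (c : ℕ → ℕ) {d p : ℕ} (hp : 0 < p) :
    (∀ m < d * p, c m = c (m % d)) ↔
      ∀ m < d * p, p * c m = ∑ k ∈ range p, c (m % d + d * k) := by
  have hlt : ∀ m < d * p, ∀ k < p, m % d + d * k < d * p := fun m hm k hk =>
    have hd : 0 < d := Nat.pos_of_ne_zero (by rintro rfl; simp at hm)
    calc m % d + d * k < d * (k + 1) := by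
          rw [mul_add_one, add_comm]
          exact Nat.add_lt_add_left (Nat.mod_lt m hd) _
      _ ≤ d * p := Nat.mul_le_mul_left d hk
  constructor
  · intro h m hm
    rw [sum_const_nat fun k hk => ?_, card_range, h m hm]
    rw [h _ (hlt m hm k (mem_range.mp hk)), Nat.add_mul_mod_self_left, Nat.mod_mod]
  · intro h m hm
    refine Nat.eq_of_mul_eq_mul_left hp ?_
    rw [h m hm, h (m % d) (by simpa using hlt m hm 0 hp), Nat.mod_mod]

theorem dvd_val_sub_iff_val_mod_eq {M m : ℕ} [NeZero M] (hm : m ∣ M) (z y : ZMod M) :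
    m ∣ (z - y).val ↔ z.val % m = y.val % m := by
  rw [← ZMod.natCast_eq_zero_iff, ← ZMod.natCast_eq_natCast_iff']
  simp only [ZMod.natCast_val, ← ZMod.castHom_apply (h := hm), map_sub, sub_eq_zero]

theorem forall_val_mod_iff {M q : ℕ} [NeZero M] (hq : q ∣ M) (P : ℕ → Prop) :
    (∀ y : ZMod M, P (y.val % q)) ↔ ∀ m < q, P m := by
  have hq0 : 0 < q := Nat.pos_of_dvd_of_pos hq (NeZero.pos M)
  refine ⟨fun h m hm => ?_, fun h y => h _ (Nat.mod_lt _ hq0)⟩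
  have hmM : m < M := hm.trans_le (Nat.le_of_dvd (NeZero.pos M) hq)
  simpa [ZMod.val_natCast_of_lt hmM, Nat.mod_eq_of_lt hm] using h m

theorem stmt12 (M p α : ℕ) [NeZero M] (hp : p.Prime) (hα : 1 ≤ α) (hdvd : p ^ α ∣ M)
    (Y : Finset (ZMod M)) :
    (Polynomial.cyclotomic (p ^ α) ℤ ∣ ∑ y ∈ Y, (Polynomial.X : Polynomial ℤ) ^ y.val)
      ↔ ∀ y : ZMod M,
          p * (Y.filter fun z => (p ^ α : ℕ) ∣ ((z - y : ZMod M)).val).card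
            = (Y.filter fun z => (p ^ (α - 1) : ℕ) ∣ ((z - y : ZMod M)).val).card := by
  obtain ⟨n, rfl⟩ : ∃ n, α = n + 1 := ⟨α - 1, by omega⟩
  rw [Nat.add_sub_cancel]
  have hdvd' : p ^ n ∣ M := (pow_dvd_pow p n.le_succ).trans hdvd
  set c : ℕ → ℕ := fun m => #{z ∈ Y | z.val % p ^ (n + 1) = m}
  have hdeg : (∑ y ∈ Y, (X : ℤ[X]) ^ (y.val % p ^ (n + 1))).natDegree < p ^ (n + 1) :=
    natDegree_sum_lt_of_forall_lt _ _ (pow_pos hp.pos _) fun y _ =>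
      (natDegree_X_pow_le _).trans_lt (Nat.mod_lt _ (pow_pos hp.pos _))
  have hclass : ∀ y : ZMod M, #{z ∈ Y | z.val % p ^ n = y.val % p ^ n} =
      ∑ k ∈ range p, c (y.val % p ^ (n + 1) % p ^ n + p ^ n * k) := fun y => by
    rw [Nat.mod_mod_of_dvd _ (pow_dvd_pow p n.le_succ)]
    simp only [c, pow_succ]
    exact card_filter_mod_eq_sum Y ZMod.val hp.pos (Nat.mod_lt _ (pow_pos hp.pos n))
  rw [dvd_sum_X_pow_iff_dvd_sum_X_pow_mod (cyclotomic.dvd_X_pow_sub_one _ ℤ),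
    cyclotomic_prime_pow_dvd_iff hp hdeg]
  simp only [coeff_sum_X_pow, Nat.cast_inj, dvd_val_sub_iff_val_mod_eq hdvd,
    dvd_val_sub_iff_val_mod_eq hdvd', hclass]
  rw [forall_val_mod_iff hdvd (fun m => p * c m = ∑ k ∈ range p, c (m % p ^ n + p ^ n * k)),
    pow_succ]
  exact forall_eq_mod_iff_forall_mul_eq_sum c hp.pos
end

section
/- Let A ⊕ B = ℤ_M be a tiling with 0 ∈ B, p prime with p^n ‖ M. Suppose that for every a ∈ A, the fiber a * F_p splits with parity (B, A). Then Φ_{p^n}(X) divides A(X) mod X^M − 1 (equivalently, for every a ∈ A and every ν ∈ {0,…,p−1}, |A ∩ Π(a + νM/p, p^n)| = (1/p)|A ∩ Π(a, p^{n−1})|). -/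
theorem stmt13 (M p n : ℕ) [NeZero M] (hp : p.Prime) (hn : 1 ≤ n)
    (hpn : p ^ n ∣ M) (hpn' : ¬ p ^ (n + 1) ∣ M)
    (A B : Finset (ZMod M)) (h : IsTiling M A B) (h0B : (0 : ZMod M) ∈ B)
    (hall : ∀ a ∈ A, SplitsParity M p n B A (fiberSet M p a)) :
    Polynomial.cyclotomic (p ^ n) ℤ ∣ ∑ a ∈ A, (Polynomial.X : Polynomial ℤ) ^ a.val := by
  classical
  have hppos : 0 < p := hp.pos
  set N := p ^ n with hN
  have hNpos : 0 < N := pow_pos hppos n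
  haveI : NeZero N := ⟨hNpos.ne'⟩
  set π : ZMod M →+* ZMod N := ZMod.castHom hpn (ZMod N) with hπdef
  have hπval : ∀ x : ZMod M, (π x).val = x.val % N := by
    intro x
    have hx : π x = ((x.val : ℕ) : ZMod N) := by
      rw [hπdef, ZMod.castHom_apply, ← ZMod.natCast_val]
    rw [hx, ZMod.val_natCast]
  set m := M / p with hm
  have hpM : p ∣ M := (dvd_pow_self p (Nat.one_le_iff_ne_zero.mp hn)).trans hpn
  have hmM : p * m = M := Nat.mul_div_cancel' hpM
  set c : ZMod N → ℕ := fun r => (A.filter fun a => π a = r).card with hc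
  -- Step A: the shift map
  have hA : ∀ a : ZMod M, ∃ a' b' : ZMod M, a ∈ A →
      a' ∈ A ∧ b' ∈ B ∧ a' + b' = a + (m : ZMod M) ∧ π a' = π a + ((m : ℕ) : ZMod N) := by
    intro a
    by_cases ha : a ∈ A
    · obtain ⟨⟨a', b'⟩, ⟨ha', hb', hsum⟩, -⟩ := h (a + (m : ZMod M))
      refine ⟨a', b', fun _ => ⟨ha', hb', hsum, ?_⟩⟩
      -- b' is ≡ 0 mod p^n
      have hmem1 : b' ∈ SigmaSet M B A (fiberSet M p a) := by
        refine ⟨hb', a', ha', ?_⟩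
        refine ⟨1, hp.one_lt, ?_⟩
        rw [add_comm b' a', hsum, one_mul]
      have hmem0 : (0 : ZMod M) ∈ SigmaSet M B A (fiberSet M p a) := by
        refine ⟨h0B, a, ha, ?_⟩
        refine ⟨0, hppos, ?_⟩
        simp
      have hdvd : (p ^ n : ℕ) ∣ ((b' - 0 : ZMod M)).val := (hall a ha).1 b' hmem1 0 hmem0
      rw [sub_zero] at hdvd
      have hπb' : π b' = 0 := by
        have : π b' = ((b'.val : ℕ) : ZMod N) := by
          rw [hπdef, ZMod.castHom_apply, ← ZMod.natCast_val]
        rw [this, ZMod.natCast_eq_zero_iff]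
        exact hdvd
      have := congrArg π hsum
      rw [map_add, map_add, hπb', add_zero] at this
      rw [this]
      congr 1
      rw [hπdef, map_natCast]
    · exact ⟨0, 0, fun hmem => absurd hmem ha⟩
  choose f g hfg using hA
  -- injectivity of f on A
  have hinj : ∀ a₁ ∈ A, ∀ a₂ ∈ A, f a₁ = f a₂ → a₁ = a₂ := by
    intro a₁ h₁ a₂ h₂ hfe
    obtain ⟨hf₁, hg₁, hs₁, -⟩ := hfg a₁ h₁
    obtain ⟨hf₂, hg₂, hs₂, -⟩ := hfg a₂ h₂
    have key : a₁ + g a₂ = a₂ + g a₁ := by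
      have : a₁ + (m : ZMod M) + g a₂ = a₂ + (m : ZMod M) + g a₁ := by
        rw [← hs₁, ← hs₂, hfe]; ring
      have := congrArg (fun x => x - (m : ZMod M)) this
      simpa [add_sub_cancel_right] using by linear_combination this
    obtain ⟨ab, -, huniq⟩ := h (a₁ + g a₂)
    have e1 := huniq (a₁, g a₂) ⟨h₁, hg₂, rfl⟩
    have e2 := huniq (a₂, g a₁) ⟨h₂, hg₁, key.symm⟩
    have := e1.trans e2.symm
    exact congrArg Prod.fst this
  -- Step B : c r ≤ c (r + m)
  have hstep : ∀ r : ZMod N, c r ≤ c (r + ((m : ℕ) : ZMod N)) := by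
    intro r
    apply Finset.card_le_card_of_injOn f
    · intro a ha
      rw [Finset.mem_coe, Finset.mem_filter] at ha ⊢
      obtain ⟨hfa, -, -, hπa⟩ := hfg a ha.1
      exact ⟨hfa, by rw [hπa, ha.2]⟩
    · intro a₁ h₁ a₂ h₂ hfe
      exact hinj a₁ (Finset.mem_filter.mp h₁).1 a₂ (Finset.mem_filter.mp h₂).1 hfe
  -- cycling: equality
  have hchain : ∀ (r : ZMod N) (k : ℕ), c r ≤ c (r + ((k * m : ℕ) : ZMod N)) := by
    intro r k
    induction k with
    | zero => simp
    | succ k ih =>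
      calc c r ≤ c (r + ((k * m : ℕ) : ZMod N)) := ih
        _ ≤ c (r + ((k * m : ℕ) : ZMod N) + ((m : ℕ) : ZMod N)) := hstep _
        _ = c (r + (((k + 1) * m : ℕ) : ZMod N)) := by push_cast; ring_nf
  have hpm0 : ((p * m : ℕ) : ZMod N) = 0 := by
    rw [hmM, ZMod.natCast_eq_zero_iff]; exact hpn
  have hkey : ∀ r : ZMod N, c (r + ((m : ℕ) : ZMod N)) = c r := by
    intro r
    refine le_antisymm ?_ (hstep r)
    have h1 : c (r + ((m : ℕ) : ZMod N)) ≤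
        c (r + ((m : ℕ) : ZMod N) + (((p - 1) * m : ℕ) : ZMod N)) := hchain _ _
    have h2 : r + ((m : ℕ) : ZMod N) + (((p - 1) * m : ℕ) : ZMod N) = r := by
      have : (m : ZMod N) + (((p - 1) * m : ℕ) : ZMod N) = ((p * m : ℕ) : ZMod N) := by
        push_cast
        have : ((p : ℕ) : ZMod N) = (((p - 1 : ℕ) : ZMod N) + 1) := by
          have : p = (p - 1) + 1 := (Nat.succ_pred_eq_of_pos hppos).symm
          rw [this]; push_cast; ring_nf
        rw [this]; ring
      rw [add_assoc, this, hpm0, add_zero]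
    rw [h2] at h1
    exact h1
  have hkeyk : ∀ (r : ZMod N) (k : ℕ), c (r + ((k * m : ℕ) : ZMod N)) = c r := by
    intro r k
    induction k with
    | zero => simp
    | succ k ih =>
      have : r + (((k + 1) * m : ℕ) : ZMod N) = (r + ((k * m : ℕ) : ZMod N)) + ((m : ℕ) : ZMod N) := by
        push_cast; ring
      rw [this, hkey, ih]
  -- Step D: t * p^(n-1) is a multiple of m mod N
  set Q := p ^ (n - 1) with hQ
  have hNQ : N = Q * p := by
    rw [hN, hQ, ← pow_succ]
    congr 1
    omega
  set u := M / N with hu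
  have huM : N * u = M := Nat.mul_div_cancel' hpn
  have hpu : ¬ p ∣ u := by
    intro hdvd
    apply hpn'
    obtain ⟨v, hv⟩ := hdvd
    refine ⟨v, ?_⟩
    rw [← huM, hv, hN, pow_succ]; ring
  have hmQu : m = Q * u := by
    have : p * m = p * (Q * u) := by
      rw [hmM, ← huM, hN]
      have : p ^ n = p * Q := by
        rw [hQ, ← pow_succ']
        congr 1
        omega
      rw [this]; ring
    exact Nat.eq_of_mul_eq_mul_left hppos this
  haveI : Fact p.Prime := ⟨hp⟩
  have hDt : ∀ t : ℕ, ∃ k : ℕ, ((k * m : ℕ) : ZMod N) = ((t * Q : ℕ) : ZMod N) := by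
    intro t
    have hu0 : (u : ZMod p) ≠ 0 := by
      rw [Ne, ZMod.natCast_eq_zero_iff]; exact hpu
    refine ⟨((t : ZMod p) * (u : ZMod p)⁻¹).val, ?_⟩
    have hk : ((((t : ZMod p) * (u : ZMod p)⁻¹).val * u : ℕ) : ZMod p) = (t : ZMod p) := by
      push_cast
      rw [ZMod.natCast_val, ZMod.cast_id]
      field_simp
    rw [ZMod.natCast_eq_natCast_iff] at hk ⊢
    have := hk.mul_right' (c := Q)
    rw [hmQu]
    calc ((t : ZMod p) * (u : ZMod p)⁻¹).val * (Q * u)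
        = ((t : ZMod p) * (u : ZMod p)⁻¹).val * u * Q := by ring
      _ ≡ t * Q [MOD N] := by rw [hNQ, Nat.mul_comm Q p]; exact this
  have hkeyQ : ∀ (r : ZMod N) (t : ℕ), c (r + ((t * Q : ℕ) : ZMod N)) = c r := by
    intro r t
    obtain ⟨k, hk⟩ := hDt t
    rw [← hk, hkeyk]
  -- Step E: polynomial assembly
  set S1 : Polynomial ℤ := ∑ a ∈ A, Polynomial.X ^ (a.val % N) with hS1
  have hdiff : Polynomial.cyclotomic N ℤ ∣ (∑ a ∈ A, (Polynomial.X : Polynomial ℤ) ^ a.val) - S1 := by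
    refine dvd_trans (Polynomial.cyclotomic.dvd_X_pow_sub_one N ℤ) ?_
    rw [hS1, ← Finset.sum_sub_distrib]
    refine Finset.dvd_sum ?_
    intro a ha
    have : (Polynomial.X : Polynomial ℤ) ^ a.val - Polynomial.X ^ (a.val % N)
        = Polynomial.X ^ (a.val % N) * ((Polynomial.X ^ N) ^ (a.val / N) - 1) := by
      nth_rewrite 1 [(Nat.mod_add_div a.val N).symm]
      rw [pow_add, pow_mul]
      ring
    rw [this]
    exact Dvd.dvd.mul_left (by simpa using sub_dvd_pow_sub_pow ((Polynomial.X : Polynomial ℤ) ^ N) 1 (a.val / N)) _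
  have hS1eq : S1 = ∑ r : ZMod N, (c r) • (Polynomial.X : Polynomial ℤ) ^ r.val := by
    have hrw : S1 = ∑ a ∈ A, (fun r : ZMod N => (Polynomial.X : Polynomial ℤ) ^ r.val) (π a) := by
      rw [hS1]
      refine Finset.sum_congr rfl fun a _ => ?_
      simp only [hπval]
    rw [hrw, ← Finset.sum_fiberwise' A (fun a => π a)
        (fun r : ZMod N => (Polynomial.X : Polynomial ℤ) ^ r.val)]
    refine Finset.sum_congr rfl fun r _ => ?_
    rw [Finset.sum_const, hc]
  have hcyc : (Polynomial.cyclotomic N ℤ)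
      = ∑ i ∈ Finset.range p, ((Polynomial.X : Polynomial ℤ) ^ Q) ^ i := by
    have h1 : N = p ^ ((n - 1) + 1) := by rw [hN]; congr 1; omega
    rw [h1, Polynomial.cyclotomic_prime_pow_eq_geom_sum hp, hQ]
  have hS1dvd : Polynomial.cyclotomic N ℤ ∣ S1 := by
    rw [hS1eq]
    have hQpos : 0 < Q := pow_pos hppos _
    have e1 : ∑ r : ZMod N, (c r) • (Polynomial.X : Polynomial ℤ) ^ r.val
        = ∑ st ∈ Finset.range Q ×ˢ Finset.range p,
            (c (((st.1 + st.2 * Q : ℕ) : ZMod N))) • (Polynomial.X : Polynomial ℤ) ^ (st.1 + st.2 * Q) := by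
      refine Finset.sum_nbij' (fun r => (r.val % Q, r.val / Q))
        (fun st => ((st.1 + st.2 * Q : ℕ) : ZMod N)) ?_ ?_ ?_ ?_ ?_
      · intro r _
        have hrv : r.val < N := ZMod.val_lt r
        have h1 : r.val % Q < Q := Nat.mod_lt _ hQpos
        have h2 : r.val / Q < p := Nat.div_lt_of_lt_mul (by rw [← hNQ]; exact hrv)
        exact Finset.mem_product.mpr ⟨Finset.mem_range.mpr h1, Finset.mem_range.mpr h2⟩
      · intro st _; exact Finset.mem_univ _
      · intro r _
        dsimp only
        have hv : r.val % Q + r.val / Q * Q = r.val := by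
          rw [Nat.mul_comm]
          exact Nat.mod_add_div r.val Q
        rw [hv, ZMod.natCast_val, ZMod.cast_id]
      · intro st hst
        obtain ⟨s1, t1⟩ := st
        rw [Finset.mem_product, Finset.mem_range, Finset.mem_range] at hst
        dsimp only
        have hlt : s1 + t1 * Q < N := by
          rw [hNQ]
          calc s1 + t1 * Q < Q + t1 * Q := by omega
            _ = (1 + t1) * Q := by ring
            _ ≤ p * Q := Nat.mul_le_mul_right Q (by omega)
            _ = Q * p := Nat.mul_comm p Q
        rw [ZMod.val_natCast_of_lt hlt]
        have h1 : (s1 + t1 * Q) % Q = s1 := by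
          rw [Nat.add_mul_mod_self_right, Nat.mod_eq_of_lt hst.1]
        have h2 : (s1 + t1 * Q) / Q = t1 := by
          rw [Nat.add_mul_div_right _ _ hQpos, Nat.div_eq_of_lt hst.1, Nat.zero_add]
        rw [h1, h2]
      · intro r _
        dsimp only
        have hv : r.val % Q + r.val / Q * Q = r.val := by
          rw [Nat.mul_comm]
          exact Nat.mod_add_div r.val Q
        rw [hv, ZMod.natCast_val, ZMod.cast_id]
    rw [e1, Finset.sum_product]
    have e2 : ∀ s ∈ Finset.range Q, ∑ t ∈ Finset.range p,
        (c (((s + t * Q : ℕ) : ZMod N))) • (Polynomial.X : Polynomial ℤ) ^ (s + t * Q)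
        = ((c ((s : ZMod N)) : Polynomial ℤ) * Polynomial.X ^ s) * (Polynomial.cyclotomic N ℤ) := by
      intro s _
      rw [hcyc, Finset.mul_sum]
      refine Finset.sum_congr rfl fun t _ => ?_
      have hcast : (((s + t * Q : ℕ) : ZMod N)) = (s : ZMod N) + ((t * Q : ℕ) : ZMod N) := by
        push_cast; ring
      rw [hcast, hkeyQ, nsmul_eq_mul, pow_add, pow_mul]
      ring
    rw [Finset.sum_congr rfl e2, ← Finset.sum_mul]
    exact Dvd.intro_left _ rfl
  have : (∑ a ∈ A, (Polynomial.X : Polynomial ℤ) ^ a.val)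
      = ((∑ a ∈ A, (Polynomial.X : Polynomial ℤ) ^ a.val) - S1) + S1 := by ring
  rw [this]
  exact dvd_add hdiff hS1dvd
end

section
/- Let A ⊕ B = ℤ_M be a tiling, p a prime with p^n ‖ M. Assume M/p ∉ Div(A) (i.e., there are no distinct a, a' ∈ A with gcd(a − a', M) = M/p). If a fiber x * F_p splits with parity (B, A), witnessed by representations a_ν + b_ν = x + νM/p (ν = 0, …, p−1), then the elements b_0, …, b_{p−1} are pairwise distinct; in particular |Σ_B(x * F_p)| = p and |B ∩ Π(b_0, p^n)| ≥ p. -/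
/-!
If `b ν = b μ` for `μ < ν < p`, then `a ν - a μ = (ν - μ) · M/p`, and since `0 < ν - μ < p` is
prime to `p`, `gcd(a ν - a μ, M) = M/p`, contradicting `M/p ∉ Div(A)`. By uniqueness of
representations in the tiling, `Σ_B(x * F_p)` is exactly `{b ν}`, so it has `p` elements, and the
parity condition puts all of them in `Π(b 0, p^n)`.
-/

theorem IsTiling.right_eq_of_add_eq {M : ℕ} {A B : Finset (ZMod M)} (h : IsTiling M A B)
    {a a' b b' : ZMod M} (ha : a ∈ A) (ha' : a' ∈ A) (hb : b ∈ B) (hb' : b' ∈ B)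
    (heq : a + b = a' + b') : b = b' :=
  congrArg Prod.snd <| (h (a' + b')).unique (y₁ := (a, b)) (y₂ := (a', b')) ⟨ha, hb, heq⟩
    ⟨ha', hb', rfl⟩

theorem Nat.gcd_mul_div_eq_div_of_coprime {k p M : ℕ} (hpM : p ∣ M) (hk : k.Coprime p) :
    Nat.gcd (k * (M / p)) M = M / p := by
  calc Nat.gcd (k * (M / p)) M = Nat.gcd (k * (M / p)) (p * (M / p)) := by
        rw [Nat.mul_div_cancel' hpM]
    _ = M / p := by rw [Nat.gcd_mul_right, hk.gcd_eq_one, one_mul]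

theorem gcd_val_sub_fiber {M p μ ν : ℕ} [NeZero M] (hp : p.Prime) (hpM : p ∣ M)
    (hμν : μ < ν) (hν : ν < p) :
    Nat.gcd ((((ν * (M / p) : ℕ) : ZMod M) - ((μ * (M / p) : ℕ) : ZMod M)).val) M = M / p := by
  have hlt : (ν - μ) * (M / p) < M :=
    calc (ν - μ) * (M / p) < p * (M / p) :=
          Nat.mul_lt_mul_of_pos_right (by omega) (Nat.div_pos (Nat.le_of_dvd (NeZero.pos M) hpM)
            hp.pos)
      _ = M := Nat.mul_div_cancel' hpM
  rw [← Nat.cast_sub (Nat.mul_le_mul_right _ hμν.le), ← Nat.sub_mul, ZMod.val_natCast_of_lt hlt]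
  exact Nat.gcd_mul_div_eq_div_of_coprime hpM (Nat.coprime_of_lt_prime (by omega) (by omega) hp).symm

theorem injOn_of_notMem_divSet {M p : ℕ} [NeZero M] (hp : p.Prime) (hpM : p ∣ M)
    {A : Finset (ZMod M)} (hDiv : M / p ∉ DivSet M A) {x : ZMod M} {a b : ℕ → ZMod M}
    (ha : ∀ ν < p, a ν ∈ A) (hsum : ∀ ν < p, a ν + b ν = x + ((ν * (M / p) : ℕ) : ZMod M)) :
    Set.InjOn b (Set.Iio p) := by
  suffices h : ∀ μ ν, μ < ν → ν < p → b ν ≠ b μ by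
    intro μ hμ ν hν hb
    by_contra hne
    rcases lt_or_gt_of_ne hne with hlt | hlt
    · exact h μ ν hlt hν hb.symm
    · exact h ν μ hlt hμ hb
  intro μ ν hμν hν hb
  have hdiff : a ν - a μ = ((ν * (M / p) : ℕ) : ZMod M) - ((μ * (M / p) : ℕ) : ZMod M) := by
    linear_combination hsum ν hν - hsum μ (hμν.trans hν) - hb
  exact hDiv ⟨a ν, ha ν hν, a μ, ha μ (hμν.trans hν),
    by rw [hdiff, gcd_val_sub_fiber hp hpM hμν hν]⟩

theorem IsTiling.sigmaSet_fiberSet_eq_image {M p : ℕ} {A B : Finset (ZMod M)}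
    (h : IsTiling M A B) {x : ZMod M} {a b : ℕ → ZMod M}
    (ha : ∀ ν < p, a ν ∈ A) (hb : ∀ ν < p, b ν ∈ B)
    (hsum : ∀ ν < p, a ν + b ν = x + ((ν * (M / p) : ℕ) : ZMod M)) :
    SigmaSet M B A (fiberSet M p x) = ↑((Finset.range p).image b) := by
  ext y
  simp only [Finset.coe_image, Finset.coe_range, Set.mem_image, Set.mem_Iio]
  constructor
  · rintro ⟨hy, a', ha', ν, hν, hfiber⟩
    refine ⟨ν, hν, h.right_eq_of_add_eq (ha ν hν) ha' (hb ν hν) hy ?_⟩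
    rw [hsum ν hν, ← hfiber, add_comm]
  · rintro ⟨ν, hν, rfl⟩
    exact ⟨hb ν hν, a ν, ha ν hν, ν, hν, by rw [add_comm, hsum ν hν]⟩

theorem stmt14_general (M p n : ℕ) [NeZero M] (hp : p.Prime) (hn : 1 ≤ n)
    (hpn : p ^ n ∣ M)
    (A B : Finset (ZMod M)) (h : IsTiling M A B)
    (hDiv : M / p ∉ DivSet M A)
    (x : ZMod M) (hsplit : SplitsParity M p n B A (fiberSet M p x))
    (a b : ℕ → ZMod M)
    (hab : ∀ ν < p, a ν ∈ A ∧ b ν ∈ B ∧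
      a ν + b ν = x + ((ν * (M / p) : ℕ) : ZMod M)) :
    (∀ ν < p, ∀ μ < p, ν ≠ μ → b ν ≠ b μ) ∧
    (SigmaSet M B A (fiberSet M p x)).ncard = p ∧
    p ≤ (B.filter fun y => (p ^ n : ℕ) ∣ ((y - b 0 : ZMod M)).val).card := by
  have hpM : p ∣ M := (dvd_pow_self p (by omega)).trans hpn
  choose ha hb hsum using hab
  have hinj := injOn_of_notMem_divSet hp hpM hDiv ha hsum
  have hSigma := h.sigmaSet_fiberSet_eq_image ha hb hsum
  have hcard : ((Finset.range p).image b).card = p := by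
    rw [Finset.card_image_of_injOn (by rwa [Finset.coe_range]), Finset.card_range]
  refine ⟨fun ν hν μ hμ hne hbe => hne (hinj hν hμ hbe),
    by rw [hSigma, Set.ncard_coe_finset, hcard], ?_⟩
  have hb0 : b 0 ∈ SigmaSet M B A (fiberSet M p x) := by
    rw [hSigma]
    exact Finset.mem_image_of_mem b (Finset.mem_range.mpr hp.pos)
  calc p = ((Finset.range p).image b).card := hcard.symm
    _ ≤ _ := Finset.card_le_card fun y hy => by
      rw [← Finset.mem_coe, ← hSigma] at hy
      exact Finset.mem_filter.mpr ⟨hy.1, hsplit.1 y hy (b 0) hb0⟩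

theorem stmt14 (M p n : ℕ) [NeZero M] (hp : p.Prime) (hn : 1 ≤ n)
    (hpn : p ^ n ∣ M) (hpn' : ¬ p ^ (n + 1) ∣ M)
    (A B : Finset (ZMod M)) (h : IsTiling M A B)
    (hDiv : M / p ∉ DivSet M A)
    (x : ZMod M) (hsplit : SplitsParity M p n B A (fiberSet M p x))
    (a b : ℕ → ZMod M)
    (hab : ∀ ν < p, a ν ∈ A ∧ b ν ∈ B ∧
      a ν + b ν = x + ((ν * (M / p) : ℕ) : ZMod M)) :
    (∀ ν < p, ∀ μ < p, ν ≠ μ → b ν ≠ b μ) ∧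
    (SigmaSet M B A (fiberSet M p x)).ncard = p ∧
    p ≤ (B.filter fun y => (p ^ n : ℕ) ∣ ((y - b 0 : ZMod M)).val).card :=
  stmt14_general M p n hp hn hpn A B h hDiv x hsplit a b hab
end
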